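/- arXiv:2102.05175 — 6 statements merged into one kernel-verified Lean document; each statement's English description precedes it below -/
import Mathlib

section
/- (Young's concatenation lemma) Fix ε ∈ (0, 1/2). There exist μ₀ > 1 and θ₀ > 0 such that the following holds for all μ ≥ μ₀. Let C ∈ SL(2,ℝ) with ‖C‖ ≥ μ^m for some m > 0, let A_0, …, A_{n−1} be a μ-hyperbolic sequence (with some bound λ ≥ μ and exponent ε), and write A^n = A_{n−1}⋯A_0. If the angle ∠(s(C^{−1}), s(A^n)) = 2θ with 0 < θ ≤ θ₀, then ‖A^n · C‖ ≥ μ^{(m+n)(1−ε)} · θ. -/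
/-!
Put `B = A^n`, `w = s(B)` and `v = s(C⁻¹)`. Since `det B = 1`, `B` preserves the area form
`v ∧ w`, so `|v ∧ w| ≤ ‖Bv‖ ‖Bw‖ = ‖Bv‖ / ‖B‖`; for unit vectors `|v ∧ w| = sin 2θ ≥ θ`, hence
`‖Bv‖ ≥ ‖B‖ θ`. The matrix `BC` sends `C⁻¹v`, of length `‖C⁻¹‖⁻¹`, to `Bv`, so
`‖BC‖ ≥ ‖C⁻¹‖ ‖Bv‖`, and `‖C⁻¹‖ = ‖C‖` because the adjugate of a `2×2` matrix is its transpose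
conjugated by a rotation. Finally `‖C‖ ≥ μ^m ≥ μ^{m(1-ε)}` and `‖B‖ ≥ μ^{n(1-ε)}`.
-/


open Real
open scoped ENNReal

noncomputable section

/-- The operator norm of a `2×2` real matrix acting on Euclidean `ℝ²`. -/
def mnorm (A : Matrix (Fin 2) (Fin 2) ℝ) : ℝ :=
  ‖Matrix.toEuclideanCLM (𝕜 := ℝ) A‖

/-- Partial products of a sequence of matrices: `blockProd A i = A_{i-1} ⋯ A_1 A_0`. -/
def blockProd (A : ℕ → Matrix (Fin 2) (Fin 2) ℝ) : ℕ → Matrix (Fin 2) (Fin 2) ℝ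
  | 0 => 1
  | i + 1 => A i * blockProd A i

/-- The block `A_0, …, A_{n-1}` is `μ`-hyperbolic (with bound `λ` and exponent `ε`):
`‖A_i‖ ≤ λ` for all `i`, `‖A_{i-1}⋯A_0‖ ≥ μ^{i(1-ε)}` for `1 ≤ i ≤ n`, and the same
two bounds hold for the reversed sequence of inverses `A_{n-1}⁻¹, …, A_0⁻¹`. -/
def IsHypBlock (lam mu eps : ℝ) (n : ℕ) (A : ℕ → Matrix (Fin 2) (Fin 2) ℝ) : Prop :=
  (∀ i < n, mnorm (A i) ≤ lam) ∧
  (∀ i : ℕ, 1 ≤ i → i ≤ n → mu ^ ((i : ℝ) * (1 - eps)) ≤ mnorm (blockProd A i)) ∧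
  (∀ i < n, mnorm ((A i)⁻¹) ≤ lam) ∧
  (∀ i : ℕ, 1 ≤ i → i ≤ n →
    mu ^ ((i : ℝ) * (1 - eps)) ≤ mnorm (blockProd (fun j => (A (n - 1 - j))⁻¹) i))

/-- `v` spans the most contracted direction `s(A)` of `A`: it is a unit vector with
`‖A v‖ = ‖A‖⁻¹`. -/
def IsContractedDir (A : Matrix (Fin 2) (Fin 2) ℝ) (v : EuclideanSpace ℝ (Fin 2)) : Prop :=
  ‖v‖ = 1 ∧ ‖Matrix.toEuclideanCLM (𝕜 := ℝ) A v‖ = (mnorm A)⁻¹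

/-- The angle in `[0, π/2]` between the two directions (lines) in `ℝP¹ = ℝ/πℤ` spanned by
the unit vectors `v` and `w`: its sine is `|det [v w]|`. -/
def lineAngle (v w : EuclideanSpace ℝ (Fin 2)) : ℝ :=
  Real.arcsin |v 0 * w 1 - v 1 * w 0|

open Matrix

lemma toEuclideanCLM_fin_two_apply (A : Matrix (Fin 2) (Fin 2) ℝ) (x : EuclideanSpace ℝ (Fin 2))
    (i : Fin 2) : toEuclideanCLM (𝕜 := ℝ) A x i = A i 0 * x 0 + A i 1 * x 1 := by
  rw [ofLp_toEuclideanCLM]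
  simp [mulVec, dotProduct, Fin.sum_univ_two]

def wedge (v w : EuclideanSpace ℝ (Fin 2)) : ℝ := v 0 * w 1 - v 1 * w 0

lemma wedge_toEuclideanCLM (B : Matrix (Fin 2) (Fin 2) ℝ) (v w : EuclideanSpace ℝ (Fin 2)) :
    wedge (toEuclideanCLM (𝕜 := ℝ) B v) (toEuclideanCLM (𝕜 := ℝ) B w) = B.det * wedge v w := by
  simp only [wedge, toEuclideanCLM_fin_two_apply, det_fin_two]
  ring

lemma abs_wedge_le (v w : EuclideanSpace ℝ (Fin 2)) : |wedge v w| ≤ ‖v‖ * ‖w‖ := by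
  refine abs_le_of_sq_le_sq ?_ (by positivity)
  rw [mul_pow, EuclideanSpace.norm_sq_eq, EuclideanSpace.norm_sq_eq]
  simp only [Fin.sum_univ_two, Real.norm_eq_abs, sq_abs, wedge]
  nlinarith [sq_nonneg (v 0 * w 0 + v 1 * w 1)]

lemma mnorm_one : mnorm 1 = 1 := by
  unfold mnorm; rw [map_one]; exact norm_one

lemma mnorm_star (C : Matrix (Fin 2) (Fin 2) ℝ) : mnorm (star C) = mnorm C := by
  unfold mnorm; rw [map_star]; exact norm_star (toEuclideanCLM (𝕜 := ℝ) C)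

lemma mnorm_unitary_mul_mul_star (C : Matrix (Fin 2) (Fin 2) ℝ) {U : Matrix (Fin 2) (Fin 2) ℝ}
    (hU : U ∈ unitary _) : mnorm (U * C * star U) = mnorm C := by
  have hU' : toEuclideanCLM (𝕜 := ℝ) U ∈ unitary _ := Unitary.map_mem _ hU
  unfold mnorm
  rw [map_mul, map_mul, map_star, CStarRing.norm_mul_mem_unitary _ (Unitary.star_mem hU'),
    CStarRing.norm_mem_unitary_mul _ hU']

lemma mnorm_adjugate (C : Matrix (Fin 2) (Fin 2) ℝ) : mnorm C.adjugate = mnorm C := by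
  set J : Matrix (Fin 2) (Fin 2) ℝ := !![0, -1; 1, 0]
  have hJ : J ∈ unitary (Matrix (Fin 2) (Fin 2) ℝ) := by
    rw [← Matrix.unitaryGroup, Matrix.mem_unitaryGroup_iff]
    ext i j
    fin_cases i <;> fin_cases j <;> simp [J, star_eq_conjTranspose, mul_apply, Fin.sum_univ_two]
  have hadj : C.adjugate = J * star C * star J := by
    ext i j
    fin_cases i <;> fin_cases j <;>
      simp [J, adjugate_fin_two, star_eq_conjTranspose, mul_apply, vecMul, dotProduct,
        Fin.sum_univ_two]
  rw [hadj, mnorm_unitary_mul_mul_star _ hJ, mnorm_star]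

lemma mnorm_inv_of_det_eq_one {C : Matrix (Fin 2) (Fin 2) ℝ} (hC : C.det = 1) :
    mnorm C⁻¹ = mnorm C := by
  rw [inv_def, hC, Ring.inverse_one, one_smul, mnorm_adjugate]

lemma mnorm_mul_abs_wedge_le {B : Matrix (Fin 2) (Fin 2) ℝ} (hB : B.det = 1)
    (v : EuclideanSpace ℝ (Fin 2)) {w : EuclideanSpace ℝ (Fin 2)}
    (hw : ‖toEuclideanCLM (𝕜 := ℝ) B w‖ = (mnorm B)⁻¹) :
    mnorm B * |wedge v w| ≤ ‖toEuclideanCLM (𝕜 := ℝ) B v‖ := by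
  have h := abs_wedge_le (toEuclideanCLM (𝕜 := ℝ) B v) (toEuclideanCLM (𝕜 := ℝ) B w)
  rw [wedge_toEuclideanCLM, hB, one_mul, hw] at h
  calc mnorm B * |wedge v w| ≤ mnorm B * (‖toEuclideanCLM (𝕜 := ℝ) B v‖ * (mnorm B)⁻¹) := by
        gcongr; exact norm_nonneg _
    _ = ‖toEuclideanCLM (𝕜 := ℝ) B v‖ * (mnorm B * (mnorm B)⁻¹) := by ring
    _ ≤ ‖toEuclideanCLM (𝕜 := ℝ) B v‖ := mul_le_of_le_one_right (norm_nonneg _) mul_inv_le_one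

lemma mnorm_inv_mul_norm_apply_le_mnorm_mul (B : Matrix (Fin 2) (Fin 2) ℝ)
    {C : Matrix (Fin 2) (Fin 2) ℝ} (hC : IsUnit C.det) {v : EuclideanSpace ℝ (Fin 2)}
    (hv : ‖toEuclideanCLM (𝕜 := ℝ) C⁻¹ v‖ = (mnorm C⁻¹)⁻¹) :
    mnorm C⁻¹ * ‖toEuclideanCLM (𝕜 := ℝ) B v‖ ≤ mnorm (B * C) := by
  have hBv : toEuclideanCLM (𝕜 := ℝ) B v =
      toEuclideanCLM (𝕜 := ℝ) (B * C) (toEuclideanCLM (𝕜 := ℝ) C⁻¹ v) := by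
    rw [← mul_apply_eq_comp, ← map_mul, mul_assoc, mul_nonsing_inv C hC, mul_one]
  calc mnorm C⁻¹ * ‖toEuclideanCLM (𝕜 := ℝ) B v‖
      ≤ mnorm C⁻¹ * (mnorm (B * C) * (mnorm C⁻¹)⁻¹) := by
        rw [hBv, ← hv]
        gcongr
        · exact norm_nonneg _
        · exact ContinuousLinearMap.le_opNorm _ _
    _ = mnorm (B * C) * (mnorm C⁻¹ * (mnorm C⁻¹)⁻¹) := by ring
    _ ≤ mnorm (B * C) := mul_le_of_le_one_right (norm_nonneg _) mul_inv_le_one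

lemma half_lineAngle_le_abs_wedge {v w : EuclideanSpace ℝ (Fin 2)} (hv : ‖v‖ = 1) (hw : ‖w‖ = 1) :
    lineAngle v w / 2 ≤ |wedge v w| := by
  have h1 : |wedge v w| ≤ 1 := by simpa [hv, hw] using abs_wedge_le v w
  have hsin : sin (lineAngle v w) = |wedge v w| :=
    sin_arcsin (neg_one_lt_zero.trans_le (abs_nonneg _)).le h1
  have h0 : 0 ≤ lineAngle v w := arcsin_nonneg.2 (abs_nonneg _)
  calc lineAngle v w / 2 ≤ 2 / π * lineAngle v w := by
        rw [div_mul_eq_mul_div, le_div_iff₀ pi_pos]; nlinarith [pi_le_four]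
    _ ≤ sin (lineAngle v w) := mul_le_sin h0 (arcsin_le_pi_div_two _)
    _ = |wedge v w| := hsin

lemma det_blockProd {A : ℕ → Matrix (Fin 2) (Fin 2) ℝ} {n : ℕ} (hA : ∀ i < n, (A i).det = 1) :
    (blockProd A n).det = 1 := by
  induction n with
  | zero => simp [blockProd]
  | succ k ih =>
    rw [blockProd, det_mul, hA k k.lt_succ_self, ih fun i hi => hA i (hi.trans k.lt_succ_self),
      one_mul]

lemma IsHypBlock.rpow_le_mnorm_blockProd {lam mu eps : ℝ} {n : ℕ}
    {A : ℕ → Matrix (Fin 2) (Fin 2) ℝ} (h : IsHypBlock lam mu eps n A) :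
    mu ^ ((n : ℝ) * (1 - eps)) ≤ mnorm (blockProd A n) := by
  rcases n with _ | k
  · simp [blockProd, mnorm_one]
  · exact h.2.1 (k + 1) (Nat.le_add_left 1 k) le_rfl

theorem young_concatenation_general (eps : ℝ) (heps : 0 < eps) :
    ∃ μ₀ > (1 : ℝ), ∃ θ₀ > (0 : ℝ), ∀ mu ≥ μ₀, ∀ lam ≥ mu,
      ∀ (m : ℝ), 0 < m →
      ∀ (n : ℕ) (C : Matrix (Fin 2) (Fin 2) ℝ), C.det = 1 →
        mu ^ m ≤ mnorm C →
      ∀ (A : ℕ → Matrix (Fin 2) (Fin 2) ℝ), (∀ i < n, (A i).det = 1) →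
        IsHypBlock lam mu eps n A →
      ∀ (θ : ℝ) (v w : EuclideanSpace ℝ (Fin 2)),
        IsContractedDir C⁻¹ v → IsContractedDir (blockProd A n) w →
        0 < θ → θ ≤ θ₀ → lineAngle v w = 2 * θ →
        mu ^ ((m + (n : ℝ)) * (1 - eps)) * θ ≤ mnorm (blockProd A n * C) := by
  refine ⟨2, one_lt_two, 1, one_pos, ?_⟩
  intro mu hmu2 lam _ m hm n C hC hCm A hA hAhyp θ v w hv hw hθ _ hangle
  have hmu : 1 ≤ mu := by linarith
  have hθw : θ ≤ |wedge v w| := by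
    linarith [half_lineAngle_le_abs_wedge hv.1 hw.1]
  calc mu ^ ((m + n) * (1 - eps)) * θ
      ≤ mu ^ m * mu ^ ((n : ℝ) * (1 - eps)) * |wedge v w| := by
        rw [add_mul, rpow_add (by linarith)]
        gcongr
        nlinarith
    _ ≤ mnorm C * mnorm (blockProd A n) * |wedge v w| := by
        gcongr
        · exact norm_nonneg _
        · exact hAhyp.rpow_le_mnorm_blockProd
    _ = mnorm C⁻¹ * (mnorm (blockProd A n) * |wedge v w|) := by
        rw [mnorm_inv_of_det_eq_one hC]; ring
    _ ≤ mnorm C⁻¹ * ‖toEuclideanCLM (𝕜 := ℝ) (blockProd A n) v‖ := by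
        gcongr
        · exact norm_nonneg _
        · exact mnorm_mul_abs_wedge_le (det_blockProd hA) v hw.2
    _ ≤ mnorm (blockProd A n * C) :=
        mnorm_inv_mul_norm_apply_le_mnorm_mul _ (by simp [hC]) hv.2

/-- **Young's concatenation lemma** (Lemma 2.2).  Fix `ε ∈ (0, 1/2)`.  There are `μ₀ > 1`
and `θ₀ > 0` such that for all `μ ≥ μ₀`: if `‖C‖ ≥ μ^m` with `m > 0`, the block
`A_0, …, A_{n-1}` is `μ`-hyperbolic, and the angle `∠(s(C⁻¹), s(A^n)) = 2θ` with
`0 < θ ≤ θ₀`, then `‖A^n C‖ ≥ μ^{(m+n)(1-ε)} θ`. -/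
theorem young_concatenation (eps : ℝ) (heps : 0 < eps) (heps' : eps < 1 / 2) :
    ∃ μ₀ > (1 : ℝ), ∃ θ₀ > (0 : ℝ), ∀ mu ≥ μ₀, ∀ lam ≥ mu,
      ∀ (m : ℝ), 0 < m →
      ∀ (n : ℕ) (C : Matrix (Fin 2) (Fin 2) ℝ), C.det = 1 →
        mu ^ m ≤ mnorm C →
      ∀ (A : ℕ → Matrix (Fin 2) (Fin 2) ℝ), (∀ i < n, (A i).det = 1) →
        IsHypBlock lam mu eps n A →
      ∀ (θ : ℝ) (v w : EuclideanSpace ℝ (Fin 2)),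
        IsContractedDir C⁻¹ v → IsContractedDir (blockProd A n) w →
        0 < θ → θ ≤ θ₀ → lineAngle v w = 2 * θ →
        mu ^ ((m + (n : ℝ)) * (1 - eps)) * θ ≤ mnorm (blockProd A n * C) :=
  young_concatenation_general eps heps

end
end

section
/- Let s > 2 and K > 0, and let I be a compact interval or the circle 𝕊¹. There exists ε₀ = ε₀(s) > 0 such that for every 0 < ε ≤ ε₀ and every f ∈ C^∞(I) with |f − 1|_{s,K} ≤ ε, one has |1/f − 1|_{s,(1+ε^{1/(s+8)})K} ≤ ε^{1/12}. -/
open Real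
open scoped ENNReal

noncomputable section

/-- The Gevrey `(s,K)` weighted sup-norm of `f` on the set `I` (valued in `ℝ≥0∞`):
`|f|_{s,K} = (4π²/3) · sup_k (1+k)²/(K^k (k!)^s) · sup_{x∈I} |f^{(k)}(x)|`. -/
def gevreyNormOn (s K : ℝ) (I : Set ℝ) (f : ℝ → ℝ) : ℝ≥0∞ :=
  ⨆ k : ℕ,
    ENNReal.ofReal (4 * π ^ 2 / 3 * ((1 + (k : ℝ)) ^ 2 / (K ^ k * ((k.factorial : ℝ)) ^ s))) *
      ⨆ x ∈ I, ENNReal.ofReal |iteratedDeriv k f x|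

/-- `I` is a compact interval, or `I` is all of `ℝ` (standing for the circle, in which case
the functions considered are `2π`-periodic). -/
def IntervalOrCircle (I : Set ℝ) : Prop :=
  (∃ a b : ℝ, a ≤ b ∧ I = Set.Icc a b) ∨ I = Set.univ

/-! ### Auxiliary lemmas -/

open Filter Finset

lemma gni_itder_evEq {u v : ℝ → ℝ} {x : ℝ} (h : u =ᶠ[nhds x] v) (n : ℕ) :
    iteratedDeriv n u x = iteratedDeriv n v x := by
  have h' : u =ᶠ[nhdsWithin x Set.univ] v := by rwa [nhdsWithin_univ]
  rw [← iteratedDerivWithin_univ, ← iteratedDerivWithin_univ,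
    iteratedDerivWithin_eq_iteratedFDerivWithin, iteratedDerivWithin_eq_iteratedFDerivWithin,
    h'.iteratedFDerivWithin_eq h.self_of_nhds n]

lemma gni_itderW_open {u : ℝ → ℝ} {U : Set ℝ} (hU : IsOpen U) {x : ℝ} (hx : x ∈ U) (n : ℕ) :
    iteratedDerivWithin n u U x = iteratedDeriv n u x := by
  rw [iteratedDerivWithin_eq_iteratedFDerivWithin, iteratedDeriv_eq_iteratedFDeriv,
    iteratedFDerivWithin_of_isOpen n hU hx]

lemma gni_diffAt_itder {u : ℝ → ℝ} {U : Set ℝ} (hU : IsOpen U) (hu : ContDiffOn ℝ (⊤ : ℕ∞) u U) {x : ℝ}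
    (hx : x ∈ U) (m : ℕ) : DifferentiableAt ℝ (iteratedDeriv m u) x := by
  have h1 : DifferentiableWithinAt ℝ (iteratedDerivWithin m u U) U x :=
    hu.differentiableOn_iteratedDerivWithin (by exact_mod_cast lt_top_iff_ne_top.2 (by simp))
      hU.uniqueDiffOn x hx
  have h2 : DifferentiableWithinAt ℝ (iteratedDeriv m u) U x :=
    h1.congr (fun y hy => (gni_itderW_open hU hy m).symm) (gni_itderW_open hU hx m).symm
  exact h2.differentiableAt (hU.mem_nhds hx)

lemma gni_pascal_sum (a b : ℕ → ℝ) (n : ℕ) :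
    (∑ j ∈ range (n+1), (n.choose j : ℝ) * (a (j+1) * b (n-j)))
      + ∑ j ∈ range (n+1), (n.choose j : ℝ) * (a j * b (n-j+1))
    = ∑ j ∈ range (n+2), ((n+1).choose j : ℝ) * (a j * b (n+1-j)) := by
  rw [Finset.sum_range_succ' (fun j => ((n+1).choose j : ℝ) * (a j * b (n+1-j))) (n+1)]
  have h1 : ∀ i ∈ range (n+1), ((n+1).choose (i+1) : ℝ) * (a (i+1) * b (n+1-(i+1)))
      = (n.choose i : ℝ) * (a (i+1) * b (n-i)) + (n.choose (i+1) : ℝ) * (a (i+1) * b (n-i)) := by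
    intro i hi
    rw [Nat.choose_succ_succ, Nat.succ_sub_succ]
    push_cast; ring
  rw [Finset.sum_congr rfl h1, Finset.sum_add_distrib]
  have h2 : (∑ j ∈ range (n+1), (n.choose j : ℝ) * (a j * b (n-j+1)))
      = (∑ i ∈ range n, (n.choose (i+1) : ℝ) * (a (i+1) * b (n-i))) + a 0 * b (n+1) := by
    rw [Finset.sum_range_succ' (fun j => (n.choose j : ℝ) * (a j * b (n-j+1))) n]
    congr 1
    · apply Finset.sum_congr rfl
      intro i hi
      have : n - (i+1) + 1 = n - i := by
        have := Finset.mem_range.1 hi; omega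
      rw [this]
    · simp
  have h3 : (∑ i ∈ range (n+1), (n.choose (i+1) : ℝ) * (a (i+1) * b (n-i)))
      = ∑ i ∈ range n, (n.choose (i+1) : ℝ) * (a (i+1) * b (n-i)) := by
    rw [Finset.sum_range_succ]
    simp [Nat.choose_succ_self]
  rw [h2, h3]
  simp [Nat.choose_zero_right]
  ring

lemma gni_itder_leibniz {u v : ℝ → ℝ} {U : Set ℝ} (hU : IsOpen U)
    (hu : ContDiffOn ℝ (⊤ : ℕ∞) u U) (hv : ContDiffOn ℝ (⊤ : ℕ∞) v U) (n : ℕ) :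
    ∀ x ∈ U, iteratedDeriv n (fun y => u y * v y) x =
      ∑ j ∈ range (n + 1),
        (n.choose j : ℝ) * (iteratedDeriv j u x * iteratedDeriv (n - j) v x) := by
  induction n with
  | zero => intro x hx; simp [iteratedDeriv_zero]
  | succ n IH =>
    intro x hx
    have hev : iteratedDeriv n (fun y => u y * v y) =ᶠ[nhds x]
        (fun y => ∑ j ∈ range (n + 1),
          (n.choose j : ℝ) * (iteratedDeriv j u y * iteratedDeriv (n - j) v y)) :=
      eventually_of_mem (hU.mem_nhds hx) (fun y hy => IH y hy)
    have hterm : ∀ j ∈ range (n + 1), DifferentiableAt ℝ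
        (fun y => (n.choose j : ℝ) * (iteratedDeriv j u y * iteratedDeriv (n - j) v y)) x :=
      fun j _ => (((gni_diffAt_itder hU hu hx j).mul (gni_diffAt_itder hU hv hx (n - j))).const_mul _)
    rw [iteratedDeriv_succ, hev.deriv_eq, deriv_fun_sum hterm]
    have hder : ∀ j ∈ range (n + 1),
        deriv (fun y => (n.choose j : ℝ) * (iteratedDeriv j u y * iteratedDeriv (n - j) v y)) x
        = (n.choose j : ℝ) * (iteratedDeriv (j + 1) u x * iteratedDeriv (n - j) v x)
          + (n.choose j : ℝ) * (iteratedDeriv j u x * iteratedDeriv (n - j + 1) v x) := by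
      intro j _
      rw [deriv_const_mul _ (d := fun y => iteratedDeriv j u y * iteratedDeriv (n - j) v y) ((gni_diffAt_itder hU hu hx j).mul (gni_diffAt_itder hU hv hx (n - j))),
        deriv_fun_mul (gni_diffAt_itder hU hu hx j) (gni_diffAt_itder hU hv hx (n - j))]
      rw [← iteratedDeriv_succ, ← iteratedDeriv_succ]
      ring
    rw [Finset.sum_congr rfl hder, Finset.sum_add_distrib]
    exact gni_pascal_sum (fun j => iteratedDeriv j u x) (fun j => iteratedDeriv j v x) n

lemma gni_tele_sum (m : ℕ) : ∑ i ∈ range m, (1 : ℝ) / ((i : ℝ) + 2) ^ 2 ≤ 1 - 1 / ((m : ℝ) + 1) := by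
  induction m with
  | zero => simp
  | succ m IH =>
    rw [Finset.sum_range_succ]
    have h1 : (1 : ℝ) / ((m : ℝ) + 2) ^ 2 ≤ 1 / ((m : ℝ) + 1) - 1 / ((m : ℝ) + 2) := by
      rw [div_sub_div _ _ (by positivity) (by positivity)]
      rw [div_le_div_iff₀ (by positivity) (by positivity)]
      nlinarith [sq_nonneg ((m : ℝ) + 1)]
    have h2 : ((m : ℝ) + 1) + 1 = (m : ℝ) + 2 := by ring
    push_cast
    rw [h2]
    linarith

lemma gni_ico_sum_le_one (k : ℕ) : ∑ j ∈ Ico 1 k, (1 : ℝ) / ((1 : ℝ) + (j : ℝ)) ^ 2 ≤ 1 := by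
  rcases le_or_gt 1 k with hk | hk
  · have : ∑ j ∈ Ico 1 k, (1 : ℝ) / ((1 : ℝ) + (j : ℝ)) ^ 2
        = ∑ i ∈ range (k - 1), (1 : ℝ) / ((i : ℝ) + 2) ^ 2 := by
      rw [Finset.sum_Ico_eq_sum_range]
      apply Finset.sum_congr rfl
      intro i _
      push_cast
      ring_nf
    rw [this]
    calc _ ≤ 1 - 1 / (((k - 1 : ℕ) : ℝ) + 1) := gni_tele_sum (k - 1)
    _ ≤ 1 := by
      have h : (0:ℝ) ≤ 1 / (((k - 1 : ℕ) : ℝ) + 1) := by positivity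
      linarith
  · interval_cases k <;> simp

lemma gni_ico_reflect (k : ℕ) (g : ℕ → ℝ) :
    ∑ j ∈ Ico 1 k, g (k - j) = ∑ j ∈ Ico 1 k, g j := by
  apply Finset.sum_nbij' (fun j => k - j) (fun j => k - j)
  · intro a ha; simp only [Finset.mem_Ico] at *; omega
  · intro a ha; simp only [Finset.mem_Ico] at *; omega
  · intro a ha; simp only [Finset.mem_Ico] at ha; omega
  · intro a ha; simp only [Finset.mem_Ico] at ha; omega
  · intro a ha; rfl

lemma gni_sum_sq_bound (k : ℕ) :
    ∑ j ∈ Ico 1 k, (1 : ℝ) / (((1 : ℝ) + (j : ℝ)) ^ 2 * ((1 : ℝ) + ((k - j : ℕ) : ℝ)) ^ 2)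
      ≤ 8 / ((1 : ℝ) + (k : ℝ)) ^ 2 := by
  have key : ∀ j ∈ Ico 1 k,
      (1 : ℝ) / (((1 : ℝ) + (j : ℝ)) ^ 2 * ((1 : ℝ) + ((k - j : ℕ) : ℝ)) ^ 2)
      ≤ 4 / ((1 : ℝ) + (k : ℝ)) ^ 2 *
        ((1 : ℝ) / ((1 : ℝ) + (j : ℝ)) ^ 2 + (1 : ℝ) / ((1 : ℝ) + ((k - j : ℕ) : ℝ)) ^ 2) := by
    intro j hj
    simp only [Finset.mem_Ico] at hj
    set p : ℝ := 1 + (j : ℝ) with hp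
    set q : ℝ := 1 + ((k - j : ℕ) : ℝ) with hq
    have hp1 : (1 : ℝ) ≤ p := by simp [hp]
    have hq1 : (1 : ℝ) ≤ q := by simp [hq]
    have hpq : (1 : ℝ) + (k : ℝ) ≤ p + q := by
      have : ((k - j : ℕ) : ℝ) = (k : ℝ) - (j : ℝ) := by
        have : j ≤ k := le_of_lt hj.2
        push_cast [this]; ring
      rw [hp, hq, this]; linarith
    have hppos : (0:ℝ) < p := by linarith
    have hqpos : (0:ℝ) < q := by linarith
    rcases le_total p q with h | h
    · have hk2 : ((1 : ℝ) + (k : ℝ)) ^ 2 ≤ 4 * q ^ 2 := by nlinarith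
      rw [div_le_iff₀ (by positivity)]
      have e1 : 4 / (1+(k:ℝ))^2 * (1/p^2 + 1/q^2) * (p^2*q^2) = 4 * (q^2 + p^2) / (1+(k:ℝ))^2 := by
        field_simp
      rw [e1, le_div_iff₀ (by positivity)]
      nlinarith [sq_nonneg p, sq_nonneg q, hp1, hq1]
    · have hk2 : ((1 : ℝ) + (k : ℝ)) ^ 2 ≤ 4 * p ^ 2 := by nlinarith
      rw [div_le_iff₀ (by positivity)]
      have e1 : 4 / (1+(k:ℝ))^2 * (1/p^2 + 1/q^2) * (p^2*q^2) = 4 * (q^2 + p^2) / (1+(k:ℝ))^2 := by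
        field_simp
      rw [e1, le_div_iff₀ (by positivity)]
      nlinarith [sq_nonneg p, sq_nonneg q, hp1, hq1]
  calc ∑ j ∈ Ico 1 k, (1 : ℝ) / (((1 : ℝ) + (j : ℝ)) ^ 2 * ((1 : ℝ) + ((k - j : ℕ) : ℝ)) ^ 2)
      ≤ ∑ j ∈ Ico 1 k, 4 / ((1 : ℝ) + (k : ℝ)) ^ 2 *
        ((1 : ℝ) / ((1 : ℝ) + (j : ℝ)) ^ 2 + (1 : ℝ) / ((1 : ℝ) + ((k - j : ℕ) : ℝ)) ^ 2) :=
        Finset.sum_le_sum key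
    _ = 4 / ((1 : ℝ) + (k : ℝ)) ^ 2 * (∑ j ∈ Ico 1 k, (1 : ℝ) / ((1 : ℝ) + (j : ℝ)) ^ 2
        + ∑ j ∈ Ico 1 k, (1 : ℝ) / ((1 : ℝ) + ((k - j : ℕ) : ℝ)) ^ 2) := by
        rw [← Finset.mul_sum, Finset.sum_add_distrib]
    _ ≤ 4 / ((1 : ℝ) + (k : ℝ)) ^ 2 * (1 + 1) := by
        have h1 := gni_ico_sum_le_one k
        have h2 : ∑ j ∈ Ico 1 k, (1 : ℝ) / ((1 : ℝ) + ((k - j : ℕ) : ℝ)) ^ 2 ≤ 1 := by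
          rw [gni_ico_reflect k (fun j => (1 : ℝ) / ((1 : ℝ) + (j : ℝ)) ^ 2)]
          exact h1
        have hpos : (0:ℝ) ≤ 4 / ((1 : ℝ) + (k : ℝ)) ^ 2 := by positivity
        apply mul_le_mul_of_nonneg_left _ hpos
        linarith
    _ = 8 / ((1 : ℝ) + (k : ℝ)) ^ 2 := by ring

lemma gni_itder_const (c : ℝ) (m : ℕ) : iteratedDeriv (m + 1) (fun _ : ℝ => c) = fun _ => 0 := by
  induction m with
  | zero => funext x; rw [iteratedDeriv_one]; simp
  | succ m IH => rw [iteratedDeriv_succ, IH]; funext x; simp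

lemma gni_itder_sub_const (g : ℝ → ℝ) (c : ℝ) (m : ℕ) :
    iteratedDeriv (m + 1) (fun y => g y - c) = iteratedDeriv (m + 1) g := by
  have h : deriv (fun y => g y - c) = deriv g := funext fun y => deriv_sub_const c
  rw [iteratedDeriv_succ', h, ← iteratedDeriv_succ']

lemma gni_choose_fact_rpow {s : ℝ} (hs : 1 ≤ s) {k j : ℕ} (hj : j ≤ k) :
    (k.choose j : ℝ) * ((j.factorial : ℝ) ^ s * (((k - j).factorial : ℝ)) ^ s)
      ≤ ((k.factorial : ℝ)) ^ s := by
  have hc1 : (1 : ℝ) ≤ (k.choose j : ℝ) := by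
    exact_mod_cast Nat.one_le_iff_ne_zero.2 (Nat.choose_pos hj).ne'
  have hF : (0 : ℝ) ≤ (j.factorial : ℝ) * ((k - j).factorial : ℝ) := by positivity
  have h1 : (j.factorial : ℝ) ^ s * (((k - j).factorial : ℝ)) ^ s
      = ((j.factorial : ℝ) * ((k - j).factorial : ℝ)) ^ s :=
    (Real.mul_rpow (by positivity) (by positivity)).symm
  have h2 : (k.choose j : ℝ) ≤ (k.choose j : ℝ) ^ s := by
    calc (k.choose j : ℝ) = (k.choose j : ℝ) ^ (1 : ℝ) := (Real.rpow_one _).symm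
    _ ≤ _ := Real.rpow_le_rpow_of_exponent_le hc1 hs
  calc (k.choose j : ℝ) * ((j.factorial : ℝ) ^ s * (((k - j).factorial : ℝ)) ^ s)
      ≤ (k.choose j : ℝ) ^ s * ((j.factorial : ℝ) ^ s * (((k - j).factorial : ℝ)) ^ s) := by
        apply mul_le_mul_of_nonneg_right h2 (by positivity)
    _ = ((k.choose j : ℝ) * ((j.factorial : ℝ) * ((k - j).factorial : ℝ))) ^ s := by
        rw [h1, ← Real.mul_rpow (by positivity) hF]
    _ = ((k.factorial : ℝ)) ^ s := by
        congr 1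
        have := Nat.choose_mul_factorial_mul_factorial hj
        push_cast [← this]
        ring

set_option maxHeartbeats 2000000 in
/-- **Gevrey bound for the reciprocal** (Proposition 2.3 (3)).
For `s > 2` there is `ε₀ = ε₀(s) > 0` such that for all `0 < ε ≤ ε₀` and all smooth `f`
with `|f − 1|_{s,K} ≤ ε`, one has `|1/f − 1|_{s,(1+ε^{1/(s+8)})K} ≤ ε^{1/12}`. -/
theorem gevrey_norm_inv (s K : ℝ) (hs : 2 < s) (hK : 0 < K)
    (I : Set ℝ) (hI : IntervalOrCircle I) :
    ∃ ε₀ > (0 : ℝ), ∀ ε : ℝ, 0 < ε → ε ≤ ε₀ →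
      ∀ f : ℝ → ℝ, ContDiff ℝ (⊤ : ℕ∞) f → (I = Set.univ → Function.Periodic f (2 * π)) →
        gevreyNormOn s K I (fun x => f x - 1) ≤ ENNReal.ofReal ε →
        gevreyNormOn s ((1 + ε ^ (1 / (s + 8))) * K) I (fun x => (f x)⁻¹ - 1) ≤
          ENNReal.ofReal (ε ^ ((1 : ℝ) / 12)) := by
  refine ⟨1/100, by norm_num, ?_⟩
  intro ε hε hε0 f hf _hper hnorm
  have hs1 : (1:ℝ) ≤ s := by linarith
  have hπ : (0:ℝ) < π := Real.pi_pos
  have hπ3 : (3:ℝ) < π := Real.pi_gt_three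
  set ε' : ℝ := 3 * ε / (4 * π ^ 2) with hε'def
  have hε'pos : 0 < ε' := by positivity
  have hε'le : ε' ≤ 1 / 1200 := by
    rw [hε'def, div_le_div_iff₀ (by positivity) (by norm_num)]
    nlinarith
  set A : ℕ → ℝ := fun m => ε' * K ^ m * ((m.factorial : ℝ)) ^ s / (1 + (m:ℝ)) ^ 2 with hA
  have hApos : ∀ m, 0 < A m := by
    intro m
    rw [hA]
    have : (0:ℝ) < ((m.factorial : ℝ)) ^ s := Real.rpow_pos_of_pos (by positivity) s
    positivity
  rw [gevreyNormOn] at hnorm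
  -- Step 1: extract pointwise derivative bounds for f - 1
  have derivBound : ∀ k : ℕ, ∀ x ∈ I, |iteratedDeriv k (fun y => f y - 1) x| ≤ A k := by
    intro k x hx
    set c : ℝ := 4 * π ^ 2 / 3 * ((1 + (k : ℝ)) ^ 2 / (K ^ k * ((k.factorial : ℝ)) ^ s)) with hc
    have hfacs : (0:ℝ) < ((k.factorial : ℝ)) ^ s := Real.rpow_pos_of_pos (by positivity) s
    have hcpos : 0 < c := by rw [hc]; positivity
    have h1 : ENNReal.ofReal c * ENNReal.ofReal |iteratedDeriv k (fun y => f y - 1) x|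
        ≤ ENNReal.ofReal ε := by
      refine le_trans ?_ hnorm
      refine le_iSup_of_le k ?_
      have hle : ENNReal.ofReal |iteratedDeriv k (fun y => f y - 1) x|
          ≤ ⨆ y ∈ I, ENNReal.ofReal |iteratedDeriv k (fun y => f y - 1) y| :=
        le_iSup₂_of_le x hx le_rfl
      exact mul_le_mul_right hle _
    rw [← ENNReal.ofReal_mul hcpos.le] at h1
    have h2 : c * |iteratedDeriv k (fun y => f y - 1) x| ≤ ε :=
      (ENNReal.ofReal_le_ofReal_iff hε.le).1 h1
    have hceq : c * A k = ε := by
      rw [hc, hA, hε'def]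
      have hKk : (K:ℝ) ^ k ≠ 0 := by positivity
      have h1k : ((1:ℝ) + (k:ℝ)) ^ 2 ≠ 0 := by positivity
      field_simp
    rw [← hceq] at h2
    exact le_of_mul_le_mul_left h2 hcpos
  -- Step 2: basic bounds on f
  have hf1 : ∀ x ∈ I, |f x - 1| ≤ ε' := by
    intro x hx
    have h := derivBound 0 x hx
    rw [hA] at h
    simp only [iteratedDeriv_zero, pow_zero, Nat.factorial_zero, Nat.cast_one, Real.one_rpow,
      Nat.cast_zero] at h
    norm_num at h
    exact h
  have hflb : ∀ x ∈ I, 1 - ε' ≤ f x := by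
    intro x hx
    have h := abs_le.1 (hf1 x hx)
    linarith [h.1]
  have hfpos : ∀ x ∈ I, 0 < f x := by
    intro x hx
    have := hflb x hx
    linarith
  have hfne : ∀ x ∈ I, f x ≠ 0 := fun x hx => (hfpos x hx).ne'
  set U : Set ℝ := {y : ℝ | f y ≠ 0} with hUdef
  have hUopen : IsOpen U := isOpen_compl_singleton.preimage hf.continuous
  have hIU : I ⊆ U := fun x hx => hfne x hx
  have hu : ContDiffOn ℝ (⊤ : ℕ∞) (fun y => (f y)⁻¹) U := (hf.contDiffOn).inv (fun y hy => hy)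
  have hv : ContDiffOn ℝ (⊤ : ℕ∞) f U := hf.contDiffOn
  have hu0 : ∀ x ∈ I, |(f x)⁻¹| ≤ 2 := by
    intro x hx
    rw [abs_of_pos (inv_pos.2 (hfpos x hx))]
    rw [show (2:ℝ) = (1/2 : ℝ)⁻¹ by norm_num]
    apply inv_anti₀ (by norm_num)
    have := hflb x hx
    linarith [hε'le]
  have hfder : ∀ m : ℕ, 1 ≤ m → ∀ x ∈ I, |iteratedDeriv m f x| ≤ A m := by
    intro m hm x hx
    rcases m with _ | m0
    · omega
    · rw [← gni_itder_sub_const f 1 m0]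
      exact derivBound (m0+1) x hx
  -- Step 3: main induction
  have main : ∀ k : ℕ, 1 ≤ k → ∀ x ∈ I,
      |iteratedDeriv k (fun y => (f y)⁻¹) x| ≤ 4 * A k := by
    intro k
    induction k using Nat.strong_induction_on with
    | _ k IH =>
    intro hk1 x hx
    have hxU : x ∈ U := hIU hx
    have hlz := gni_itder_leibniz hUopen hu hv k x hxU
    have hone : iteratedDeriv k (fun y => (f y)⁻¹ * f y) x = 0 := by
      have hev : (fun y => (f y)⁻¹ * f y) =ᶠ[nhds x] (fun _ => (1:ℝ)) := by
        filter_upwards [hUopen.mem_nhds hxU] with y hy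
        exact inv_mul_cancel₀ hy
      rw [gni_itder_evEq hev k]
      rcases k with _ | m
      · omega
      · exact congrFun (gni_itder_const 1 m) x
    have hsum0 : ∑ j ∈ range (k+1),
        (k.choose j : ℝ) * (iteratedDeriv j (fun y => (f y)⁻¹) x * iteratedDeriv (k-j) f x)
        = 0 := by rw [← hlz]; exact hone
    rw [Finset.sum_range_succ] at hsum0
    simp only [Nat.choose_self, Nat.cast_one, Nat.sub_self, iteratedDeriv_zero, one_mul] at hsum0
    -- |u_k x| * (1 - ε') ≤ |Σ_{j < k}|
    have hstep : |iteratedDeriv k (fun y => (f y)⁻¹) x| * (1 - ε')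
        ≤ |∑ j ∈ range k,
            (k.choose j : ℝ) * (iteratedDeriv j (fun y => (f y)⁻¹) x * iteratedDeriv (k-j) f x)| := by
      have h1 : iteratedDeriv k (fun y => (f y)⁻¹) x * f x
          = -∑ j ∈ range k,
            (k.choose j : ℝ) * (iteratedDeriv j (fun y => (f y)⁻¹) x * iteratedDeriv (k-j) f x) := by
        linarith [hsum0]
      calc |iteratedDeriv k (fun y => (f y)⁻¹) x| * (1 - ε')
          ≤ |iteratedDeriv k (fun y => (f y)⁻¹) x| * |f x| := by
            apply mul_le_mul_of_nonneg_left _ (abs_nonneg _)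
            rw [abs_of_pos (hfpos x hx)]
            exact hflb x hx
        _ = |iteratedDeriv k (fun y => (f y)⁻¹) x * f x| := (abs_mul _ _).symm
        _ = _ := by rw [h1, abs_neg]
    -- bound the sum
    have hbound : |∑ j ∈ range k,
        (k.choose j : ℝ) * (iteratedDeriv j (fun y => (f y)⁻¹) x * iteratedDeriv (k-j) f x)|
        ≤ 2 * A k + 32 * ε' * A k := by
      have habs : |∑ j ∈ range k,
          (k.choose j : ℝ) * (iteratedDeriv j (fun y => (f y)⁻¹) x * iteratedDeriv (k-j) f x)|
          ≤ ∑ j ∈ range k,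
            |(k.choose j : ℝ) * (iteratedDeriv j (fun y => (f y)⁻¹) x * iteratedDeriv (k-j) f x)| :=
        Finset.abs_sum_le_sum_abs _ _
      have hsplit : ∑ j ∈ range k,
          |(k.choose j : ℝ) * (iteratedDeriv j (fun y => (f y)⁻¹) x * iteratedDeriv (k-j) f x)|
          = |(k.choose 0 : ℝ) * (iteratedDeriv 0 (fun y => (f y)⁻¹) x * iteratedDeriv (k-0) f x)|
            + ∑ j ∈ Ico (0+1) k,
              |(k.choose j : ℝ) * (iteratedDeriv j (fun y => (f y)⁻¹) x * iteratedDeriv (k-j) f x)| := by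
        rw [Finset.range_eq_Ico]
        exact Finset.sum_eq_sum_Ico_succ_bot (by omega : 0 < k) _
      have hj0 : |((k.choose 0 : ℕ) : ℝ) * (iteratedDeriv 0 (fun y => (f y)⁻¹) x
          * iteratedDeriv (k-0) f x)| ≤ 2 * A k := by
        rw [Nat.choose_zero_right, iteratedDeriv_zero, Nat.sub_zero]
        rw [Nat.cast_one, one_mul, abs_mul]
        exact mul_le_mul (hu0 x hx) (hfder k hk1 x hx) (abs_nonneg _) (by norm_num)
      have hjrest : ∑ j ∈ Ico (0+1) k,
          |(k.choose j : ℝ) * (iteratedDeriv j (fun y => (f y)⁻¹) x * iteratedDeriv (k-j) f x)|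
          ≤ 32 * ε' * A k := by
        have hterm : ∀ j ∈ Ico 1 k,
            |(k.choose j : ℝ) * (iteratedDeriv j (fun y => (f y)⁻¹) x * iteratedDeriv (k-j) f x)|
            ≤ (4 * ε' ^ 2 * K ^ k * ((k.factorial : ℝ)) ^ s) *
              ((1:ℝ) / (((1:ℝ) + (j:ℝ)) ^ 2 * ((1:ℝ) + ((k - j : ℕ) : ℝ)) ^ 2)) := by
          intro j hj
          simp only [Finset.mem_Ico] at hj
          have hjk : j ≤ k := le_of_lt hj.2
          have h1 : |iteratedDeriv j (fun y => (f y)⁻¹) x| ≤ 4 * A j := IH j hj.2 hj.1 x hx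
          have h2 : |iteratedDeriv (k-j) f x| ≤ A (k-j) := hfder (k-j) (by omega) x hx
          have hcf := gni_choose_fact_rpow hs1 hjk
          rw [abs_mul, abs_mul, Nat.abs_cast]
          have hchoose0 : (0:ℝ) ≤ (k.choose j : ℝ) := by positivity
          calc (k.choose j : ℝ) * (|iteratedDeriv j (fun y => (f y)⁻¹) x|
                * |iteratedDeriv (k-j) f x|)
              ≤ (k.choose j : ℝ) * ((4 * A j) * A (k-j)) := by
                apply mul_le_mul_of_nonneg_left _ hchoose0
                exact mul_le_mul h1 h2 (abs_nonneg _) (by linarith [hApos j])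
            _ ≤ _ := by
                rw [hA]
                have hKsplit : K ^ j * K ^ (k - j) = K ^ k := by
                  rw [← pow_add]; congr 1; omega
                have e : (4 * (ε' * K ^ j * ((j.factorial : ℝ)) ^ s / (1 + (j:ℝ)) ^ 2))
                    * (ε' * K ^ (k-j) * (((k-j).factorial : ℝ)) ^ s / (1 + ((k-j:ℕ)):ℝ) ^ 2)
                    = (4 * ε' ^ 2 * K ^ k) * ((j.factorial : ℝ) ^ s * (((k-j).factorial : ℝ)) ^ s)
                      * ((1:ℝ) / (((1:ℝ) + (j:ℝ)) ^ 2 * ((1:ℝ) + ((k - j : ℕ) : ℝ)) ^ 2)) := by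
                  rw [← hKsplit]
                  field_simp
                rw [e, ← mul_assoc]
                rw [show (k.choose j : ℝ) * ((4 * ε' ^ 2 * K ^ k)
                    * ((j.factorial : ℝ) ^ s * (((k-j).factorial : ℝ)) ^ s))
                  = (4 * ε' ^ 2 * K ^ k)
                    * ((k.choose j : ℝ) * ((j.factorial : ℝ) ^ s * (((k-j).factorial : ℝ)) ^ s))
                  by ring]
                apply mul_le_mul_of_nonneg_right _ (by positivity)
                apply mul_le_mul_of_nonneg_left hcf (by positivity)
        calc ∑ j ∈ Ico (0+1) k,
            |(k.choose j : ℝ) * (iteratedDeriv j (fun y => (f y)⁻¹) x * iteratedDeriv (k-j) f x)|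
            ≤ ∑ j ∈ Ico 1 k, (4 * ε' ^ 2 * K ^ k * ((k.factorial : ℝ)) ^ s) *
              ((1:ℝ) / (((1:ℝ) + (j:ℝ)) ^ 2 * ((1:ℝ) + ((k - j : ℕ) : ℝ)) ^ 2)) :=
              Finset.sum_le_sum hterm
          _ = (4 * ε' ^ 2 * K ^ k * ((k.factorial : ℝ)) ^ s) *
              ∑ j ∈ Ico 1 k,
                (1:ℝ) / (((1:ℝ) + (j:ℝ)) ^ 2 * ((1:ℝ) + ((k - j : ℕ) : ℝ)) ^ 2) := by
              rw [Finset.mul_sum]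
          _ ≤ (4 * ε' ^ 2 * K ^ k * ((k.factorial : ℝ)) ^ s) * (8 / ((1:ℝ) + (k:ℝ)) ^ 2) := by
              apply mul_le_mul_of_nonneg_left (gni_sum_sq_bound k)
              have : (0:ℝ) < ((k.factorial : ℝ)) ^ s := Real.rpow_pos_of_pos (by positivity) s
              positivity
          _ = 32 * ε' * A k := by
              rw [hA]
              field_simp
              ring
      refine habs.trans ?_
      rw [hsplit]
      exact add_le_add hj0 hjrest
    -- conclude
    have hAk := hApos k
    have habs0 : (0:ℝ) ≤ |iteratedDeriv k (fun y => (f y)⁻¹) x| := abs_nonneg _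
    nlinarith [hstep.trans hbound]
  -- Step 4: assemble the final bound
  have hfinal : ∀ k : ℕ, ∀ x ∈ I, |iteratedDeriv k (fun y => (f y)⁻¹ - 1) x| ≤ 4 * A k := by
    intro k x hx
    rcases k with _ | m
    · rw [iteratedDeriv_zero]
      have he : (f x)⁻¹ - 1 = (1 - f x) * (f x)⁻¹ := by
        field_simp [hfne x hx]
      rw [he, abs_mul, abs_sub_comm]
      have h1 : |f x - 1| * |(f x)⁻¹| ≤ ε' * 2 :=
        mul_le_mul (hf1 x hx) (hu0 x hx) (abs_nonneg _) hε'pos.le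
      have hA0 : A 0 = ε' := by
        rw [hA]
        norm_num [Real.one_rpow]
      rw [hA0]
      linarith
    · rw [show (fun y => (f y)⁻¹ - 1) = (fun y => (fun z => (f z)⁻¹) y - 1) by rfl,
        gni_itder_sub_const (fun z => (f z)⁻¹) 1 m]
      exact main (m+1) (by omega) x hx
  -- 4ε ≤ ε^(1/12)
  have h4eps : 4 * ε ≤ ε ^ ((1:ℝ)/12) := by
    have hε1 : ε ≤ 1 := by linarith
    have e1 : ε ^ ((11:ℝ)/12) * ε ^ ((1:ℝ)/12) = ε := by
      rw [← Real.rpow_add hε]; norm_num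
    have e2 : ε ^ ((11:ℝ)/12) ≤ ε ^ ((1:ℝ)/2) :=
      Real.rpow_le_rpow_of_exponent_ge hε hε1 (by norm_num)
    have e3 : ε ^ ((1:ℝ)/2) ≤ (1/100 : ℝ) ^ ((1:ℝ)/2) :=
      Real.rpow_le_rpow hε.le hε0 (by norm_num)
    have e4 : ((1:ℝ)/100) ^ ((1:ℝ)/2) = 1/10 := by
      rw [show (1/100:ℝ) = ((1/10:ℝ))^(2:ℕ) by norm_num, ← Real.rpow_natCast ((1/10:ℝ)) 2,
        ← Real.rpow_mul (by norm_num)]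
      norm_num
    have e5 : (0:ℝ) ≤ ε ^ ((1:ℝ)/12) := Real.rpow_nonneg hε.le _
    have e6 : ε ^ ((11:ℝ)/12) ≤ 1/10 := by rw [← e4]; exact e2.trans e3
    calc 4 * ε = 4 * (ε ^ ((11:ℝ)/12) * ε ^ ((1:ℝ)/12)) := by rw [e1]
      _ ≤ 4 * ((1/10) * ε ^ ((1:ℝ)/12)) := by
          apply mul_le_mul_of_nonneg_left _ (by norm_num)
          exact mul_le_mul_of_nonneg_right e6 e5
      _ ≤ ε ^ ((1:ℝ)/12) := by linarith
  -- final supremum bound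
  rw [gevreyNormOn]
  apply iSup_le
  intro k
  set K' : ℝ := (1 + ε ^ (1 / (s + 8))) * K with hK'def
  have hrpow : (0:ℝ) ≤ ε ^ (1 / (s + 8)) := Real.rpow_nonneg hε.le _
  have hK'pos : 0 < K' := by rw [hK'def]; positivity
  have hKK' : K ≤ K' := by
    rw [hK'def]
    nlinarith
  have hfacs : (0:ℝ) < ((k.factorial : ℝ)) ^ s := Real.rpow_pos_of_pos (by positivity) s
  have hc'pos : (0:ℝ) ≤ 4 * π ^ 2 / 3 * ((1 + (k : ℝ)) ^ 2 / (K' ^ k * ((k.factorial : ℝ)) ^ s)) := by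
    positivity
  have hsup : (⨆ x ∈ I, ENNReal.ofReal |iteratedDeriv k (fun y => (f y)⁻¹ - 1) x|)
      ≤ ENNReal.ofReal (4 * A k) :=
    iSup₂_le fun x hx => ENNReal.ofReal_le_ofReal (hfinal k x hx)
  calc ENNReal.ofReal (4 * π ^ 2 / 3 * ((1 + (k : ℝ)) ^ 2 / (K' ^ k * ((k.factorial : ℝ)) ^ s))) *
        ⨆ x ∈ I, ENNReal.ofReal |iteratedDeriv k (fun y => (f y)⁻¹ - 1) x|
      ≤ ENNReal.ofReal (4 * π ^ 2 / 3 * ((1 + (k : ℝ)) ^ 2 / (K' ^ k * ((k.factorial : ℝ)) ^ s))) *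
        ENNReal.ofReal (4 * A k) := mul_le_mul_right hsup _
    _ = ENNReal.ofReal ((4 * π ^ 2 / 3 * ((1 + (k : ℝ)) ^ 2 / (K' ^ k * ((k.factorial : ℝ)) ^ s)))
        * (4 * A k)) := (ENNReal.ofReal_mul hc'pos).symm
    _ ≤ ENNReal.ofReal (ε ^ ((1:ℝ)/12)) := by
        apply ENNReal.ofReal_le_ofReal
        have heq : (4 * π ^ 2 / 3 * ((1 + (k : ℝ)) ^ 2 / (K' ^ k * ((k.factorial : ℝ)) ^ s)))
            * (4 * A k) = 4 * ε * (K ^ k / K' ^ k) := by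
          rw [hA, hε'def]
          have hK'k : K' ^ k ≠ 0 := by positivity
          have h1k : ((1:ℝ) + (k:ℝ)) ^ 2 ≠ 0 := by positivity
          field_simp
        rw [heq]
        have hdiv : K ^ k / K' ^ k ≤ 1 := by
          rw [div_le_one (by positivity)]
          exact pow_le_pow_left₀ hK.le hKK' k
        calc 4 * ε * (K ^ k / K' ^ k) ≤ 4 * ε * 1 := by
              apply mul_le_mul_of_nonneg_left hdiv (by positivity)
          _ = 4 * ε := by ring
          _ ≤ ε ^ ((1:ℝ)/12) := h4eps

end
end

section
/- Let s > 2 and K > 0, and let I be a compact interval or the circle 𝕊¹. There exists ε₀ = ε₀(s) > 0 such that for every 0 < ε ≤ ε₀ and every f ∈ C^∞(I) with |f − 1|_{s,K} ≤ ε, one has |√f − 1|_{s,(1+ε^{1/(s+16)})K} ≤ ε^{1/12}. -/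
open Real
open scoped ENNReal

noncomputable section

/-! ### Auxiliary lemmas -/

lemma iteratedDeriv_congr_nhds {φ ψ : ℝ → ℝ} {x : ℝ} (h : φ =ᶠ[nhds x] ψ) (n : ℕ) :
    iteratedDeriv n φ x = iteratedDeriv n ψ x := by
  have H : ∀ n : ℕ, iteratedDeriv n φ =ᶠ[nhds x] iteratedDeriv n ψ := by
    intro n
    induction n with
    | zero => simpa [iteratedDeriv_zero] using h
    | succ n ih => rw [iteratedDeriv_succ, iteratedDeriv_succ]; exact ih.deriv
  exact (H n).eq_of_nhds

lemma iteratedDeriv_sub_const' (φ : ℝ → ℝ) (c : ℝ) (n : ℕ) :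
    iteratedDeriv (n+1) (fun y => φ y - c) = iteratedDeriv (n+1) φ := by
  rw [iteratedDeriv_succ', iteratedDeriv_succ']
  have h : (deriv fun y => φ y - c) = deriv φ :=
    funext fun y => deriv_sub_const (f := φ) (x := y) c
  rw [h]

lemma contDiffOn_iteratedDeriv_aux {U : Set ℝ} (hU : IsOpen U) {χ : ℝ → ℝ}
    (hχ : ContDiffOn ℝ (⊤ : ℕ∞) χ U) : ∀ m : ℕ, ContDiffOn ℝ (⊤ : ℕ∞) (iteratedDeriv m χ) U := by
  intro m
  induction m with
  | zero => simpa [iteratedDeriv_zero] using hχ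
  | succ m ih =>
    rw [iteratedDeriv_succ]
    exact ((contDiffOn_infty_iff_deriv_of_isOpen hU).1 ih).2

lemma hasDerivAt_iteratedDeriv_aux {U : Set ℝ} (hU : IsOpen U) {χ : ℝ → ℝ}
    (hχ : ContDiffOn ℝ (⊤ : ℕ∞) χ U) (m : ℕ) {x : ℝ} (hx : x ∈ U) :
    HasDerivAt (iteratedDeriv m χ) (iteratedDeriv (m+1) χ x) x := by
  have h1 : DifferentiableAt ℝ (iteratedDeriv m χ) x := by
    have h2 := ((contDiffOn_infty_iff_deriv_of_isOpen hU).1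
      (contDiffOn_iteratedDeriv_aux hU hχ m)).1
    exact (h2 x hx).differentiableAt (hU.mem_nhds hx)
  rw [iteratedDeriv_succ]
  exact h1.hasDerivAt

lemma pascal_sum_aux (A B : ℕ → ℝ) (n : ℕ) :
    ∑ j ∈ Finset.range (n+1),
        (n.choose j : ℝ) * (A (j+1) * B (n-j) + A j * B (n-j+1))
      = ∑ j ∈ Finset.range (n+2), ((n+1).choose j : ℝ) * (A j * B (n+1-j)) := by
  set G : ℕ → ℝ := fun j => (n.choose j : ℝ) * (A j * B (n+1-j)) with hGdef
  have hL : ∑ j ∈ Finset.range (n+1),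
        (n.choose j : ℝ) * (A (j+1) * B (n-j) + A j * B (n-j+1))
      = ∑ j ∈ Finset.range (n+1), (n.choose j : ℝ) * (A (j+1) * B (n-j))
        + ∑ j ∈ Finset.range (n+1), (n.choose j : ℝ) * (A j * B (n-j+1)) := by
    rw [← Finset.sum_add_distrib]
    exact Finset.sum_congr rfl fun j _ => by ring
  have hS2 : ∑ j ∈ Finset.range (n+1), (n.choose j : ℝ) * (A j * B (n-j+1))
      = ∑ j ∈ Finset.range (n+1), G j := by
    refine Finset.sum_congr rfl fun j hj => ?_
    have hjn : j ≤ n := Nat.lt_succ_iff.1 (Finset.mem_range.1 hj)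
    have : n + 1 - j = n - j + 1 := by omega
    rw [hGdef]; simp only []; rw [this]
  have e1 : ∑ j ∈ Finset.range (n+2), G j
      = ∑ j ∈ Finset.range (n+1), G (j+1) + G 0 := Finset.sum_range_succ' G (n+1)
  have e2 : ∑ j ∈ Finset.range (n+2), G j
      = ∑ j ∈ Finset.range (n+1), G j + G (n+1) := Finset.sum_range_succ G (n+1)
  have e3 : G (n+1) = 0 := by simp [hGdef, Nat.choose_succ_self]
  have e4 : G 0 = A 0 * B (n+1) := by simp [hGdef]
  have hGj : ∀ j, G (j+1) = (n.choose (j+1) : ℝ) * (A (j+1) * B (n-j)) := by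
    intro j
    have : n + 1 - (j+1) = n - j := by omega
    rw [hGdef]; simp only []; rw [this]
  have hR : ∑ j ∈ Finset.range (n+2), ((n+1).choose j : ℝ) * (A j * B (n+1-j))
      = ∑ j ∈ Finset.range (n+1), ((n+1).choose (j+1) : ℝ) * (A (j+1) * B (n-j))
        + A 0 * B (n+1) := by
    rw [Finset.sum_range_succ' (fun j => ((n+1).choose j : ℝ) * (A j * B (n+1-j))) (n+1)]
    congr 1
    · refine Finset.sum_congr rfl fun j _ => ?_
      have : n + 1 - (j+1) = n - j := by omega
      rw [this]
    · simp
  have hsplit : ∑ j ∈ Finset.range (n+1), ((n+1).choose (j+1) : ℝ) * (A (j+1) * B (n-j))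
      = ∑ j ∈ Finset.range (n+1), (n.choose j : ℝ) * (A (j+1) * B (n-j))
        + ∑ j ∈ Finset.range (n+1), G (j+1) := by
    rw [← Finset.sum_add_distrib]
    refine Finset.sum_congr rfl fun j _ => ?_
    rw [hGj j, Nat.choose_succ_succ]
    push_cast
    ring
  have hG1 : ∑ j ∈ Finset.range (n+1), G (j+1) + A 0 * B (n+1)
      = ∑ j ∈ Finset.range (n+1), G j := by
    rw [← e4]
    have h := e1.symm.trans e2
    linarith [h]
  rw [hL, hR, hsplit, hS2]
  linarith [hG1]

lemma leibniz_aux {U : Set ℝ} (hU : IsOpen U) {φ ψ : ℝ → ℝ}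
    (hφ : ContDiffOn ℝ (⊤ : ℕ∞) φ U) (hψ : ContDiffOn ℝ (⊤ : ℕ∞) ψ U) :
    ∀ n : ℕ, ∀ x ∈ U, iteratedDeriv n (fun y => φ y * ψ y) x
      = ∑ j ∈ Finset.range (n+1),
          (n.choose j : ℝ) * (iteratedDeriv j φ x * iteratedDeriv (n-j) ψ x) := by
  intro n
  induction n with
  | zero => intro x hx; simp [iteratedDeriv_zero]
  | succ n ih =>
    intro x hx
    have hev : iteratedDeriv n (fun y => φ y * ψ y) =ᶠ[nhds x]
        fun y => ∑ j ∈ Finset.range (n+1),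
          (n.choose j : ℝ) * (iteratedDeriv j φ y * iteratedDeriv (n-j) ψ y) := by
      filter_upwards [hU.mem_nhds hx] with y hy using ih y hy
    rw [iteratedDeriv_succ, hev.deriv_eq]
    have hsum : HasDerivAt (fun y => ∑ j ∈ Finset.range (n+1),
          (n.choose j : ℝ) * (iteratedDeriv j φ y * iteratedDeriv (n-j) ψ y))
        (∑ j ∈ Finset.range (n+1), (n.choose j : ℝ) *
          (iteratedDeriv (j+1) φ x * iteratedDeriv (n-j) ψ x
            + iteratedDeriv j φ x * iteratedDeriv (n-j+1) ψ x)) x := by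
      apply HasDerivAt.fun_sum
      intro j _
      exact ((hasDerivAt_iteratedDeriv_aux hU hφ j hx).mul
        (hasDerivAt_iteratedDeriv_aux hU hψ (n-j) hx)).const_mul _
    rw [hsum.deriv]
    exact pascal_sum_aux (fun j => iteratedDeriv j φ x) (fun j => iteratedDeriv j ψ x) n

lemma abs_sqrt_sub_one {y : ℝ} (hy : 0 ≤ y) : |Real.sqrt y - 1| ≤ |y - 1| := by
  have hs := Real.sq_sqrt hy
  have h0 := Real.sqrt_nonneg y
  have key : (Real.sqrt y - 1) * (Real.sqrt y + 1) = y - 1 := by nlinarith [hs]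
  calc |Real.sqrt y - 1| ≤ |Real.sqrt y - 1| * (Real.sqrt y + 1) :=
        le_mul_of_one_le_right (abs_nonneg _) (by linarith)
    _ = |Real.sqrt y - 1| * |Real.sqrt y + 1| := by
        rw [abs_of_nonneg (by linarith : (0:ℝ) ≤ Real.sqrt y + 1)]
    _ = |y - 1| := by rw [← abs_mul, key]

lemma sum_inv_sq_le (m : ℕ) : ∑ i ∈ Finset.range m, (1 : ℝ) / ((i : ℝ) + 2) ^ 2 ≤ 1 := by
  have key : ∀ n : ℕ, ∑ i ∈ Finset.range n, (1:ℝ)/((i:ℝ)+2)^2 ≤ 1 - 1/((n:ℝ)+1) := by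
    intro n
    induction n with
    | zero => simp
    | succ n ih =>
      rw [Finset.sum_range_succ]
      have hn1 : (0:ℝ) < (n:ℝ)+1 := by positivity
      have hn2 : (0:ℝ) < (n:ℝ)+2 := by positivity
      have h : (1:ℝ)/((n:ℝ)+2)^2 ≤ 1/((n:ℝ)+1) - 1/((n:ℝ)+2) := by
        rw [div_sub_div _ _ (ne_of_gt hn1) (ne_of_gt hn2)]
        have e : (1 * ((n:ℝ)+2) - ((n:ℝ)+1) * 1) = 1 := by ring
        rw [e]
        apply one_div_le_one_div_of_le
        · positivity
        · nlinarith
      push_cast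
      push_cast at ih
      have e3 : (1:ℝ)/((n:ℝ)+1+1) = 1/((n:ℝ)+2) := by rw [show (n:ℝ)+1+1 = (n:ℝ)+2 by ring]
      rw [e3]
      linarith
  have h1 := key m
  have h2 : (0:ℝ) ≤ 1/((m:ℝ)+1) := by positivity
  linarith

lemma choose_factorial_rpow_le {s : ℝ} (hs : 1 ≤ s) (j l : ℕ) :
    ((j+l).choose j : ℝ) * ((j.factorial : ℝ) ^ s * ((l.factorial : ℝ)) ^ s)
      ≤ (((j+l).factorial : ℝ)) ^ s := by
  have hch : (j+l).choose j * (j.factorial * l.factorial) = (j+l).factorial := by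
    have h := Nat.choose_mul_factorial_mul_factorial (Nat.le_add_right j l)
    have e : j + l - j = l := by omega
    rw [e] at h
    rw [← h]; ring
  have hchR : ((j+l).factorial : ℝ)
      = ((j+l).choose j : ℝ) * ((j.factorial : ℝ) * (l.factorial : ℝ)) := by
    exact_mod_cast (congrArg (fun n : ℕ => (n : ℝ)) hch).symm
  have hC1 : (1:ℝ) ≤ ((j+l).choose j : ℝ) := by
    exact_mod_cast Nat.succ_le_of_lt (Nat.choose_pos (Nat.le_add_right j l))
  rw [hchR, Real.mul_rpow (by positivity) (by positivity),
    Real.mul_rpow (by positivity) (by positivity)]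
  have h1 : ((j+l).choose j : ℝ) ≤ ((j+l).choose j : ℝ) ^ s := by
    calc ((j+l).choose j : ℝ) = ((j+l).choose j : ℝ) ^ (1:ℝ) := (Real.rpow_one _).symm
      _ ≤ ((j+l).choose j : ℝ) ^ s := Real.rpow_le_rpow_of_exponent_le hC1 hs
  exact mul_le_mul_of_nonneg_right h1 (by positivity)

/-- The weight sequence. -/
def gevreyB (s K : ℝ) (k : ℕ) : ℝ :=
  3 / (4 * π ^ 2) * (K ^ k * ((k.factorial : ℝ)) ^ s / (1 + (k : ℝ)) ^ 2)

lemma gevreyB_pos {s K : ℝ} (hK : 0 < K) (k : ℕ) : 0 < gevreyB s K k := by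
  have h1 : (0:ℝ) < (k.factorial : ℝ) := by exact_mod_cast k.factorial_pos
  have hπ := Real.pi_pos
  unfold gevreyB
  have h2 : (0:ℝ) < K ^ k * ((k.factorial : ℝ)) ^ s :=
    mul_pos (pow_pos hK k) (Real.rpow_pos_of_pos h1 s)
  positivity

lemma per_term_bound {s K : ℝ} (hs1 : 1 ≤ s) (hK : 0 < K) (j l : ℕ) :
    ((j+l).choose j : ℝ) * (gevreyB s K j * gevreyB s K l)
      ≤ 3 / (4 * π ^ 2) * gevreyB s K (j+l)
          * (2 * (1 / (1 + (j:ℝ)) ^ 2 + 1 / (1 + (l:ℝ)) ^ 2)) := by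
  have hπ := Real.pi_pos
  have hfj : (0:ℝ) < (j.factorial : ℝ) := by exact_mod_cast j.factorial_pos
  have hfl : (0:ℝ) < (l.factorial : ℝ) := by exact_mod_cast l.factorial_pos
  have hfjl : (0:ℝ) < ((j+l).factorial : ℝ) := by exact_mod_cast (j+l).factorial_pos
  set P : ℝ := 3 / (4 * π ^ 2) with hP
  have hPpos : 0 < P := by rw [hP]; positivity
  set C : ℝ := ((j+l).choose j : ℝ) with hC
  set Dj : ℝ := K ^ j * ((j.factorial : ℝ)) ^ s with hDj
  set Dl : ℝ := K ^ l * ((l.factorial : ℝ)) ^ s with hDl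
  set Djl : ℝ := K ^ (j+l) * (((j+l).factorial : ℝ)) ^ s with hDjl
  set Qj : ℝ := (1 + (j:ℝ)) ^ 2 with hQj
  set Ql : ℝ := (1 + (l:ℝ)) ^ 2 with hQl
  set Qjl : ℝ := (1 + ((j+l : ℕ):ℝ)) ^ 2 with hQjl
  have hQjpos : 0 < Qj := by rw [hQj]; positivity
  have hQlpos : 0 < Ql := by rw [hQl]; positivity
  have hQjlpos : 0 < Qjl := by rw [hQjl]; positivity
  have hDjlnn : 0 ≤ Djl := le_of_lt (mul_pos (pow_pos hK _) (Real.rpow_pos_of_pos hfjl s))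
  have hDnum : C * (Dj * Dl) ≤ Djl := by
    have h := choose_factorial_rpow_le hs1 j l
    calc C * (Dj * Dl)
        = K ^ (j+l) * (C * ((j.factorial : ℝ) ^ s * ((l.factorial : ℝ)) ^ s)) := by
          rw [hDj, hDl, pow_add]; ring
      _ ≤ K ^ (j+l) * (((j+l).factorial : ℝ)) ^ s := by
          exact mul_le_mul_of_nonneg_left h (by positivity)
      _ = Djl := rfl
  have hQ : Qjl ≤ 2 * (Qj + Ql) := by
    rw [hQjl, hQj, hQl]
    push_cast
    nlinarith [sq_nonneg ((j:ℝ) - (l:ℝ)), Nat.cast_nonneg (α := ℝ) j, Nat.cast_nonneg (α := ℝ) l]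
  have step1 : C * (gevreyB s K j * gevreyB s K l) = P ^ 2 * ((C * (Dj * Dl)) / (Qj * Ql)) := by
    unfold gevreyB
    rw [hP, hDj, hDl, hQj, hQl]
    field_simp
  have step2 : P ^ 2 * ((C * (Dj * Dl)) / (Qj * Ql)) ≤ P ^ 2 * (Djl / (Qj * Ql)) := by
    gcongr
  have h3 : 1 / (Qj * Ql) ≤ 2 * (1/Qj + 1/Ql) / Qjl := by
    rw [div_le_div_iff₀ (by positivity) hQjlpos]
    have e : 2 * (1/Qj + 1/Ql) * (Qj * Ql) = 2 * (Ql + Qj) := by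
      field_simp
    calc 1 * Qjl = Qjl := one_mul _
      _ ≤ 2 * (Ql + Qj) := by linarith
      _ = 2 * (1/Qj + 1/Ql) * (Qj * Ql) := e.symm
  have step3 : P ^ 2 * (Djl / (Qj * Ql)) ≤ P * gevreyB s K (j+l) * (2 * (1/Qj + 1/Ql)) := by
    calc P ^ 2 * (Djl / (Qj * Ql)) = (P ^ 2 * Djl) * (1 / (Qj * Ql)) := by ring
      _ ≤ (P ^ 2 * Djl) * (2 * (1/Qj + 1/Ql) / Qjl) := by
          exact mul_le_mul_of_nonneg_left h3 (by positivity)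
      _ = P * gevreyB s K (j+l) * (2 * (1/Qj + 1/Ql)) := by
          unfold gevreyB
          rw [hP, hDjl, hQjl]
          field_simp
  calc C * (gevreyB s K j * gevreyB s K l) = P ^ 2 * ((C * (Dj * Dl)) / (Qj * Ql)) := step1
    _ ≤ P ^ 2 * (Djl / (Qj * Ql)) := step2
    _ ≤ P * gevreyB s K (j+l) * (2 * (1/Qj + 1/Ql)) := step3

lemma gevrey_alg1 (p2 Q T F Kk : ℝ) (hp2 : p2 ≠ 0) (hQ : Q ≠ 0) (hT : T ≠ 0) (hF : F ≠ 0) :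
    4 * p2 / 3 * (Q / (T * F)) * (3 / (4 * p2) * (Kk * F / Q)) = Kk / T := by
  field_simp

set_option maxHeartbeats 2000000 in
/-- **Gevrey bound for the square root** (Proposition 2.3 (4)).
For `s > 2` there is `ε₀ = ε₀(s) > 0` such that for all `0 < ε ≤ ε₀` and all smooth `f`
with `|f − 1|_{s,K} ≤ ε`, one has `|√f − 1|_{s,(1+ε^{1/(s+16)})K} ≤ ε^{1/12}`. -/
theorem gevrey_norm_sqrt (s K : ℝ) (hs : 2 < s) (hK : 0 < K)
    (I : Set ℝ) (hI : IntervalOrCircle I) :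
    ∃ ε₀ > (0 : ℝ), ∀ ε : ℝ, 0 < ε → ε ≤ ε₀ →
      ∀ f : ℝ → ℝ, ContDiff ℝ (⊤ : ℕ∞) f → (I = Set.univ → Function.Periodic f (2 * π)) →
        gevreyNormOn s K I (fun x => f x - 1) ≤ ENNReal.ofReal ε →
        gevreyNormOn s ((1 + ε ^ (1 / (s + 16))) * K) I (fun x => Real.sqrt (f x) - 1) ≤
          ENNReal.ofReal (ε ^ ((1 : ℝ) / 12)) := by
  refine ⟨1, one_pos, ?_⟩
  intro ε hε hε1 f hf _hper Hnorm
  have hπ := Real.pi_pos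
  have hπ2 : (9:ℝ) < π ^ 2 := by nlinarith [Real.pi_gt_three]
  have hs1 : (1:ℝ) ≤ s := by linarith
  set b : ℕ → ℝ := gevreyB s K with hbdef
  have hbpos : ∀ k, 0 < b k := fun k => gevreyB_pos hK k
  set P : ℝ := 3 / (4 * π ^ 2) with hPdef
  have hPpos : 0 < P := by rw [hPdef]; positivity
  have hP12 : P ≤ 1/12 := by
    rw [hPdef, div_le_div_iff₀ (by positivity) (by norm_num)]
    nlinarith
  have hcpos : ∀ k : ℕ,
      (0:ℝ) < 4 * π ^ 2 / 3 * ((1 + (k : ℝ)) ^ 2 / (K ^ k * ((k.factorial : ℝ)) ^ s)) := by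
    intro k
    have h1 : (0:ℝ) < (k.factorial : ℝ) := by exact_mod_cast k.factorial_pos
    have h2 : (0:ℝ) < K ^ k * ((k.factorial : ℝ)) ^ s :=
      mul_pos (pow_pos hK k) (Real.rpow_pos_of_pos h1 s)
    exact mul_pos (by positivity) (div_pos (by positivity) h2)
  have hcb : ∀ k : ℕ,
      4 * π ^ 2 / 3 * ((1 + (k : ℝ)) ^ 2 / (K ^ k * ((k.factorial : ℝ)) ^ s)) * b k = 1 := by
    intro k
    have h1 : (0:ℝ) < (k.factorial : ℝ) := by exact_mod_cast k.factorial_pos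
    have h2 : (0:ℝ) < K ^ k * ((k.factorial : ℝ)) ^ s :=
      mul_pos (pow_pos hK k) (Real.rpow_pos_of_pos h1 s)
    have h3 : (0:ℝ) < (1 + (k:ℝ))^2 := by positivity
    rw [hbdef]
    unfold gevreyB
    field_simp
  simp only [gevreyNormOn] at Hnorm
  have Hk : ∀ k : ℕ, ∀ x ∈ I, |iteratedDeriv k (fun y => f y - 1) x| ≤ ε * b k := by
    intro k x hx
    have h1 : ENNReal.ofReal
          (4 * π ^ 2 / 3 * ((1 + (k : ℝ)) ^ 2 / (K ^ k * ((k.factorial : ℝ)) ^ s)))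
        * ENNReal.ofReal |iteratedDeriv k (fun y => f y - 1) x| ≤ ENNReal.ofReal ε := by
      refine le_trans ?_ (le_trans (le_iSup _ k) Hnorm)
      exact mul_le_mul_right (le_iSup₂ (f := fun (x : ℝ) (_ : x ∈ I) =>
        ENNReal.ofReal |iteratedDeriv k (fun y => f y - 1) x|) x hx) _
    rw [← ENNReal.ofReal_mul (hcpos k).le] at h1
    have h2 := (ENNReal.ofReal_le_ofReal_iff hε.le).1 h1
    calc |iteratedDeriv k (fun y => f y - 1) x|
        = (4 * π ^ 2 / 3 * ((1 + (k : ℝ)) ^ 2 / (K ^ k * ((k.factorial : ℝ)) ^ s)) * b k)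
          * |iteratedDeriv k (fun y => f y - 1) x| := by rw [hcb k, one_mul]
      _ = b k * (4 * π ^ 2 / 3 * ((1 + (k : ℝ)) ^ 2 / (K ^ k * ((k.factorial : ℝ)) ^ s))
          * |iteratedDeriv k (fun y => f y - 1) x|) := by ring
      _ ≤ b k * ε := mul_le_mul_of_nonneg_left h2 (hbpos k).le
      _ = ε * b k := mul_comm _ _
  have hb0 : b 0 = P := by
    rw [hbdef, hPdef]
    unfold gevreyB
    norm_num [Real.one_rpow]
  have hsmall : ∀ x ∈ I, |f x - 1| ≤ ε * P := by
    intro x hx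
    have h := Hk 0 x hx
    rw [iteratedDeriv_zero, hb0] at h
    exact h
  have hεP : ε * P ≤ 1/12 := by nlinarith [hPpos]
  have hfge : ∀ x ∈ I, 11/12 ≤ f x := by
    intro x hx
    have h1 := (abs_le.1 (le_trans (hsmall x hx) hεP)).1
    linarith
  set U : Set ℝ := {y | 0 < f y} with hUdef
  have hUopen : IsOpen U := isOpen_lt continuous_const hf.continuous
  have hIU : ∀ x ∈ I, x ∈ U := by
    intro x hx
    have := hfge x hx
    show (0:ℝ) < f x
    linarith
  set g : ℝ → ℝ := fun y => Real.sqrt (f y) with hgdef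
  have hgU : ContDiffOn ℝ (⊤ : ℕ∞) g U := by
    intro x hx
    have hfx : f x ≠ 0 := ne_of_gt hx
    exact ((Real.contDiffAt_sqrt hfx).comp x (hf.contDiffAt.of_le (by simp))).contDiffWithinAt
  have hgg : ∀ x ∈ U, ∀ n : ℕ, iteratedDeriv n f x
      = ∑ j ∈ Finset.range (n+1),
          (n.choose j : ℝ) * (iteratedDeriv j g x * iteratedDeriv (n-j) g x) := by
    intro x hx n
    have hev : f =ᶠ[nhds x] fun y => g y * g y := by
      filter_upwards [hUopen.mem_nhds hx] with y hy
      exact (Real.mul_self_sqrt (le_of_lt hy)).symm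
    rw [iteratedDeriv_congr_nhds hev n]
    exact leibniz_aux hUopen hgU hgU n x hx
  have hglb : ∀ x ∈ I, 9/10 ≤ g x := by
    intro x hx
    have h1 : Real.sqrt (81/100) ≤ Real.sqrt (f x) :=
      Real.sqrt_le_sqrt (by linarith [hfge x hx])
    have h2 : Real.sqrt (81/100) = 9/10 := by
      rw [show (81:ℝ)/100 = (9/10)^2 by norm_num, Real.sqrt_sq (by norm_num)]
    rw [h2] at h1
    exact h1
  have hcomb : ∀ m : ℕ,
      ∑ i ∈ Finset.range m, (((m+1).choose (i+1) : ℝ)) * (b (i+1) * b (m-i))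
        ≤ b (m+1) / 3 := by
    intro m
    have hstep : ∀ i ∈ Finset.range m, ((m+1).choose (i+1) : ℝ) * (b (i+1) * b (m-i))
        ≤ P * b (m+1) * (2 * (1/(1+((i+1:ℕ):ℝ))^2 + 1/(1+((m-i:ℕ):ℝ))^2)) := by
      intro i hi
      have hi' : i < m := Finset.mem_range.1 hi
      have e : (i+1) + (m-i) = m+1 := by omega
      have h := per_term_bound hs1 hK (i+1) (m-i)
      rw [e] at h
      exact h
    have hB : ∑ i ∈ Finset.range m, (1:ℝ)/(1+((m-i:ℕ):ℝ))^2 ≤ 1 := by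
      have hrefl := Finset.sum_range_reflect (fun i => (1:ℝ)/(((i:ℝ))+2)^2) m
      have he : ∀ i ∈ Finset.range m,
          (1:ℝ)/(1+((m-i:ℕ):ℝ))^2 = (1:ℝ)/((((m-1-i : ℕ)):ℝ)+2)^2 := by
        intro i hi
        have hi' : i < m := Finset.mem_range.1 hi
        have e : (m - i) = (m-1-i) + 1 := by omega
        rw [e]
        push_cast
        ring_nf
      rw [Finset.sum_congr rfl he, hrefl]
      exact sum_inv_sq_le m
    have hA := sum_inv_sq_le m
    have hPb : (0:ℝ) ≤ P * b (m+1) * 2 :=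
      mul_nonneg (mul_nonneg hPpos.le (hbpos (m+1)).le) (by norm_num)
    calc ∑ i ∈ Finset.range m, ((m+1).choose (i+1) : ℝ) * (b (i+1) * b (m-i))
        ≤ ∑ i ∈ Finset.range m,
            P * b (m+1) * (2 * (1/(1+((i+1:ℕ):ℝ))^2 + 1/(1+((m-i:ℕ):ℝ))^2)) :=
          Finset.sum_le_sum hstep
      _ = (P * b (m+1) * 2) * (∑ i ∈ Finset.range m, ((1:ℝ)/(((i:ℝ))+2)^2)
            + ∑ i ∈ Finset.range m, ((1:ℝ)/(1+((m-i:ℕ):ℝ))^2)) := by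
          rw [← Finset.sum_add_distrib, Finset.mul_sum]
          refine Finset.sum_congr rfl fun i _ => ?_
          have e : (1+((i+1:ℕ):ℝ)) = ((i:ℝ)+2) := by push_cast; ring
          rw [e]
          ring
      _ ≤ (P * b (m+1) * 2) * (1 + 1) :=
          mul_le_mul_of_nonneg_left (by linarith) hPb
      _ ≤ b (m+1) / 3 := by nlinarith [hbpos (m+1)]
  have main : ∀ k : ℕ, ∀ x ∈ I, |iteratedDeriv k g x - (if k = 0 then 1 else 0)| ≤ ε * b k := by
    intro k
    induction k using Nat.strong_induction_on with
    | _ k IH =>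
      cases k with
      | zero =>
        intro x hxI
        simp only [if_pos, iteratedDeriv_zero]
        rw [hb0]
        calc |g x - 1| ≤ |f x - 1| := abs_sqrt_sub_one (by linarith [hfge x hxI])
          _ ≤ ε * P := hsmall x hxI
      | succ m =>
        intro x hxI
        have hxU : x ∈ U := hIU x hxI
        have hL := hgg x hxU (m+1)
        have hsplit : iteratedDeriv (m+1) f x
            = (∑ i ∈ Finset.range m, ((m+1).choose (i+1) : ℝ)
                * (iteratedDeriv (i+1) g x * iteratedDeriv (m-i) g x))
              + 2 * (g x * iteratedDeriv (m+1) g x) := by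
          rw [hL, Finset.sum_range_succ, Finset.sum_range_succ']
          simp only [Nat.choose_self, Nat.choose_zero_right, Nat.sub_self, Nat.cast_one,
            iteratedDeriv_zero, Nat.succ_sub_succ, Nat.sub_zero]
          ring
        have hgx : 9/10 ≤ g x := hglb x hxI
        have hDf : |iteratedDeriv (m+1) f x| ≤ ε * b (m+1) := by
          have h := Hk (m+1) x hxI
          rwa [iteratedDeriv_sub_const'] at h
        have hSb : |∑ i ∈ Finset.range m, ((m+1).choose (i+1) : ℝ)
              * (iteratedDeriv (i+1) g x * iteratedDeriv (m-i) g x)| ≤ ε * (b (m+1) / 3) := by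
          have habs : |∑ i ∈ Finset.range m, ((m+1).choose (i+1) : ℝ)
                * (iteratedDeriv (i+1) g x * iteratedDeriv (m-i) g x)|
              ≤ ∑ i ∈ Finset.range m, ((m+1).choose (i+1) : ℝ)
                * ((ε * b (i+1)) * (ε * b (m-i))) := by
            refine le_trans (Finset.abs_sum_le_sum_abs _ _) (Finset.sum_le_sum ?_)
            intro i hi
            have hi' : i < m := Finset.mem_range.1 hi
            have h1 : |iteratedDeriv (i+1) g x| ≤ ε * b (i+1) := by
              have h := IH (i+1) (by omega) x hxI
              simpa using h
            have h2 : |iteratedDeriv (m-i) g x| ≤ ε * b (m-i) := by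
              have h := IH (m-i) (by omega) x hxI
              have hne : m - i ≠ 0 := by omega
              simpa [hne] using h
            rw [abs_mul, abs_mul, Nat.abs_cast]
            refine mul_le_mul_of_nonneg_left ?_ (Nat.cast_nonneg _)
            exact mul_le_mul h1 h2 (abs_nonneg _)
              (mul_nonneg hε.le (hbpos (i+1)).le)
          have h4 : ∑ i ∈ Finset.range m, ((m+1).choose (i+1) : ℝ)
                * ((ε * b (i+1)) * (ε * b (m-i)))
              = ε^2 * ∑ i ∈ Finset.range m, ((m+1).choose (i+1) : ℝ) * (b (i+1) * b (m-i)) := by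
            rw [Finset.mul_sum]
            exact Finset.sum_congr rfl fun i _ => by ring
          have h5 := hcomb m
          calc |∑ i ∈ Finset.range m, ((m+1).choose (i+1) : ℝ)
                * (iteratedDeriv (i+1) g x * iteratedDeriv (m-i) g x)|
              ≤ ∑ i ∈ Finset.range m, ((m+1).choose (i+1) : ℝ)
                * ((ε * b (i+1)) * (ε * b (m-i))) := habs
            _ = ε^2 * ∑ i ∈ Finset.range m, ((m+1).choose (i+1) : ℝ) * (b (i+1) * b (m-i)) := h4
            _ ≤ ε^2 * (b (m+1) / 3) := mul_le_mul_of_nonneg_left h5 (by positivity)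
            _ ≤ ε * (b (m+1) / 3) := by
                nlinarith [mul_nonneg (mul_nonneg hε.le (sub_nonneg.2 hε1)) (hbpos (m+1)).le]
        have h2g : iteratedDeriv (m+1) g x
            = (iteratedDeriv (m+1) f x - ∑ i ∈ Finset.range m, ((m+1).choose (i+1) : ℝ)
                * (iteratedDeriv (i+1) g x * iteratedDeriv (m-i) g x)) / (2 * g x) := by
          have hgne : (2:ℝ) * g x ≠ 0 := ne_of_gt (by linarith)
          rw [eq_div_iff hgne]
          linarith [hsplit]
        have hne : ¬ (m + 1 = 0) := Nat.succ_ne_zero m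
        simp only [if_neg hne, sub_zero]
        rw [h2g, abs_div, abs_of_pos (by linarith : (0:ℝ) < 2 * g x)]
        have hnum : |iteratedDeriv (m+1) f x - ∑ i ∈ Finset.range m, ((m+1).choose (i+1) : ℝ)
              * (iteratedDeriv (i+1) g x * iteratedDeriv (m-i) g x)|
            ≤ ε * b (m+1) + ε * (b (m+1)/3) := by
          refine le_trans ?_ (add_le_add hDf hSb)
          rw [sub_eq_add_neg]
          refine le_trans (abs_add_le _ _) ?_
          rw [abs_neg]
        have hd1 : (0:ℝ) < 9/5 := by norm_num
        have hd2 : (9:ℝ)/5 ≤ 2 * g x := by linarith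
        calc |iteratedDeriv (m+1) f x - ∑ i ∈ Finset.range m, ((m+1).choose (i+1) : ℝ)
              * (iteratedDeriv (i+1) g x * iteratedDeriv (m-i) g x)| / (2 * g x)
            ≤ (ε * b (m+1) + ε * (b (m+1)/3)) / (9/5) := by
              refine div_le_div₀ ?_ hnum hd1 hd2
              nlinarith [hbpos (m+1)]
          _ ≤ ε * b (m+1) := by
              rw [div_le_iff₀ hd1]
              nlinarith [hbpos (m+1)]
  have ht : (0:ℝ) ≤ ε ^ (1/(s+16)) := Real.rpow_nonneg hε.le _
  have hK'pos : (0:ℝ) < (1 + ε ^ (1/(s+16))) * K := mul_pos (by linarith) hK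
  have hKK' : K ≤ (1 + ε ^ (1/(s+16))) * K := by nlinarith
  have hfinal : ∀ k : ℕ, ∀ x ∈ I,
      |iteratedDeriv k (fun y => Real.sqrt (f y) - 1) x| ≤ ε * b k := by
    intro k x hx
    cases k with
    | zero =>
      rw [iteratedDeriv_zero]
      have h := main 0 x hx
      simpa using h
    | succ m =>
      rw [iteratedDeriv_sub_const']
      have h := main (m+1) x hx
      simpa using h
  simp only [gevreyNormOn]
  refine iSup_le fun k => ?_
  rw [ENNReal.mul_iSup]
  refine iSup_le fun x => ?_
  rw [ENNReal.mul_iSup]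
  refine iSup_le fun hx => ?_
  have hfk : (0:ℝ) < (k.factorial : ℝ) := by exact_mod_cast k.factorial_pos
  have hden : (0:ℝ) < ((1 + ε ^ (1/(s+16))) * K) ^ k * ((k.factorial : ℝ)) ^ s :=
    mul_pos (pow_pos hK'pos k) (Real.rpow_pos_of_pos hfk s)
  have hc'nn : (0:ℝ) ≤ 4 * π ^ 2 / 3 * ((1 + (k : ℝ)) ^ 2
      / (((1 + ε ^ (1/(s+16))) * K) ^ k * ((k.factorial : ℝ)) ^ s)) :=
    le_of_lt (mul_pos (by positivity) (div_pos (by positivity) hden))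
  rw [← ENNReal.ofReal_mul hc'nn]
  refine ENNReal.ofReal_le_ofReal ?_
  have h1 := hfinal k x hx
  have hcb' : 4 * π ^ 2 / 3 * ((1 + (k : ℝ)) ^ 2
        / (((1 + ε ^ (1/(s+16))) * K) ^ k * ((k.factorial : ℝ)) ^ s)) * b k
      = K ^ k / ((1 + ε ^ (1/(s+16))) * K) ^ k := by
    rw [hbdef]
    unfold gevreyB
    have h3 : ((1:ℝ) + (k:ℝ))^2 ≠ 0 := by positivity
    exact gevrey_alg1 (π^2) ((1+(k:ℝ))^2) (((1 + ε ^ (1/(s+16))) * K) ^ k)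
      (((k.factorial : ℝ)) ^ s) (K^k) (by positivity) h3
      (ne_of_gt (pow_pos hK'pos k)) (ne_of_gt (Real.rpow_pos_of_pos hfk s))
  calc 4 * π ^ 2 / 3 * ((1 + (k : ℝ)) ^ 2
        / (((1 + ε ^ (1/(s+16))) * K) ^ k * ((k.factorial : ℝ)) ^ s))
        * |iteratedDeriv k (fun y => Real.sqrt (f y) - 1) x|
      ≤ 4 * π ^ 2 / 3 * ((1 + (k : ℝ)) ^ 2
        / (((1 + ε ^ (1/(s+16))) * K) ^ k * ((k.factorial : ℝ)) ^ s)) * (ε * b k) :=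
        mul_le_mul_of_nonneg_left h1 hc'nn
    _ = ε * (4 * π ^ 2 / 3 * ((1 + (k : ℝ)) ^ 2
        / (((1 + ε ^ (1/(s+16))) * K) ^ k * ((k.factorial : ℝ)) ^ s)) * b k) := by ring
    _ = ε * (K ^ k / ((1 + ε ^ (1/(s+16))) * K) ^ k) := by rw [hcb']
    _ ≤ ε * 1 := mul_le_mul_of_nonneg_left
        ((div_le_one (pow_pos hK'pos k)).2 (pow_le_pow_left₀ hK.le hKK' k)) hε.le
    _ = ε := mul_one ε
    _ ≤ ε ^ ((1:ℝ)/12) := by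
        calc ε = ε ^ (1:ℝ) := (Real.rpow_one ε).symm
          _ ≤ ε ^ ((1:ℝ)/12) := Real.rpow_le_rpow_of_exponent_ge hε hε1 (by norm_num)

end
end

section
/- Let s > 2 and K > 0, and let I be a compact interval or the circle 𝕊¹. There exists ε₀ = ε₀(s) > 0 such that for every 0 < ε ≤ ε₀ and every f ∈ C^∞(I) with |f|_{s,K} ≤ ε: the composition arcsin ∘ f lies in G^{s,4K}(I), and |sin ∘ f|_{s,(1+ε^{1/(s+8)})K} ≤ ε^{1/12} and |cos ∘ f − 1|_{s,(1+ε^{1/(s+8)})K} ≤ ε^{1/12}. -/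
open Real
open scoped ENNReal

noncomputable section

lemma gnac_choose_middle_le : ∀ (n j : ℕ), 1 ≤ j → j < n → n ≤ n.choose j := by
  intro n
  induction n with
  | zero => intro j h1 h2; omega
  | succ n IH =>
    intro j h1 h2
    rcases eq_or_lt_of_le (Nat.lt_succ_iff.mp h2) with rfl | hjn
    · rw [Nat.choose_succ_self_right]
    · obtain ⟨k, rfl⟩ := Nat.exists_eq_add_of_le h1
      have hre : 1 + k = k + 1 := by omega
      rw [hre] at hjn ⊢
      rw [Nat.choose_succ_succ]
      have h3 : 1 ≤ n.choose k := Nat.choose_pos (by omega)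
      simp only [Nat.succ_eq_add_one]
      rcases Nat.lt_or_ge (k + 1) n with h | h
      · have := IH (k + 1) (by omega) h
        omega
      · have hkn : k + 1 = n := by omega
        subst hkn
        simp [Nat.choose_self]

lemma gnac_aux_sum {s : ℝ} (hs : 2 ≤ s) (n : ℕ) :
    ∑ j ∈ Finset.range (n + 1),
      (n.choose j : ℝ) * ((j.factorial : ℝ) ^ s * (((n - j).factorial : ℝ)) ^ s) ≤
      4 * (n.factorial : ℝ) ^ s := by
  rcases Nat.eq_zero_or_pos n with rfl | hn
  · simp [Real.one_rpow]
  have hfact : (0:ℝ) < (n.factorial : ℝ) ^ s :=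
    Real.rpow_pos_of_pos (by exact_mod_cast n.factorial_pos) s
  have hn1 : (1:ℝ) ≤ (n:ℝ) := by exact_mod_cast hn
  have hterm : ∀ j ∈ Finset.range (n + 1),
      (n.choose j : ℝ) * ((j.factorial : ℝ) ^ s * (((n - j).factorial : ℝ)) ^ s) ≤
      (n.factorial : ℝ) ^ s *
        ((if j = 0 then (1:ℝ) else 0) + (if j = n then (1:ℝ) else 0) + (n:ℝ) ^ ((1:ℝ) - s)) := by
    intro j hj
    have hjn : j ≤ n := Finset.mem_range_succ_iff.mp hj
    have hA : (0:ℝ) < ((j.factorial * (n - j).factorial : ℕ) : ℝ) := by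
      have := Nat.mul_pos j.factorial_pos (n - j).factorial_pos
      exact_mod_cast this
    have hmul : (j.factorial : ℝ) ^ s * (((n - j).factorial : ℝ)) ^ s
        = ((j.factorial * (n - j).factorial : ℕ) : ℝ) ^ s := by
      rw [← Real.mul_rpow (by positivity) (by positivity)]
      push_cast; ring_nf
    have hCA : (n.choose j : ℝ) * ((j.factorial * (n - j).factorial : ℕ) : ℝ)
        = (n.factorial : ℝ) := by
      have := Nat.choose_mul_factorial_mul_factorial hjn
      push_cast [← this]; ring
    have hsplit : ((j.factorial * (n - j).factorial : ℕ) : ℝ) ^ s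
        = ((j.factorial * (n - j).factorial : ℕ) : ℝ) *
          ((j.factorial * (n - j).factorial : ℕ) : ℝ) ^ (s - 1) := by
      rw [show s = 1 + (s - 1) by ring, Real.rpow_add hA, Real.rpow_one]
      ring_nf
    have hfsplit : (n.factorial : ℝ) ^ s
        = (n.factorial : ℝ) * (n.factorial : ℝ) ^ (s - 1) := by
      have hf : (0:ℝ) < (n.factorial : ℝ) := by exact_mod_cast n.factorial_pos
      rw [show s = 1 + (s - 1) by ring, Real.rpow_add hf, Real.rpow_one]
      ring_nf
    rw [hmul, hsplit, ← mul_assoc, hCA]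
    rcases eq_or_ne j 0 with rfl | hj0
    · simp only [if_pos rfl]
      have : ((Nat.factorial 0 * (n - 0).factorial : ℕ) : ℝ) ^ (s - 1)
          = (n.factorial : ℝ) ^ (s - 1) := by norm_num
      rw [this, ← hfsplit]
      have hb : (1:ℝ) ≤ (1 + if 0 = n then (1:ℝ) else 0) + (n:ℝ) ^ ((1:ℝ) - s) := by
        have h0 : (0:ℝ) ≤ if 0 = n then (1:ℝ) else 0 := by split <;> norm_num
        have h1 := Real.rpow_nonneg (le_trans zero_le_one hn1) ((1:ℝ) - s)
        linarith
      calc (n.factorial:ℝ) ^ s = (n.factorial:ℝ) ^ s * 1 := by ring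
        _ ≤ _ := by exact mul_le_mul_of_nonneg_left hb (le_of_lt hfact)
    rcases eq_or_ne j n with rfl | hjn'
    · simp only [if_pos rfl]
      have : ((j.factorial * (j - j).factorial : ℕ) : ℝ) ^ (s - 1)
          = (j.factorial : ℝ) ^ (s - 1) := by norm_num
      rw [this, ← hfsplit]
      have hb : (1:ℝ) ≤ ((if j = 0 then (1:ℝ) else 0) + 1) + (j:ℝ) ^ ((1:ℝ) - s) := by
        have h0 : (0:ℝ) ≤ if j = 0 then (1:ℝ) else 0 := by split <;> norm_num
        have h1 := Real.rpow_nonneg (le_trans zero_le_one hn1) ((1:ℝ) - s)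
        linarith
      calc (j.factorial:ℝ) ^ s = (j.factorial:ℝ) ^ s * 1 := by ring
        _ ≤ _ := by exact mul_le_mul_of_nonneg_left hb (le_of_lt hfact)
    -- middle case
    simp only [if_neg hj0, if_neg hjn']
    have hchoose : (n:ℝ) ≤ (n.choose j : ℝ) := by
      exact_mod_cast gnac_choose_middle_le n j (Nat.one_le_iff_ne_zero.mpr hj0)
        (lt_of_le_of_ne hjn hjn')
    have hAle : ((j.factorial * (n - j).factorial : ℕ) : ℝ) ≤ (n.factorial : ℝ) / n := by
      rw [le_div_iff₀ (by linarith)]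
      calc ((j.factorial * (n - j).factorial : ℕ) : ℝ) * n
          ≤ ((j.factorial * (n - j).factorial : ℕ) : ℝ) * (n.choose j : ℝ) := by
            exact mul_le_mul_of_nonneg_left hchoose (le_of_lt hA)
        _ = (n.factorial : ℝ) := by rw [mul_comm]; exact hCA
    have hApow : ((j.factorial * (n - j).factorial : ℕ) : ℝ) ^ (s - 1)
        ≤ ((n.factorial : ℝ) / n) ^ (s - 1) :=
      Real.rpow_le_rpow (le_of_lt hA) hAle (by linarith)
    have hdiv : ((n.factorial : ℝ) / n) ^ (s - 1)
        = (n.factorial : ℝ) ^ (s - 1) * (n:ℝ) ^ ((1:ℝ) - s) := by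
      have hf : (0:ℝ) < (n.factorial : ℝ) := by exact_mod_cast n.factorial_pos
      rw [Real.div_rpow (le_of_lt hf) (by linarith), show (1:ℝ) - s = -(s-1) by ring,
        Real.rpow_neg (by linarith), div_eq_mul_inv]
    have hfpos : (0:ℝ) < (n.factorial : ℝ) := by exact_mod_cast n.factorial_pos
    calc (n.factorial : ℝ) * ((j.factorial * (n - j).factorial : ℕ) : ℝ) ^ (s - 1)
        ≤ (n.factorial : ℝ) * (((n.factorial : ℝ) / n) ^ (s - 1)) :=
          mul_le_mul_of_nonneg_left hApow (le_of_lt hfpos)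
      _ = (n.factorial : ℝ) ^ s * ((0:ℝ) + 0 + (n:ℝ) ^ ((1:ℝ) - s)) := by
          rw [hdiv, hfsplit]; ring
      _ ≤ (n.factorial : ℝ) ^ s * ((0:ℝ) + 0 + (n:ℝ) ^ ((1:ℝ) - s)) := le_refl _
  calc ∑ j ∈ Finset.range (n + 1),
        (n.choose j : ℝ) * ((j.factorial : ℝ) ^ s * (((n - j).factorial : ℝ)) ^ s)
      ≤ ∑ j ∈ Finset.range (n + 1), (n.factorial : ℝ) ^ s *
        ((if j = 0 then (1:ℝ) else 0) + (if j = n then (1:ℝ) else 0) + (n:ℝ) ^ ((1:ℝ) - s)) :=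
        Finset.sum_le_sum hterm
    _ = (n.factorial : ℝ) ^ s *
        (1 + 1 + (n + 1) * (n:ℝ) ^ ((1:ℝ) - s)) := by
        rw [← Finset.mul_sum]
        congr 1
        rw [Finset.sum_add_distrib, Finset.sum_add_distrib]
        rw [Finset.sum_ite_eq' (Finset.range (n+1)) 0 (fun _ => (1:ℝ)),
          Finset.sum_ite_eq' (Finset.range (n+1)) n (fun _ => (1:ℝ))]
        simp [Finset.mem_range, Nat.lt_succ_iff, hn, Finset.card_range]
    _ ≤ (n.factorial : ℝ) ^ s * (1 + 1 + 2) := by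
        have hpow : (n:ℝ) ^ ((1:ℝ) - s) ≤ (n:ℝ) ^ (-1 : ℝ) :=
          Real.rpow_le_rpow_of_exponent_le hn1 (by linarith)
        have hinv : (n:ℝ) ^ (-1 : ℝ) = ((n:ℝ))⁻¹ := Real.rpow_neg_one _
        have h2 : ((n:ℝ) + 1) * (n:ℝ) ^ ((1:ℝ) - s) ≤ 2 := by
          calc ((n:ℝ) + 1) * (n:ℝ) ^ ((1:ℝ) - s) ≤ ((n:ℝ) + 1) * ((n:ℝ))⁻¹ := by
                refine mul_le_mul_of_nonneg_left ?_ (by linarith)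
                rw [← hinv]; exact hpow
            _ ≤ 2 := by
                rw [mul_inv_le_iff₀ (by linarith)]
                linarith
        have h4 : (1:ℝ) + 1 + ((n:ℝ)+1) * (n:ℝ) ^ ((1:ℝ) - s) ≤ 1 + 1 + 2 := by linarith
        have h5 : ((n:ℕ):ℝ) + 1 = ((n+1 : ℕ) : ℝ) := by push_cast; ring
        refine mul_le_mul_of_nonneg_left ?_ (le_of_lt hfact)
        push_cast
        linarith
    _ = 4 * (n.factorial : ℝ) ^ s := by ring

lemma gnac_iDW_eq {U : Set ℝ} (hU : IsOpen U) (φ : ℝ → ℝ) (k : ℕ) {x : ℝ} (hx : x ∈ U) :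
    iteratedDerivWithin k φ U x = iteratedDeriv k φ x := by
  rw [iteratedDerivWithin_eq_iteratedFDerivWithin, iteratedDeriv_eq_iteratedFDeriv,
    iteratedFDerivWithin_of_isOpen k hU hx]

lemma gnac_abs_iDW {U : Set ℝ} (φ : ℝ → ℝ) (k : ℕ) (x : ℝ) :
    ‖iteratedFDerivWithin ℝ k φ U x‖ = |iteratedDerivWithin k φ U x| := by
  rw [norm_iteratedFDerivWithin_eq_norm_iteratedDerivWithin, Real.norm_eq_abs]

lemma gnac_mul_bound {s : ℝ} (hs : 2 ≤ s) {U : Set ℝ} (hU : IsOpen U) {x : ℝ} (hx : x ∈ U)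
    {φ ψ : ℝ → ℝ} (hφ : ContDiffOn ℝ ((⊤ : ℕ∞) : WithTop ℕ∞) φ U)
    (hψ : ContDiffOn ℝ ((⊤ : ℕ∞) : WithTop ℕ∞) ψ U)
    {C₁ C₂ R : ℝ} (hC₁ : 0 ≤ C₁) (hC₂ : 0 ≤ C₂) (hR : 0 ≤ R) {n : ℕ}
    (h1 : ∀ j ≤ n, |iteratedDerivWithin j φ U x| ≤ C₁ * R ^ j * (j.factorial : ℝ) ^ s)
    (h2 : ∀ j ≤ n, |iteratedDerivWithin j ψ U x| ≤ C₂ * R ^ j * (j.factorial : ℝ) ^ s) :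
    |iteratedDerivWithin n (fun y => φ y * ψ y) U x| ≤
      4 * (C₁ * C₂) * R ^ n * (n.factorial : ℝ) ^ s := by
  have hle : |iteratedDerivWithin n (fun y => φ y * ψ y) U x| ≤
      ∑ j ∈ Finset.range (n + 1), (n.choose j : ℝ) *
        |iteratedDerivWithin j φ U x| * |iteratedDerivWithin (n - j) ψ U x| := by
    rw [← gnac_abs_iDW]
    refine le_trans (norm_iteratedFDerivWithin_mul_le hφ hψ hU.uniqueDiffOn hx ?_) ?_
    · exact_mod_cast le_top
    · refine le_of_eq (Finset.sum_congr rfl fun j hj => ?_)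
      rw [gnac_abs_iDW, gnac_abs_iDW]
  refine le_trans hle ?_
  have hstep : ∀ j ∈ Finset.range (n + 1),
      (n.choose j : ℝ) * |iteratedDerivWithin j φ U x| * |iteratedDerivWithin (n - j) ψ U x| ≤
      (C₁ * C₂ * R ^ n) *
        ((n.choose j : ℝ) * ((j.factorial : ℝ) ^ s * (((n - j).factorial : ℝ)) ^ s)) := by
    intro j hj
    have hjn : j ≤ n := Finset.mem_range_succ_iff.mp hj
    have e1 := h1 j hjn
    have e2 := h2 (n - j) (Nat.sub_le n j)
    have hpow : R ^ j * R ^ (n - j) = R ^ n := by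
      rw [← pow_add, Nat.add_sub_cancel' hjn]
    calc (n.choose j : ℝ) * |iteratedDerivWithin j φ U x| * |iteratedDerivWithin (n - j) ψ U x|
        ≤ (n.choose j : ℝ) * (C₁ * R ^ j * (j.factorial : ℝ) ^ s) *
          (C₂ * R ^ (n - j) * (((n - j).factorial : ℝ)) ^ s) := by
          have hc : (0:ℝ) ≤ (n.choose j : ℝ) := by positivity
          have b1 : (0:ℝ) ≤ |iteratedDerivWithin j φ U x| := abs_nonneg _
          have b2 : (0:ℝ) ≤ |iteratedDerivWithin (n - j) ψ U x| := abs_nonneg _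
          have h1' : (0:ℝ) ≤ C₁ * R ^ j * (j.factorial : ℝ) ^ s := le_trans b1 e1
          exact mul_le_mul (mul_le_mul_of_nonneg_left e1 hc) e2 b2 (by positivity)
      _ = (C₁ * C₂ * (R ^ j * R ^ (n - j))) *
          ((n.choose j : ℝ) * ((j.factorial : ℝ) ^ s * (((n - j).factorial : ℝ)) ^ s)) := by ring
      _ = _ := by rw [hpow]
  calc ∑ j ∈ Finset.range (n + 1), (n.choose j : ℝ) *
        |iteratedDerivWithin j φ U x| * |iteratedDerivWithin (n - j) ψ U x|
      ≤ ∑ j ∈ Finset.range (n + 1), (C₁ * C₂ * R ^ n) *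
        ((n.choose j : ℝ) * ((j.factorial : ℝ) ^ s * (((n - j).factorial : ℝ)) ^ s)) :=
        Finset.sum_le_sum hstep
    _ = (C₁ * C₂ * R ^ n) * ∑ j ∈ Finset.range (n + 1),
        ((n.choose j : ℝ) * ((j.factorial : ℝ) ^ s * (((n - j).factorial : ℝ)) ^ s)) := by
        rw [Finset.mul_sum]
    _ ≤ (C₁ * C₂ * R ^ n) * (4 * (n.factorial : ℝ) ^ s) := by
        refine mul_le_mul_of_nonneg_left (by exact gnac_aux_sum hs n) (by positivity)
    _ = 4 * (C₁ * C₂) * R ^ n * (n.factorial : ℝ) ^ s := by ring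
lemma gnac_mul_deriv_bound {s : ℝ} (hs : 2 ≤ s) {U : Set ℝ} (hU : IsOpen U) {x : ℝ} (hx : x ∈ U)
    {φ : ℝ → ℝ} (hφ : ContDiffOn ℝ ((⊤ : ℕ∞) : WithTop ℕ∞) φ U)
    {f : ℝ → ℝ} (hf : ContDiff ℝ ((⊤ : ℕ∞) : WithTop ℕ∞) f)
    {Cφ Cf KK R : ℝ} (hCφ : 0 ≤ Cφ) (hCf : 0 ≤ Cf) (hKK : 0 ≤ KK) (hKR : KK ≤ R) {n : ℕ}
    (h1 : ∀ j ≤ n, |iteratedDerivWithin j φ U x| ≤ Cφ * R ^ j * (j.factorial : ℝ) ^ s)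
    (h2 : ∀ j, j ≤ n + 1 → |iteratedDeriv j f x| ≤ Cf * KK ^ j * (j.factorial : ℝ) ^ s) :
    |iteratedDerivWithin n (fun y => φ y * deriv f y) U x| ≤
      4 * (Cφ * Cf) * R ^ (n + 1) * ((n + 1).factorial : ℝ) ^ s := by
  have hR : 0 ≤ R := le_trans hKK hKR
  have hf' : ContDiffOn ℝ ((⊤ : ℕ∞) : WithTop ℕ∞) (deriv f) U :=
    ((contDiff_infty_iff_deriv.mp hf).2).contDiffOn
  have hle : |iteratedDerivWithin n (fun y => φ y * deriv f y) U x| ≤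
      ∑ j ∈ Finset.range (n + 1), (n.choose j : ℝ) *
        |iteratedDerivWithin j φ U x| * |iteratedDerivWithin (n - j) (deriv f) U x| := by
    rw [← gnac_abs_iDW]
    refine le_trans (norm_iteratedFDerivWithin_mul_le hφ hf' hU.uniqueDiffOn hx ?_) ?_
    · exact_mod_cast le_top
    · refine le_of_eq (Finset.sum_congr rfl fun j hj => ?_)
      rw [gnac_abs_iDW, gnac_abs_iDW]
  refine le_trans hle ?_
  have hderiv : ∀ m, m ≤ n → |iteratedDerivWithin m (deriv f) U x| ≤
      Cf * KK ^ (m + 1) * ((m + 1).factorial : ℝ) ^ s := by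
    intro m hm
    rw [gnac_iDW_eq hU _ m hx]
    have : iteratedDeriv m (deriv f) x = iteratedDeriv (m + 1) f x := by
      rw [iteratedDeriv_succ']
    rw [this]
    exact h2 (m + 1) (by omega)
  have hstep : ∀ j ∈ Finset.range (n + 1),
      (n.choose j : ℝ) * |iteratedDerivWithin j φ U x| *
        |iteratedDerivWithin (n - j) (deriv f) U x| ≤
      (Cφ * Cf * R ^ (n + 1)) * (((n + 1).choose j : ℝ) *
        ((j.factorial : ℝ) ^ s * ((((n + 1) - j).factorial : ℝ)) ^ s)) := by
    intro j hj
    have hjn : j ≤ n := Finset.mem_range_succ_iff.mp hj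
    have e1 := h1 j hjn
    have e2 := hderiv (n - j) (Nat.sub_le n j)
    have hsub : (n - j) + 1 = (n + 1) - j := by omega
    have hKKle : KK ^ ((n - j) + 1) ≤ R ^ ((n - j) + 1) := pow_le_pow_left₀ hKK hKR _
    have hpow : R ^ j * R ^ ((n - j) + 1) = R ^ (n + 1) := by
      rw [← pow_add]; congr 1; omega
    have hchle : (n.choose j : ℝ) ≤ ((n + 1).choose j : ℝ) := by
      exact_mod_cast Nat.choose_le_choose j (Nat.le_succ n)
    have hfs : (0:ℝ) ≤ ((j.factorial : ℝ)) ^ s := by positivity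
    have hfs2 : (0:ℝ) ≤ ((((n - j) + 1).factorial : ℝ)) ^ s := by positivity
    calc (n.choose j : ℝ) * |iteratedDerivWithin j φ U x| *
          |iteratedDerivWithin (n - j) (deriv f) U x|
        ≤ (n.choose j : ℝ) * (Cφ * R ^ j * (j.factorial : ℝ) ^ s) *
          (Cf * KK ^ ((n - j) + 1) * ((((n - j) + 1).factorial : ℝ)) ^ s) := by
          have hc : (0:ℝ) ≤ (n.choose j : ℝ) := by positivity
          exact mul_le_mul (mul_le_mul_of_nonneg_left e1 hc) e2 (abs_nonneg _)
            (by positivity)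
      _ ≤ ((n + 1).choose j : ℝ) * (Cφ * R ^ j * (j.factorial : ℝ) ^ s) *
          (Cf * R ^ ((n - j) + 1) * ((((n - j) + 1).factorial : ℝ)) ^ s) := by
          have t1 : (0:ℝ) ≤ Cφ * R ^ j * (j.factorial : ℝ) ^ s := by positivity
          have t2 : Cf * KK ^ ((n - j) + 1) * ((((n - j) + 1).factorial : ℝ)) ^ s ≤
              Cf * R ^ ((n - j) + 1) * ((((n - j) + 1).factorial : ℝ)) ^ s := by
            exact mul_le_mul_of_nonneg_right (mul_le_mul_of_nonneg_left hKKle hCf) hfs2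
          have t3 : (0:ℝ) ≤ Cf * KK ^ ((n - j) + 1) * ((((n - j) + 1).factorial : ℝ)) ^ s := by
            positivity
          exact mul_le_mul (mul_le_mul_of_nonneg_right hchle t1) t2 t3 (by positivity)
      _ = (Cφ * Cf * (R ^ j * R ^ ((n - j) + 1))) * (((n + 1).choose j : ℝ) *
          ((j.factorial : ℝ) ^ s * ((((n - j) + 1).factorial : ℝ)) ^ s)) := by ring
      _ = _ := by rw [hpow, hsub]
  calc ∑ j ∈ Finset.range (n + 1), (n.choose j : ℝ) *
        |iteratedDerivWithin j φ U x| * |iteratedDerivWithin (n - j) (deriv f) U x|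
      ≤ ∑ j ∈ Finset.range (n + 1), (Cφ * Cf * R ^ (n + 1)) * (((n + 1).choose j : ℝ) *
        ((j.factorial : ℝ) ^ s * ((((n + 1) - j).factorial : ℝ)) ^ s)) :=
        Finset.sum_le_sum hstep
    _ ≤ ∑ j ∈ Finset.range (n + 2), (Cφ * Cf * R ^ (n + 1)) * (((n + 1).choose j : ℝ) *
        ((j.factorial : ℝ) ^ s * ((((n + 1) - j).factorial : ℝ)) ^ s)) := by
        refine Finset.sum_le_sum_of_subset_of_nonneg ?_ ?_
        · exact Finset.range_subset_range.mpr (by omega)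
        · intro j _ _; positivity
    _ = (Cφ * Cf * R ^ (n + 1)) * ∑ j ∈ Finset.range ((n + 1) + 1), (((n + 1).choose j : ℝ) *
        ((j.factorial : ℝ) ^ s * ((((n + 1) - j).factorial : ℝ)) ^ s)) := by
        rw [Finset.mul_sum]
    _ ≤ (Cφ * Cf * R ^ (n + 1)) * (4 * (((n + 1).factorial : ℝ)) ^ s) :=
        mul_le_mul_of_nonneg_left (gnac_aux_sum hs (n + 1)) (by positivity)
    _ = 4 * (Cφ * Cf) * R ^ (n + 1) * ((n + 1).factorial : ℝ) ^ s := by ring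
lemma gnac_coeff_nonneg {K' : ℝ} (hK' : 0 ≤ K') (s : ℝ) (k : ℕ) :
    0 ≤ 4 * π ^ 2 / 3 * ((1 + (k : ℝ)) ^ 2 / (K' ^ k * ((k.factorial : ℝ)) ^ s)) := by
  have h1 : (0:ℝ) ≤ K' ^ k := pow_nonneg hK' k
  have h2 : (0:ℝ) ≤ ((k.factorial : ℝ)) ^ s := Real.rpow_nonneg (Nat.cast_nonneg _) s
  apply mul_nonneg (by positivity)
  exact div_nonneg (by positivity) (mul_nonneg h1 h2)

lemma gnac_gevrey_le (s K' : ℝ) (hK' : 0 ≤ K') (I : Set ℝ) (G : ℝ → ℝ) (m : ℕ → ℝ) (t : ℝ)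
    (hb : ∀ k : ℕ, ∀ x ∈ I, |iteratedDeriv k G x| ≤ m k)
    (hc : ∀ k : ℕ, 4 * π ^ 2 / 3 * ((1 + (k : ℝ)) ^ 2 / (K' ^ k * ((k.factorial : ℝ)) ^ s))
      * m k ≤ t) :
    gevreyNormOn s K' I G ≤ ENNReal.ofReal t := by
  refine iSup_le fun k => ?_
  have hsup : (⨆ x ∈ I, ENNReal.ofReal |iteratedDeriv k G x|) ≤ ENNReal.ofReal (m k) := by
    refine iSup₂_le fun x hx => ?_
    exact ENNReal.ofReal_le_ofReal (hb k x hx)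
  calc ENNReal.ofReal (4 * π ^ 2 / 3 * ((1 + (k : ℝ)) ^ 2 / (K' ^ k * ((k.factorial : ℝ)) ^ s))) *
        (⨆ x ∈ I, ENNReal.ofReal |iteratedDeriv k G x|)
      ≤ ENNReal.ofReal (4 * π ^ 2 / 3 *
          ((1 + (k : ℝ)) ^ 2 / (K' ^ k * ((k.factorial : ℝ)) ^ s))) * ENNReal.ofReal (m k) :=
        mul_le_mul_right hsup _
    _ = ENNReal.ofReal (4 * π ^ 2 / 3 *
          ((1 + (k : ℝ)) ^ 2 / (K' ^ k * ((k.factorial : ℝ)) ^ s)) * m k) :=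
        (ENNReal.ofReal_mul (gnac_coeff_nonneg hK' s k)).symm
    _ ≤ ENNReal.ofReal t := ENNReal.ofReal_le_ofReal (hc k)

lemma gnac_extract {s K : ℝ} (hK : 0 < K) {I : Set ℝ} {f : ℝ → ℝ} {ε : ℝ} (hε : 0 ≤ ε)
    (h : gevreyNormOn s K I f ≤ ENNReal.ofReal ε) :
    ∀ k : ℕ, ∀ x ∈ I, |iteratedDeriv k f x| ≤ ε * (3 / (4 * π ^ 2)) * K ^ k
      * ((k.factorial : ℝ)) ^ s := by
  intro k x hx
  set c := 4 * π ^ 2 / 3 * ((1 + (k : ℝ)) ^ 2 / (K ^ k * ((k.factorial : ℝ)) ^ s)) with hc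
  have hfp : (0:ℝ) < (k.factorial : ℝ) ^ s :=
    Real.rpow_pos_of_pos (by exact_mod_cast k.factorial_pos) s
  have hKp : (0:ℝ) < K ^ k := pow_pos hK k
  have hπ : (0:ℝ) < π ^ 2 := by positivity
  have hcpos : 0 < c := by
    rw [hc]; positivity
  have h1 : ENNReal.ofReal c * ENNReal.ofReal |iteratedDeriv k f x| ≤ ENNReal.ofReal ε := by
    refine le_trans ?_ (le_trans (le_iSup _ k) h)
    exact mul_le_mul_right (le_biSup (fun y => ENNReal.ofReal |iteratedDeriv k f y|) hx) _
  have h2 : c * |iteratedDeriv k f x| ≤ ε := by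
    rw [← ENNReal.ofReal_mul (le_of_lt hcpos)] at h1
    exact (ENNReal.ofReal_le_ofReal_iff hε).mp h1
  have h3 : |iteratedDeriv k f x| ≤ ε / c := (le_div_iff₀' hcpos).mpr h2
  refine le_trans h3 ?_
  rw [hc, div_le_iff₀ hcpos]
  have hsq : (1:ℝ) ≤ (1 + (k:ℝ)) ^ 2 := by nlinarith [Nat.cast_nonneg (α := ℝ) k]
  have key : ε * (3 / (4 * π ^ 2)) * K ^ k * (k.factorial : ℝ) ^ s *
      (4 * π ^ 2 / 3 * ((1 + (k : ℝ)) ^ 2 / (K ^ k * ((k.factorial : ℝ)) ^ s)))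
      = ε * (1 + (k:ℝ)) ^ 2 := by
    field_simp
  rw [key]
  nlinarith [hε]

lemma gnac_two_pow : ∀ k : ℕ, (1 + (k:ℝ))^2 ≤ 3 * 2^k := by
  intro k
  induction k with
  | zero => norm_num
  | succ n ih =>
    rcases Nat.lt_or_ge n 2 with h | h
    · interval_cases n <;> norm_num
    · have hn2 : (2:ℝ) ≤ (n:ℝ) := by exact_mod_cast h
      push_cast at ih ⊢
      have h2 : (0:ℝ) ≤ 2 := by norm_num
      calc (1+((n:ℝ)+1))^2 ≤ 2*(1+(n:ℝ))^2 := by nlinarith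
        _ ≤ 2*(3*2^n) := by linarith
        _ = 3*2^(n+1) := by ring

set_option maxHeartbeats 1000000 in
lemma gnac_key {s ε : ℝ} (hs : 2 < s) (hε : 0 < ε) (hε' : ε ≤ 4096⁻¹) (k : ℕ) :
    4 * ε * (1 + (k:ℝ)) ^ 2 ≤ ε ^ ((1:ℝ)/12) * (1 + ε ^ (1/(s+8))) ^ k := by
  have hε1 : ε ≤ 1 := by nlinarith
  have hs8 : (0:ℝ) < s + 8 := by linarith
  set δ := ε ^ (1/(s+8)) with hδ
  have hδpos : 0 < δ := Real.rpow_pos_of_pos hε _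
  have hδ1 : δ ≤ 1 := Real.rpow_le_one hε.le hε1 (by positivity)
  have hεp : (0:ℝ) < ε ^ ((1:ℝ)/12) := Real.rpow_pos_of_pos hε _
  -- the key smallness estimate: 64 ε ≤ ε^{1/12} δ²
  have hkey : 64 * ε ≤ ε ^ ((1:ℝ)/12) * δ ^ 2 := by
    have hδ2 : δ ^ 2 = ε ^ ((1/(s+8)) * 2) := by
      rw [hδ, Real.rpow_mul hε.le, ← Real.rpow_natCast (ε ^ (1/(s+8))) 2]
      norm_num
    have hcomb : ε ^ ((1:ℝ)/12) * δ ^ 2 = ε ^ ((1:ℝ)/12 + (1/(s+8)) * 2) := by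
      rw [hδ2, ← Real.rpow_add hε]
    rw [hcomb]
    have hsplit : ε = ε ^ ((1:ℝ)/12 + (1/(s+8)) * 2) *
        ε ^ (1 - ((1:ℝ)/12 + (1/(s+8)) * 2)) := by
      have hsum : (1:ℝ)/12 + (1/(s+8))*2 + (1 - ((1:ℝ)/12 + (1/(s+8))*2)) = 1 := by ring
      rw [← Real.rpow_add hε, hsum, Real.rpow_one]
    have hb : (1:ℝ)/2 ≤ 1 - ((1:ℝ)/12 + (1/(s+8)) * 2) := by
      have : 1/(s+8) ≤ 1/10 := by
        rw [div_le_div_iff₀ hs8 (by norm_num)]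
        linarith
      linarith
    have h64 : 64 * ε ^ (1 - ((1:ℝ)/12 + (1/(s+8)) * 2)) ≤ 1 := by
      have h1 : ε ^ (1 - ((1:ℝ)/12 + (1/(s+8)) * 2)) ≤ ε ^ ((1:ℝ)/2) :=
        Real.rpow_le_rpow_of_exponent_ge hε hε1 hb
      have h2 : ε ^ ((1:ℝ)/2) ≤ ((4096:ℝ)⁻¹) ^ ((1:ℝ)/2) :=
        Real.rpow_le_rpow hε.le hε' (by norm_num)
      have h3 : ((4096:ℝ)⁻¹) ^ ((1:ℝ)/2) = (64:ℝ)⁻¹ := by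
        rw [show ((4096:ℝ)⁻¹) = ((64:ℝ)⁻¹) ^ (2:ℕ) by norm_num,
          ← Real.rpow_natCast (((64:ℝ))⁻¹) 2, ← Real.rpow_mul (by norm_num)]
        norm_num
      rw [h3] at h2
      nlinarith [le_trans h1 h2]
    have hpp : (0:ℝ) < ε ^ ((1:ℝ)/12 + (1/(s+8)) * 2) := Real.rpow_pos_of_pos hε _
    calc 64 * ε = ε ^ ((1:ℝ)/12 + (1/(s+8)) * 2) *
          (64 * ε ^ (1 - ((1:ℝ)/12 + (1/(s+8)) * 2))) := by
          conv_lhs => rw [hsplit]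
          ring
      _ ≤ ε ^ ((1:ℝ)/12 + (1/(s+8)) * 2) * 1 :=
          mul_le_mul_of_nonneg_left h64 hpp.le
      _ = ε ^ ((1:ℝ)/12 + (1/(s+8)) * 2) := by ring
  have hone : (1:ℝ) ≤ (1 + δ) ^ k := one_le_pow₀ (by linarith)
  rcases Nat.eq_zero_or_pos k with rfl | hk
  · simp only [Nat.cast_zero, pow_zero, mul_one]
    have hd2 : δ ^ 2 ≤ 1 := by nlinarith
    have : ε ^ ((1:ℝ)/12) * δ ^ 2 ≤ ε ^ ((1:ℝ)/12) := by nlinarith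
    norm_num
    nlinarith
  · have hk1 : (1:ℝ) ≤ (k:ℝ) := by exact_mod_cast hk
    have h2k : 4 * ε * (1 + (k:ℝ))^2 ≤ 16 * ε * (k:ℝ)^2 := by
      have hq : (1+(k:ℝ))^2 ≤ 4*(k:ℝ)^2 := by nlinarith
      have h4 : (0:ℝ) ≤ 4*ε := by linarith
      nlinarith
    refine le_trans h2k ?_
    rcases le_or_gt ((k:ℝ)^2 * δ^2) 4 with hc | hc
    · have hk2 : (k:ℝ)^2 ≤ 4/δ^2 := by
        rw [le_div_iff₀ (by positivity)]; linarith
      have h1 : 16 * ε * (k:ℝ)^2 ≤ 16 * ε * (4/δ^2) := by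
        have : (0:ℝ) ≤ 16 * ε := by linarith
        exact mul_le_mul_of_nonneg_left hk2 this
      have h2 : 16 * ε * (4/δ^2) ≤ ε ^ ((1:ℝ)/12) := by
        rw [show 16 * ε * (4/δ^2) = 64*ε/δ^2 by ring, div_le_iff₀ (by positivity)]
        exact hkey
      refine le_trans h1 (le_trans h2 ?_)
      exact le_mul_of_one_le_right hεp.le hone
    · have hδ2 : δ^2 ≤ 1 := by nlinarith
      have hk2 : 2 ≤ k := by
        rcases Nat.lt_or_ge k 2 with hlt | hge
        · exfalso
          have hk1' : k = 1 := by omega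
          subst hk1'
          have hcc : ((1:ℕ):ℝ)^2 * δ^2 ≤ 1 := by
            rw [Nat.cast_one]; nlinarith
          linarith
        · exact hge
      -- binomial lower bound (1+δ)^k ≥ C(k,2) δ²
      have hbin : ((k.choose 2 : ℕ) : ℝ) * δ^2 ≤ (1 + δ)^k := by
        have hexp : (δ + 1)^k = ∑ i ∈ Finset.range (k+1), δ^i * 1^(k-i) * (k.choose i : ℝ) :=
          add_pow δ 1 k
        have hmem : 2 ∈ Finset.range (k+1) := Finset.mem_range.mpr (by omega)
        have hterm : ∀ i ∈ Finset.range (k+1), (0:ℝ) ≤ δ^i * 1^(k-i) * (k.choose i : ℝ) := by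
          intro i _; positivity
        have := Finset.single_le_sum hterm hmem
        rw [← hexp] at this
        calc ((k.choose 2 : ℕ) : ℝ) * δ^2 = δ^2 * 1^(k-2) * (k.choose 2 : ℝ) := by ring
          _ ≤ (δ + 1)^k := this
          _ = (1 + δ)^k := by ring_nf
      have hch : (k:ℝ)^2 / 4 ≤ ((k.choose 2 : ℕ) : ℝ) := by
        rw [Nat.cast_choose_two]
        have : (2:ℝ) ≤ (k:ℝ) := by exact_mod_cast hk2
        nlinarith
      have hchain : 16 * ε * (k:ℝ)^2 ≤ ε ^ ((1:ℝ)/12) * (((k:ℝ)^2/4) * δ^2) := by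
        have h64 : 64 * ε * ((k:ℝ)^2/4) ≤ ε ^ ((1:ℝ)/12) * δ^2 * ((k:ℝ)^2/4) := by
          have : (0:ℝ) ≤ (k:ℝ)^2/4 := by positivity
          exact mul_le_mul_of_nonneg_right hkey this
        nlinarith
      refine le_trans hchain ?_
      have : ((k:ℝ)^2/4) * δ^2 ≤ (1 + δ)^k := by
        refine le_trans ?_ hbin
        exact mul_le_mul_of_nonneg_right hch (by positivity)
      exact mul_le_mul_of_nonneg_left this hεp.le

set_option maxHeartbeats 2000000 in
/-- **Gevrey bounds for `arcsin`, `sin` and `cos` of a small Gevrey function**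
(Proposition 2.3 (5)).  For `s > 2` there is `ε₀ = ε₀(s) > 0` such that for all
`0 < ε ≤ ε₀` and all smooth `f` with `|f|_{s,K} ≤ ε`: `arcsin ∘ f ∈ G^{s,4K}(I)`, and
`|sin ∘ f|_{s,(1+ε^{1/(s+8)})K} ≤ ε^{1/12}`, `|cos ∘ f − 1|_{s,(1+ε^{1/(s+8)})K} ≤ ε^{1/12}`. -/
theorem gevrey_norm_arcsin_sin_cos (s K : ℝ) (hs : 2 < s) (hK : 0 < K)
    (I : Set ℝ) (hI : IntervalOrCircle I) :
    ∃ ε₀ > (0 : ℝ), ∀ ε : ℝ, 0 < ε → ε ≤ ε₀ →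
      ∀ f : ℝ → ℝ, ContDiff ℝ (⊤ : ℕ∞) f → (I = Set.univ → Function.Periodic f (2 * π)) →
        gevreyNormOn s K I f ≤ ENNReal.ofReal ε →
        gevreyNormOn s (4 * K) I (fun x => Real.arcsin (f x)) < ⊤ ∧
        gevreyNormOn s ((1 + ε ^ (1 / (s + 8))) * K) I (fun x => Real.sin (f x)) ≤
          ENNReal.ofReal (ε ^ ((1 : ℝ) / 12)) ∧
        gevreyNormOn s ((1 + ε ^ (1 / (s + 8))) * K) I (fun x => Real.cos (f x) - 1) ≤
          ENNReal.ofReal (ε ^ ((1 : ℝ) / 12)) := by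
  clear hI
  refine ⟨(4096 : ℝ)⁻¹, by norm_num, ?_⟩
  intro ε hε hεle f hf _ hnorm
  have hs2 : (2:ℝ) ≤ s := le_of_lt hs
  have hπ : (0:ℝ) < π := Real.pi_pos
  have hπ3 : (3:ℝ) < π := Real.pi_gt_three
  have hε1 : ε ≤ 1 := le_trans hεle (by norm_num)
  -- the basic smallness constant
  set A : ℝ := ε * (3 / (4 * π ^ 2)) with hAdef
  have hA0 : 0 < A := by rw [hAdef]; positivity
  have hAε : A ≤ ε := by
    rw [hAdef]
    have : 3 / (4 * π ^ 2) ≤ 1 := by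
      rw [div_le_one (by positivity)]
      nlinarith
    nlinarith
  have hAsmall : A ≤ (4096:ℝ)⁻¹ := le_trans hAε hεle
  have hA1 : A ≤ 1 := le_trans hAsmall (by norm_num)
  -- smoothness bookkeeping
  have hfi : ContDiff ℝ ((⊤ : ℕ∞) : WithTop ℕ∞) f := hf.of_le (by simp)
  have hfd : ∀ y : ℝ, HasDerivAt f (deriv f y) y := fun y =>
    ((hf.differentiable (by simp)) y).hasDerivAt
  -- extraction of the derivative bounds of f on I
  have hM : ∀ k : ℕ, ∀ x ∈ I, |iteratedDeriv k f x| ≤ A * K ^ k * ((k.factorial : ℝ)) ^ s := by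
    intro k x hx
    have := gnac_extract hK (le_of_lt hε) hnorm k x hx
    calc |iteratedDeriv k f x| ≤ ε * (3 / (4 * π ^ 2)) * K ^ k * ((k.factorial : ℝ)) ^ s := this
      _ = A * K ^ k * ((k.factorial : ℝ)) ^ s := by rw [hAdef]
  have hf0 : ∀ x ∈ I, |f x| ≤ A := by
    intro x hx
    have := hM 0 x hx
    simpa [Real.one_rpow] using this
  -- the open neighbourhood U of I where |f| < 1/2
  set U : Set ℝ := f ⁻¹' Set.Ioo (-(2⁻¹ : ℝ)) 2⁻¹ with hUdef
  have hUo : IsOpen U := isOpen_Ioo.preimage hf.continuous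
  have hIU : ∀ x ∈ I, x ∈ U := by
    intro x hx
    have h1 : |f x| ≤ A := hf0 x hx
    have h2 : |f x| < 2⁻¹ := lt_of_le_of_lt h1 (lt_of_le_of_lt hAsmall (by norm_num))
    rw [hUdef]
    simp only [Set.mem_preimage, Set.mem_Ioo]
    constructor <;> [linarith [neg_abs_le (f x)]; linarith [le_abs_self (f x)]]
  have hUf : ∀ y ∈ U, |f y| < 2⁻¹ := by
    intro y hy
    rw [hUdef] at hy
    simp only [Set.mem_preimage, Set.mem_Ioo] at hy
    rw [abs_lt]; exact ⟨hy.1, hy.2⟩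
  have hUt : ∀ y ∈ U, (2⁻¹ : ℝ) ≤ 1 - f y ^ 2 := by
    intro y hy
    have h := hUf y hy
    have : f y ^ 2 < 4⁻¹ := by
      have := abs_nonneg (f y)
      nlinarith [sq_abs (f y)]
    linarith
  have hUtpos : ∀ y ∈ U, (0:ℝ) < 1 - f y ^ 2 := fun y hy => lt_of_lt_of_le (by norm_num) (hUt y hy)
  have hUs : ∀ y ∈ U, (2⁻¹ : ℝ) ≤ Real.sqrt (1 - f y ^ 2) := by
    intro y hy
    have h1 : Real.sqrt ((2⁻¹:ℝ)^2) ≤ Real.sqrt (1 - f y ^ 2) := by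
      apply Real.sqrt_le_sqrt
      have := hUt y hy
      nlinarith
    rwa [Real.sqrt_sq (by norm_num : (0:ℝ) ≤ 2⁻¹)] at h1
  have hUspos : ∀ y ∈ U, (0:ℝ) < Real.sqrt (1 - f y ^ 2) := fun y hy =>
    lt_of_lt_of_le (by norm_num) (hUs y hy)
  ---------------------------------------------------------------------------
  -- PART 1 : sin and cos
  ---------------------------------------------------------------------------
  have hgi : ContDiff ℝ ((⊤ : ℕ∞) : WithTop ℕ∞) (fun y => Real.sin (f y)) :=
    Real.contDiff_sin.comp hfi
  have hhi : ContDiff ℝ ((⊤ : ℕ∞) : WithTop ℕ∞) (fun y => Real.cos (f y)) :=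
    Real.contDiff_cos.comp hfi
  have hgneg : ContDiff ℝ ((⊤ : ℕ∞) : WithTop ℕ∞) (fun y => -Real.sin (f y)) := hgi.neg
  have hGder : deriv (fun y => Real.sin (f y)) = fun y => Real.cos (f y) * deriv f y :=
    funext fun y => ((hfd y).sin).deriv
  have hHder : deriv (fun y => Real.cos (f y)) = fun y => -Real.sin (f y) * deriv f y :=
    funext fun y => ((hfd y).cos).deriv
  -- the simultaneous bound for the derivatives of sin∘f and cos∘f
  have hGle : ∀ j : ℕ, (if j = 0 then (1:ℝ) else 4 * A * K ^ j * ((j.factorial : ℝ)) ^ s)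
      ≤ 1 * K ^ j * ((j.factorial : ℝ)) ^ s := by
    intro j
    rcases eq_or_ne j 0 with rfl | hj
    · simp [Real.one_rpow]
    · rw [if_neg hj]
      have h4A : 4 * A ≤ 1 := by nlinarith
      have : (0:ℝ) ≤ K ^ j * ((j.factorial : ℝ)) ^ s := by
        have := Real.rpow_nonneg (Nat.cast_nonneg (j.factorial)) s
        positivity
      nlinarith
  have hGH : ∀ k : ℕ, ∀ x ∈ I,
      |iteratedDeriv k (fun y => Real.sin (f y)) x| ≤
        (if k = 0 then (1:ℝ) else 4 * A * K ^ k * ((k.factorial : ℝ)) ^ s) ∧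
      |iteratedDeriv k (fun y => Real.cos (f y)) x| ≤
        (if k = 0 then (1:ℝ) else 4 * A * K ^ k * ((k.factorial : ℝ)) ^ s) := by
    intro k
    induction k using Nat.strong_induction_on with
    | _ k IH =>
      intro x hx
      match k with
      | 0 =>
        constructor
        · simp only [iteratedDeriv_zero, if_pos rfl]
          exact abs_le.mpr ⟨Real.neg_one_le_sin _, Real.sin_le_one _⟩
        · simp only [iteratedDeriv_zero, if_pos rfl]
          exact abs_le.mpr ⟨Real.neg_one_le_cos _, Real.cos_le_one _⟩
      | Nat.succ m =>
        have hbφ : ∀ j ≤ m, |iteratedDerivWithin j (fun y => Real.cos (f y)) Set.univ x| ≤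
            1 * K ^ j * ((j.factorial : ℝ)) ^ s := by
          intro j hj
          rw [iteratedDerivWithin_univ]
          exact le_trans ((IH j (by omega) x hx).2) (hGle j)
        have hbψ : ∀ j ≤ m, |iteratedDerivWithin j (fun y => -Real.sin (f y)) Set.univ x| ≤
            1 * K ^ j * ((j.factorial : ℝ)) ^ s := by
          intro j hj
          rw [iteratedDerivWithin_univ, iteratedDeriv_fun_neg, abs_neg]
          exact le_trans ((IH j (by omega) x hx).1) (hGle j)
        have hbf : ∀ j, j ≤ m + 1 → |iteratedDeriv j f x| ≤
            A * K ^ j * ((j.factorial : ℝ)) ^ s := fun j _ => hM j x hx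
        constructor
        · have h1 : iteratedDeriv (m+1) (fun y => Real.sin (f y)) x =
              iteratedDerivWithin m (fun y => Real.cos (f y) * deriv f y) Set.univ x := by
            rw [iteratedDeriv_succ', hGder, iteratedDerivWithin_univ]
          rw [h1, if_neg (by omega)]
          refine le_trans (gnac_mul_deriv_bound hs2 isOpen_univ (Set.mem_univ x)
            hhi.contDiffOn hfi (by norm_num) hA0.le hK.le (le_refl K) hbφ hbf) ?_
          apply le_of_eq
          simp only [Nat.succ_eq_add_one]
          ring
        · have h1 : iteratedDeriv (m+1) (fun y => Real.cos (f y)) x =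
              iteratedDerivWithin m (fun y => -Real.sin (f y) * deriv f y) Set.univ x := by
            rw [iteratedDeriv_succ', hHder, iteratedDerivWithin_univ]
          rw [h1, if_neg (by omega)]
          refine le_trans (gnac_mul_deriv_bound hs2 isOpen_univ (Set.mem_univ x)
            hgneg.contDiffOn hfi (by norm_num) hA0.le hK.le (le_refl K) hbψ hbf) ?_
          apply le_of_eq
          simp only [Nat.succ_eq_add_one]
          ring
  -- pointwise bounds for sin∘f and cos∘f − 1
  have hsin_pt : ∀ k : ℕ, ∀ x ∈ I, |iteratedDeriv k (fun y => Real.sin (f y)) x| ≤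
      (if k = 0 then A else 4 * A * K ^ k * ((k.factorial : ℝ)) ^ s) := by
    intro k x hx
    rcases eq_or_ne k 0 with rfl | hk
    · rw [if_pos rfl]
      simp only [iteratedDeriv_zero]
      exact le_trans (Real.abs_sin_le_abs) (hf0 x hx)
    · rw [if_neg hk]
      have := (hGH k x hx).1
      rwa [if_neg hk] at this
  have hcos_pt : ∀ k : ℕ, ∀ x ∈ I, |iteratedDeriv k (fun y => Real.cos (f y) - 1) x| ≤
      (if k = 0 then A else 4 * A * K ^ k * ((k.factorial : ℝ)) ^ s) := by
    intro k x hx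
    rcases eq_or_ne k 0 with rfl | hk
    · rw [if_pos rfl]
      simp only [iteratedDeriv_zero]
      have h1 : 1 - (f x) ^ 2 / 2 ≤ Real.cos (f x) := Real.one_sub_sq_div_two_le_cos
      have h2 : Real.cos (f x) ≤ 1 := Real.cos_le_one _
      have h3 : (f x) ^ 2 ≤ A ^ 2 := by
        have := hf0 x hx
        nlinarith [sq_abs (f x), abs_nonneg (f x)]
      rw [abs_of_nonpos (by linarith)]
      nlinarith
    · rw [if_neg hk]
      obtain ⟨m, rfl⟩ := Nat.exists_eq_succ_of_ne_zero hk
      have h1 : iteratedDeriv (m+1) (fun y => Real.cos (f y) - 1) x =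
          iteratedDeriv (m+1) (fun y => Real.cos (f y)) x := by
        rw [show (fun y => Real.cos (f y) - 1) = fun y => (-1:ℝ) + Real.cos (f y) from
          funext fun y => by ring]
        rw [← iteratedDerivWithin_univ, ← iteratedDerivWithin_univ]
        exact iteratedDerivWithin_const_add (by omega) (-1:ℝ)
      rw [h1]
      have := (hGH (m+1) x hx).2
      rwa [if_neg hk] at this
  -- the coefficient estimate needed for the sin/cos conclusions
  have hδpos : 0 < ε ^ (1/(s+8)) := Real.rpow_pos_of_pos hε _
  have hK'pos : (0:ℝ) < (1 + ε ^ (1/(s+8))) * K := by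
    have := hδpos; nlinarith
  have hcoef : ∀ k : ℕ,
      4 * π ^ 2 / 3 * ((1 + (k : ℝ)) ^ 2 /
        (((1 + ε ^ (1 / (s + 8))) * K) ^ k * ((k.factorial : ℝ)) ^ s)) *
      (if k = 0 then A else 4 * A * K ^ k * ((k.factorial : ℝ)) ^ s) ≤ ε ^ ((1:ℝ)/12) := by
    intro k
    have hfp : (0:ℝ) < ((k.factorial : ℝ)) ^ s :=
      Real.rpow_pos_of_pos (by exact_mod_cast k.factorial_pos) s
    have hKk : (0:ℝ) < K ^ k := pow_pos hK k
    have hδk : (0:ℝ) < (1 + ε ^ (1/(s+8))) ^ k := pow_pos (by linarith) k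
    rcases eq_or_ne k 0 with rfl | hk
    · rw [if_pos rfl]
      have hfin : ε ≤ ε ^ ((1:ℝ)/12) := by
        have h := Real.rpow_le_rpow_of_exponent_ge hε hε1 (by norm_num : (1:ℝ)/12 ≤ 1)
        rwa [Real.rpow_one] at h
      refine le_trans (le_of_eq ?_) hfin
      simp only [Nat.cast_zero, add_zero, one_pow, pow_zero, Nat.factorial_zero, Nat.cast_one,
        Real.one_rpow, mul_one, one_mul, div_one]
      rw [hAdef]
      field_simp
    · rw [if_neg hk]
      have heq : 4 * π ^ 2 / 3 * ((1 + (k : ℝ)) ^ 2 /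
          (((1 + ε ^ (1 / (s + 8))) * K) ^ k * ((k.factorial : ℝ)) ^ s)) *
          (4 * A * K ^ k * ((k.factorial : ℝ)) ^ s)
          = 4 * ε * (1 + (k:ℝ)) ^ 2 / (1 + ε ^ (1/(s+8))) ^ k := by
        rw [hAdef, mul_pow]
        field_simp
      rw [heq, div_le_iff₀ hδk]
      exact gnac_key hs hε hεle k
  ---------------------------------------------------------------------------
  -- PART 2 : arcsin
  ---------------------------------------------------------------------------
  have harcsin : gevreyNormOn s (4 * K) I (fun x => Real.arcsin (f x)) < ⊤ := by
    set w : ℝ → ℝ := fun y => (Real.sqrt (1 - f y ^ 2))⁻¹ with hwdef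
    -- smoothness of w and u on U
    have hwc : ContDiffOn ℝ ((⊤ : ℕ∞) : WithTop ℕ∞) w U := by
      intro y hy
      have h1 : ContDiffAt ℝ ((⊤ : ℕ∞) : WithTop ℕ∞) (fun z => 1 - f z ^ 2) y :=
        contDiffAt_const.sub (hfi.contDiffAt.pow 2)
      exact ((h1.sqrt (hUtpos y hy).ne').inv (hUspos y hy).ne').contDiffWithinAt
    have huc : ContDiffOn ℝ ((⊤ : ℕ∞) : WithTop ℕ∞) (fun y => Real.arcsin (f y)) U := by
      intro y hy
      have h2 := hUf y hy
      have h₁ : f y ≠ -1 := by intro hcon; rw [hcon] at h2; norm_num at h2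
      have h₂ : f y ≠ 1 := by intro hcon; rw [hcon] at h2; norm_num at h2
      exact ((Real.contDiffAt_arcsin h₁ h₂).comp y hfi.contDiffAt).contDiffWithinAt
    -- derivative identities on U
    have hwd : ∀ y ∈ U, HasDerivAt w ((f y * (w y * w y * w y)) * deriv f y) y := by
      intro y hy
      have ht := hUtpos y hy
      have hts := hUspos y hy
      have H : HasDerivAt (fun z => (Real.sqrt (1 - f z ^ 2))⁻¹)
          (-((-(2 * f y ^ (2-1) * deriv f y)) / (2 * Real.sqrt (1 - f y ^ 2))) /
            (Real.sqrt (1 - f y ^ 2)) ^ 2) y := by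
        have h1 : HasDerivAt (fun z => f z ^ 2) ((2:ℝ) * f y ^ (2-1) * deriv f y) y :=
          (hfd y).pow 2
        have h2 : HasDerivAt (fun z => 1 - f z ^ 2) (-(2 * f y ^ (2-1) * deriv f y)) y :=
          h1.const_sub 1
        have h3 := h2.sqrt ht.ne'
        exact h3.inv hts.ne'
      have heq : -((-(2 * f y ^ (2-1) * deriv f y)) / (2 * Real.sqrt (1 - f y ^ 2))) /
          (Real.sqrt (1 - f y ^ 2)) ^ 2 = (f y * (w y * w y * w y)) * deriv f y := by
        rw [hwdef]
        field_simp
        ring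
      rw [hwdef]
      rw [← heq]
      exact H
    have hud : ∀ y ∈ U, HasDerivAt (fun z => Real.arcsin (f z)) (w y * deriv f y) y := by
      intro y hy
      have h2 := hUf y hy
      have h₁ : f y ≠ -1 := by intro hcon; rw [hcon] at h2; norm_num at h2
      have h₂ : f y ≠ 1 := by intro hcon; rw [hcon] at h2; norm_num at h2
      have H := (Real.hasDerivAt_arcsin h₁ h₂).comp y (hfd y)
      have heq : 1 / Real.sqrt (1 - f y ^ 2) * deriv f y = w y * deriv f y := by
        rw [hwdef, one_div]
      rw [← heq]
      exact H
    -- within-U recursion identities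
    have hUuniq : UniqueDiffOn ℝ U := hUo.uniqueDiffOn
    have hweq : ∀ x ∈ U, ∀ m : ℕ, iteratedDerivWithin (m+1) w U x =
        iteratedDerivWithin m (fun y => (f y * (w y * w y * w y)) * deriv f y) U x := by
      intro x hx m
      rw [iteratedDerivWithin_succ']
      refine iteratedDerivWithin_congr (fun y hy => ?_) hx
      rw [derivWithin_of_isOpen hUo hy, (hwd y hy).deriv]
    have hueq : ∀ x ∈ U, ∀ m : ℕ, iteratedDerivWithin (m+1) (fun z => Real.arcsin (f z)) U x =
        iteratedDerivWithin m (fun y => w y * deriv f y) U x := by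
      intro x hx m
      rw [iteratedDerivWithin_succ']
      refine iteratedDerivWithin_congr (fun y hy => ?_) hx
      rw [derivWithin_of_isOpen hUo hy, (hud y hy).deriv]
    -- bound for w by strong induction
    have h2K : (0:ℝ) ≤ 2 * K := by linarith
    have hK2K : K ≤ 2 * K := by linarith
    have hwb : ∀ k : ℕ, ∀ x ∈ I, |iteratedDerivWithin k w U x| ≤
        2 * (2*K) ^ k * ((k.factorial : ℝ)) ^ s := by
      intro k
      induction k using Nat.strong_induction_on with
      | _ k IH =>
        intro x hx
        have hxU : x ∈ U := hIU x hx
        match k with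
        | 0 =>
          simp only [iteratedDerivWithin_zero, pow_zero, Nat.factorial_zero, Nat.cast_one,
            Real.one_rpow, mul_one]
          have h1 := hUs x hxU
          have h2 := hUspos x hxU
          show |(Real.sqrt (1 - f x ^ 2))⁻¹| ≤ 2
          rw [abs_of_pos (inv_pos.mpr h2)]
          have h3 : Real.sqrt (1 - f x ^ 2) * (Real.sqrt (1 - f x ^ 2))⁻¹ = 1 :=
            mul_inv_cancel₀ h2.ne'
          nlinarith [mul_nonneg (sub_nonneg.mpr h1) (inv_nonneg.mpr h2.le)]
        | Nat.succ m =>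
          have hfUb : ∀ j ≤ m, |iteratedDerivWithin j f U x| ≤
              A * (2*K) ^ j * ((j.factorial : ℝ)) ^ s := by
            intro j hj
            rw [gnac_iDW_eq hUo f j hxU]
            refine le_trans (hM j x hx) ?_
            have := Real.rpow_nonneg (Nat.cast_nonneg (j.factorial)) s
            have hpow : K ^ j ≤ (2*K) ^ j := pow_le_pow_left₀ hK.le hK2K j
            have hAA : (0:ℝ) ≤ A := hA0.le
            exact mul_le_mul_of_nonneg_right (mul_le_mul_of_nonneg_left hpow hAA) this
          have hwUb : ∀ j ≤ m, |iteratedDerivWithin j w U x| ≤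
              2 * (2*K) ^ j * ((j.factorial : ℝ)) ^ s := fun j hj => IH j (by omega) x hx
          have hw2 : ∀ j ≤ m, |iteratedDerivWithin j (fun y => w y * w y) U x| ≤
              16 * (2*K) ^ j * ((j.factorial : ℝ)) ^ s := by
            intro j hj
            refine le_trans (gnac_mul_bound hs2 hUo hxU hwc hwc (by norm_num) (by norm_num)
              h2K (fun i hi => hwUb i (le_trans hi hj)) (fun i hi => hwUb i (le_trans hi hj))) ?_
            apply le_of_eq; ring
          have hw3 : ∀ j ≤ m, |iteratedDerivWithin j (fun y => (w y * w y) * w y) U x| ≤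
              128 * (2*K) ^ j * ((j.factorial : ℝ)) ^ s := by
            intro j hj
            have hcc : ContDiffOn ℝ ((⊤ : ℕ∞) : WithTop ℕ∞) (fun y => w y * w y) U :=
              hwc.mul hwc
            refine le_trans (gnac_mul_bound hs2 hUo hxU hcc hwc (by norm_num) (by norm_num)
              h2K (fun i hi => hw2 i (le_trans hi hj)) (fun i hi => hwUb i (le_trans hi hj))) ?_
            apply le_of_eq; ring
          have hp3 : ∀ j ≤ m, |iteratedDerivWithin j (fun y => f y * (w y * w y * w y)) U x| ≤
              (512 * A) * (2*K) ^ j * ((j.factorial : ℝ)) ^ s := by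
            intro j hj
            have hcc : ContDiffOn ℝ ((⊤ : ℕ∞) : WithTop ℕ∞) (fun y => (w y * w y) * w y) U :=
              (hwc.mul hwc).mul hwc
            refine le_trans (gnac_mul_bound hs2 hUo hxU hfi.contDiffOn hcc hA0.le (by norm_num)
              h2K (fun i hi => hfUb i (le_trans hi hj)) (fun i hi => hw3 i (le_trans hi hj))) ?_
            apply le_of_eq; ring
          have hcc3 : ContDiffOn ℝ ((⊤ : ℕ∞) : WithTop ℕ∞) (fun y => f y * (w y * w y * w y)) U :=
            hfi.contDiffOn.mul ((hwc.mul hwc).mul hwc)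
          rw [hweq x hxU m]
          refine le_trans (gnac_mul_deriv_bound hs2 hUo hxU hcc3 hfi
            (by positivity) hA0.le hK.le hK2K hp3 (fun j _ => hM j x hx)) ?_
          have hfp : (0:ℝ) ≤ (((m+1).factorial : ℝ)) ^ s :=
            Real.rpow_nonneg (Nat.cast_nonneg _) s
          have hpp : (0:ℝ) ≤ (2*K) ^ (m+1) := pow_nonneg h2K _
          have hAA : 4 * (512 * A * A) ≤ 2 := by nlinarith
          calc 4 * (512 * A * A) * (2*K) ^ (m+1) * (((m+1).factorial : ℝ)) ^ s
              ≤ 2 * (2*K) ^ (m+1) * (((m+1).factorial : ℝ)) ^ s := by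
                have := mul_nonneg hpp hfp
                nlinarith
            _ = 2 * (2*K) ^ (m+1) * (((m + 1).factorial : ℝ)) ^ s := by norm_num
    -- bound for arcsin ∘ f
    have hub : ∀ k : ℕ, ∀ x ∈ I, |iteratedDeriv k (fun z => Real.arcsin (f z)) x| ≤
        2 * (2*K) ^ k * ((k.factorial : ℝ)) ^ s := by
      intro k x hx
      have hxU : x ∈ U := hIU x hx
      match k with
      | 0 =>
        simp only [iteratedDeriv_zero, pow_zero, Nat.factorial_zero, Nat.cast_one,
          Real.one_rpow, mul_one]
        have h1 : |Real.arcsin (f x)| ≤ π / 2 :=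
          abs_le.mpr ⟨Real.neg_pi_div_two_le_arcsin _, Real.arcsin_le_pi_div_two _⟩
        have h2 : π ≤ 4 := Real.pi_le_four
        linarith
      | Nat.succ m =>
        rw [← gnac_iDW_eq hUo _ (m+1) hxU, hueq x hxU m]
        have hwUb : ∀ j ≤ m, |iteratedDerivWithin j w U x| ≤
            2 * (2*K) ^ j * ((j.factorial : ℝ)) ^ s := fun j hj => hwb j x hx
        refine le_trans (gnac_mul_deriv_bound hs2 hUo hxU hwc hfi
          (by norm_num) hA0.le hK.le hK2K hwUb (fun j _ => hM j x hx)) ?_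
        have hfp : (0:ℝ) ≤ (((m+1).factorial : ℝ)) ^ s :=
          Real.rpow_nonneg (Nat.cast_nonneg _) s
        have hpp : (0:ℝ) ≤ (2*K) ^ (m+1) := pow_nonneg h2K _
        have hAA : 4 * (2 * A) ≤ 2 := by nlinarith
        have hX := mul_nonneg hpp hfp
        simp only [Nat.succ_eq_add_one]
        calc 4 * (2 * A) * (2*K) ^ (m+1) * (((m+1).factorial : ℝ)) ^ s
            = (4 * (2 * A)) * ((2*K) ^ (m+1) * (((m+1).factorial : ℝ)) ^ s) := by ring
          _ ≤ 2 * ((2*K) ^ (m+1) * (((m+1).factorial : ℝ)) ^ s) :=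
              mul_le_mul_of_nonneg_right hAA hX
          _ = 2 * (2*K) ^ (m+1) * (((m+1).factorial : ℝ)) ^ s := by ring
    -- conclude finiteness
    have hle : gevreyNormOn s (4 * K) I (fun x => Real.arcsin (f x)) ≤
        ENNReal.ofReal (8 * π ^ 2) := by
      refine gnac_gevrey_le s (4*K) (by linarith) I _
        (fun k => 2 * (2*K) ^ k * ((k.factorial : ℝ)) ^ s) (8 * π ^ 2) hub ?_
      intro k
      have hfp : (0:ℝ) < ((k.factorial : ℝ)) ^ s :=
        Real.rpow_pos_of_pos (by exact_mod_cast k.factorial_pos) s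
      have h2k : (0:ℝ) < (2:ℝ)^k := by positivity
      have hKk : (0:ℝ) < K ^ k := pow_pos hK k
      have heq : 4 * π ^ 2 / 3 * ((1 + (k : ℝ)) ^ 2 / ((4*K) ^ k * ((k.factorial : ℝ)) ^ s)) *
          (2 * (2*K) ^ k * ((k.factorial : ℝ)) ^ s)
          = 8 * π ^ 2 / 3 * ((1 + (k:ℝ))^2 / 2^k) := by
        rw [show (4*K:ℝ) = 2*(2*K) by ring, mul_pow, mul_pow]
        field_simp
        ring
      rw [heq]
      have h3 : (1 + (k:ℝ))^2 / 2^k ≤ 3 := by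
        rw [div_le_iff₀ h2k]
        have := gnac_two_pow k
        linarith
      calc 8 * π ^ 2 / 3 * ((1 + (k:ℝ))^2 / 2^k) ≤ 8 * π ^ 2 / 3 * 3 :=
          mul_le_mul_of_nonneg_left h3 (by positivity)
        _ = 8 * π ^ 2 := by ring
    exact lt_of_le_of_lt hle ENNReal.ofReal_lt_top
  refine ⟨harcsin, ?_, ?_⟩
  · exact gnac_gevrey_le s _ hK'pos.le I _ _ _ hsin_pt hcoef
  · exact gnac_gevrey_le s _ hK'pos.le I _ _ _ hcos_pt hcoef

end
end

section
/- Let 0 < ν < ∞ and define f(x) = e^{1/|x|^ν} for x ≠ 0. Then there exists C > 0 such that for all n ∈ ℕ and all x ≠ 0, |f^{(n)}(x)| ≤ C^n · e^{2/|x|^ν} · (n!)^{1+1/ν}. -/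
/-!
For `x > 0` put `s = x^{-ν}`. Induction on `n` gives
`f⁽ⁿ⁾(x) = e^s ∑ₖ cₙₖ x^{-(νk+n)} = e^s s^{n/ν} ∑ₖ cₙₖ sᵏ`, where the coefficients obey a two-term
recursion that yields `∑ₖ |cₙₖ| k! 2ᵏ ≤ (3ν+1)ⁿ n!`. Both `sᵏ ≤ 2ᵏ k! e^{s/2}` and
`s^{n/ν} ≤ (2/ν)^{n/ν} (n!)^{1/ν} e^{s/2}` follow from `tᵐ ≤ m! eᵗ`; multiplying out gives the bound
with `C = (3ν+1)(2/ν)^{1/ν}`. Since `f` is even, the case `x < 0` follows.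
-/

open Real Finset Topology

noncomputable section

lemma sum_range_succ_shift_add_mul (μ : ℝ) (a p g : ℕ → ℝ) {n : ℕ} (ha : a (n + 1) = 0) :
    ∑ k ∈ range (n + 2), ((if k = 0 then 0 else μ * a (k - 1)) + p k * a k) * g k =
      ∑ k ∈ range (n + 1), a k * (μ * g (k + 1) + p k * g k) := by
  simp only [add_mul, mul_add, sum_add_distrib]
  congr 1
  · rw [sum_range_succ']
    simp only [Nat.succ_ne_zero, if_false, if_true, Nat.add_sub_cancel, zero_mul, add_zero]
    exact sum_congr rfl fun k _ => by ring
  · rw [sum_range_succ, ha]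
    simp only [mul_zero, zero_mul, add_zero]
    exact sum_congr rfl fun k _ => by ring

/-- For `x > 0`, `dⁿ/dxⁿ e^{x^{-ν}} = e^{x^{-ν}} ∑ₖ derivCoeff ν n k · x^{-(νk+n)}`. -/
def derivCoeff (ν : ℝ) : ℕ → ℕ → ℝ
  | 0, 0 => 1
  | 0, _ + 1 => 0
  | n + 1, 0 => -n * derivCoeff ν n 0
  | n + 1, k + 1 => -ν * derivCoeff ν n k - (ν * (k + 1) + n) * derivCoeff ν n (k + 1)

lemma derivCoeff_succ (ν : ℝ) (n k : ℕ) :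
    derivCoeff ν (n + 1) k =
      (if k = 0 then 0 else -ν * derivCoeff ν n (k - 1)) + -(ν * k + n) * derivCoeff ν n k := by
  cases k with
  | zero => simp [derivCoeff]
  | succ k =>
    simp only [derivCoeff, Nat.succ_ne_zero, if_false, Nat.add_sub_cancel]
    push_cast
    ring

lemma derivCoeff_eq_zero_of_lt (ν : ℝ) {n k : ℕ} (h : n < k) : derivCoeff ν n k = 0 := by
  induction n generalizing k with
  | zero => obtain ⟨k, rfl⟩ := Nat.exists_eq_succ_of_ne_zero h.ne'; rfl
  | succ n ih =>
    obtain ⟨k, rfl⟩ := Nat.exists_eq_succ_of_ne_zero (Nat.ne_zero_of_lt h)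
    simp [derivCoeff, ih (Nat.lt_of_succ_lt_succ h), ih (Nat.lt_of_succ_lt h)]

lemma sum_derivCoeff_succ_mul (ν : ℝ) (n : ℕ) (g : ℕ → ℝ) :
    ∑ k ∈ range (n + 2), derivCoeff ν (n + 1) k * g k =
      ∑ k ∈ range (n + 1), derivCoeff ν n k * (-ν * g (k + 1) + -(ν * k + n) * g k) := by
  simp only [derivCoeff_succ]
  exact sum_range_succ_shift_add_mul _ _ _ _ (derivCoeff_eq_zero_of_lt ν n.lt_succ_self)

lemma sum_abs_derivCoeff_mul_le {ν : ℝ} (hν : 0 ≤ ν) (n : ℕ) :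
    ∑ k ∈ range (n + 1), |derivCoeff ν n k| * (k.factorial * 2 ^ k) ≤
      (3 * ν + 1) ^ n * n.factorial := by
  induction n with
  | zero => simp [derivCoeff]
  | succ n ih =>
    have habs (k : ℕ) : |derivCoeff ν (n + 1) k| ≤
        (if k = 0 then 0 else ν * |derivCoeff ν n (k - 1)|) + (ν * k + n) * |derivCoeff ν n k| := by
      rw [derivCoeff_succ]
      refine (abs_add_le _ _).trans (add_le_add ?_ ?_)
      · split_ifs <;> simp [abs_mul, abs_of_nonneg hν]
      · rw [abs_mul, abs_neg, abs_of_nonneg (by positivity)]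
    have hweight (k : ℕ) (hk : k ∈ range (n + 1)) :
        ν * ((k + 1).factorial * 2 ^ (k + 1) : ℝ) + (ν * k + n) * (k.factorial * 2 ^ k) ≤
          (3 * ν + 1) * (n + 1) * (k.factorial * 2 ^ k) := by
      have hkn : (k : ℝ) ≤ n := by exact_mod_cast Nat.lt_succ_iff.mp (mem_range.mp hk)
      have hcoef : 2 * ν * (k + 1) + (ν * k + n) ≤ (3 * ν + 1) * (n + 1) := by nlinarith
      calc ν * ((k + 1).factorial * 2 ^ (k + 1) : ℝ) + (ν * k + n) * (k.factorial * 2 ^ k)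
          = (2 * ν * (k + 1) + (ν * k + n)) * (k.factorial * 2 ^ k) := by
            rw [Nat.factorial_succ, pow_succ]; push_cast; ring
        _ ≤ (3 * ν + 1) * (n + 1) * (k.factorial * 2 ^ k) :=
            mul_le_mul_of_nonneg_right hcoef (by positivity)
    calc ∑ k ∈ range (n + 2), |derivCoeff ν (n + 1) k| * (k.factorial * 2 ^ k)
        ≤ ∑ k ∈ range (n + 2), ((if k = 0 then 0 else ν * |derivCoeff ν n (k - 1)|) +
            (ν * k + n) * |derivCoeff ν n k|) * (k.factorial * 2 ^ k) :=
          sum_le_sum fun k _ => mul_le_mul_of_nonneg_right (habs k) (by positivity)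
      _ = ∑ k ∈ range (n + 1), |derivCoeff ν n k| *
            (ν * ((k + 1).factorial * 2 ^ (k + 1)) + (ν * k + n) * (k.factorial * 2 ^ k)) := by
          refine sum_range_succ_shift_add_mul _ (fun k => |derivCoeff ν n k|) _
            (fun k => (k.factorial * 2 ^ k : ℝ)) ?_
          simp [derivCoeff_eq_zero_of_lt ν n.lt_succ_self]
      _ ≤ ∑ k ∈ range (n + 1), |derivCoeff ν n k| *
            ((3 * ν + 1) * (n + 1) * (k.factorial * 2 ^ k)) :=
          sum_le_sum fun k hk => mul_le_mul_of_nonneg_left (hweight k hk) (abs_nonneg _)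
      _ = (3 * ν + 1) * (n + 1) *
            ∑ k ∈ range (n + 1), |derivCoeff ν n k| * (k.factorial * 2 ^ k) := by
          rw [mul_sum]; exact sum_congr rfl fun k _ => by ring
      _ ≤ (3 * ν + 1) ^ (n + 1) * (n + 1).factorial := by
          rw [Nat.factorial_succ, pow_succ]
          push_cast
          nlinarith [mul_le_mul_of_nonneg_left ih (by positivity : (0 : ℝ) ≤ (3 * ν + 1) * (n + 1))]

lemma hasDerivAt_exp_rpow_neg_mul_sum_derivCoeff (ν : ℝ) (n : ℕ) {x : ℝ} (hx : 0 < x) :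
    HasDerivAt (fun y => exp (y ^ (-ν)) * ∑ k ∈ range (n + 1), derivCoeff ν n k * y ^ (-(ν * k + n)))
      (exp (x ^ (-ν)) * ∑ k ∈ range (n + 2), derivCoeff ν (n + 1) k * x ^ (-(ν * k + (n + 1 : ℕ))))
      x := by
  have hrpow (p : ℝ) : HasDerivAt (fun y : ℝ => y ^ p) (p * x ^ (p - 1)) x :=
    hasDerivAt_rpow_const (Or.inl hx.ne')
  have hsum : HasDerivAt (fun y => ∑ k ∈ range (n + 1), derivCoeff ν n k * y ^ (-(ν * k + n)))
      (∑ k ∈ range (n + 1), derivCoeff ν n k * (-(ν * k + n) * x ^ (-(ν * k + n) - 1))) x :=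
    HasDerivAt.fun_sum fun k _ => (hrpow _).const_mul _
  refine ((hrpow (-ν)).exp.mul hsum).congr_deriv ?_
  rw [sum_derivCoeff_succ_mul, mul_sum, mul_sum, mul_sum, ← sum_add_distrib]
  refine sum_congr rfl fun k _ => ?_
  have h1 : x ^ (-(ν * (k + 1 : ℕ) + (n + 1 : ℕ))) = x ^ (-ν - 1) * x ^ (-(ν * k + n)) := by
    rw [← rpow_add hx]; push_cast; ring_nf
  have h2 : x ^ (-(ν * k + (n + 1 : ℕ))) = x ^ (-(ν * k + n) - 1) := by push_cast; ring_nf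
  rw [h1, h2]
  ring

lemma iteratedDeriv_exp_inv_abs_rpow_of_pos (ν : ℝ) (n : ℕ) {x : ℝ} (hx : 0 < x) :
    iteratedDeriv n (fun y : ℝ => exp (1 / |y| ^ ν)) x =
      exp (x ^ (-ν)) * ∑ k ∈ range (n + 1), derivCoeff ν n k * x ^ (-(ν * k + n)) := by
  induction n generalizing x with
  | zero =>
    simp [derivCoeff, abs_of_pos hx, rpow_neg hx.le]
  | succ n ih =>
    have hev : iteratedDeriv n (fun y : ℝ => exp (1 / |y| ^ ν)) =ᶠ[𝓝 x] fun y =>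
        exp (y ^ (-ν)) * ∑ k ∈ range (n + 1), derivCoeff ν n k * y ^ (-(ν * k + n)) :=
      Filter.eventuallyEq_of_mem (Ioi_mem_nhds hx) fun y hy => ih hy
    rw [iteratedDeriv_succ, hev.deriv_eq,
      (hasDerivAt_exp_rpow_neg_mul_sum_derivCoeff ν n hx).deriv]

lemma pow_le_factorial_mul_exp {t : ℝ} (ht : 0 ≤ t) (k : ℕ) : t ^ k ≤ k.factorial * exp t := by
  have := pow_div_factorial_le_exp t ht k
  rwa [div_le_iff₀ (by positivity), mul_comm] at this

lemma rpow_natCast_div_le {ν s : ℝ} (hν : 0 < ν) (hs : 0 ≤ s) (n : ℕ) :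
    s ^ ((n : ℝ) / ν) ≤ ((2 / ν) ^ (1 / ν)) ^ n * (n.factorial : ℝ) ^ (1 / ν) * exp (s / 2) := by
  have hpow : s ^ n ≤ (2 / ν) ^ n * (n.factorial * exp (ν * (s / 2))) := by
    calc s ^ n = (2 / ν) ^ n * (ν * (s / 2)) ^ n := by rw [← mul_pow]; field_simp
      _ ≤ _ := mul_le_mul_of_nonneg_left (pow_le_factorial_mul_exp (by positivity) n)
          (by positivity)
  calc s ^ ((n : ℝ) / ν) = (s ^ n) ^ (1 / ν) := by rw [← rpow_natCast, ← rpow_mul hs, mul_one_div]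
    _ ≤ ((2 / ν) ^ n * (n.factorial * exp (ν * (s / 2)))) ^ (1 / ν) :=
      rpow_le_rpow (by positivity) hpow (by positivity)
    _ = _ := by
      rw [mul_rpow (by positivity) (by positivity), mul_rpow (by positivity) (by positivity),
        ← exp_mul, ← rpow_pow_comm (by positivity), mul_assoc]
      field_simp

lemma abs_iteratedDeriv_exp_inv_abs_rpow_le_of_pos {ν : ℝ} (hν : 0 < ν) (n : ℕ) {x : ℝ}
    (hx : 0 < x) :
    |iteratedDeriv n (fun y : ℝ => exp (1 / |y| ^ ν)) x| ≤
      ((3 * ν + 1) * (2 / ν) ^ (1 / ν)) ^ n * exp (2 / |x| ^ ν) *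
        (n.factorial : ℝ) ^ (1 + 1 / ν) := by
  set s := x ^ (-ν) with hs_def
  have hs : 0 < s := rpow_pos_of_pos hx _
  have hterm (k : ℕ) : x ^ (-(ν * k + n)) = s ^ k * s ^ ((n : ℝ) / ν) := by
    rw [← rpow_natCast, ← rpow_mul hx.le, ← rpow_mul hx.le, ← rpow_add hx]
    field_simp
    ring_nf
  have hpow (k : ℕ) : s ^ k ≤ k.factorial * 2 ^ k * exp (s / 2) := by
    calc s ^ k = 2 ^ k * (s / 2) ^ k := by rw [← mul_pow]; ring_nf
      _ ≤ 2 ^ k * (k.factorial * exp (s / 2)) :=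
        mul_le_mul_of_nonneg_left (pow_le_factorial_mul_exp (by positivity) k) (by positivity)
      _ = _ := by ring
  set B := ((2 / ν) ^ (1 / ν)) ^ n * (n.factorial : ℝ) ^ (1 / ν)
  have hB : s ^ ((n : ℝ) / ν) ≤ B * exp (s / 2) := rpow_natCast_div_le hν hs.le n
  rw [iteratedDeriv_exp_inv_abs_rpow_of_pos ν n hx, abs_mul, abs_of_pos (exp_pos _)]
  calc exp s * |∑ k ∈ range (n + 1), derivCoeff ν n k * x ^ (-(ν * k + n))|
      ≤ exp s * ∑ k ∈ range (n + 1), |derivCoeff ν n k| * (s ^ k * s ^ ((n : ℝ) / ν)) := by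
        refine mul_le_mul_of_nonneg_left ((abs_sum_le_sum_abs _ _).trans_eq ?_) (exp_pos _).le
        refine sum_congr rfl fun k _ => ?_
        rw [abs_mul, hterm, abs_of_pos (mul_pos (pow_pos hs k) (rpow_pos_of_pos hs _))]
    _ ≤ exp s * ∑ k ∈ range (n + 1), |derivCoeff ν n k| *
          ((k.factorial * 2 ^ k * exp (s / 2)) * (B * exp (s / 2))) := by
        gcongr with k
        exact hpow k
    _ = exp (2 * s) * B * ∑ k ∈ range (n + 1), |derivCoeff ν n k| * (k.factorial * 2 ^ k) := by
        rw [mul_sum, mul_sum]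
        refine sum_congr rfl fun k _ => ?_
        rw [show 2 * s = s + s / 2 + s / 2 by ring, exp_add, exp_add]
        ring
    _ ≤ exp (2 * s) * B * ((3 * ν + 1) ^ n * n.factorial) := by
        gcongr
        exact sum_abs_derivCoeff_mul_le hν.le n
    _ = _ := by
        rw [abs_of_pos hx, hs_def, rpow_neg hx.le, ← div_eq_mul_inv,
          rpow_add (by positivity), rpow_one, mul_pow]
        ring

lemma norm_iteratedDeriv_neg_of_even {𝕜 F : Type*} [NontriviallyNormedField 𝕜]
    [NormedAddCommGroup F] [NormedSpace 𝕜 F] {f : 𝕜 → F} (hf : ∀ y, f (-y) = f y) (n : ℕ)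
    (x : 𝕜) : ‖iteratedDeriv n f (-x)‖ = ‖iteratedDeriv n f x‖ := by
  have h := iteratedDeriv_comp_neg n f x
  simp only [hf] at h
  rw [h, norm_smul, norm_pow, norm_neg, norm_one, one_pow, one_mul]

/-- **Corollary 2.5**: for `0 < ν < ∞` and `f(x) = e^{1/|x|^ν}` (for `x ≠ 0`), there is
`C > 0` such that `|f^{(n)}(x)| ≤ Cⁿ e^{2/|x|^ν} (n!)^{1+1/ν}` for all `n ∈ ℕ`, `x ≠ 0`. -/
theorem expInvAbsRpow_deriv_bound (ν : ℝ) (hν : 0 < ν) :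
    ∃ C > (0 : ℝ), ∀ n : ℕ, ∀ x : ℝ, x ≠ 0 →
      |iteratedDeriv n (fun y : ℝ => Real.exp (1 / |y| ^ ν)) x| ≤
        C ^ n * Real.exp (2 / |x| ^ ν) * ((n.factorial : ℝ)) ^ (1 + 1 / ν) := by
  refine ⟨(3 * ν + 1) * (2 / ν) ^ (1 / ν), by positivity, fun n x hx => ?_⟩
  rcases hx.lt_or_gt with hneg | hpos
  · have h := abs_iteratedDeriv_exp_inv_abs_rpow_le_of_pos hν n (neg_pos.mpr hneg)
    rwa [abs_neg, ← Real.norm_eq_abs, norm_iteratedDeriv_neg_of_even (fun y => by rw [abs_neg]),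
      Real.norm_eq_abs] at h
  · exact abs_iteratedDeriv_exp_inv_abs_rpow_le_of_pos hν n hpos

end
end

section
/- Let α ∈ ℝ∖ℚ be of bounded type with constant M (q_{k+1} ≤ M q_k for all k, where q_k are the continued-fraction convergent denominators), let T x = x + 2πα on ℝ/2πℤ, let c₁ ∈ [0, π), c₂ = c₁ + π, β > 1, and set I_n = [c₁ − q_n^{−β}, c₁ + q_n^{−β}] ∪ [c₂ − q_n^{−β}, c₂ + q_n^{−β}], and (1/10)I_n the union of the same two intervals of radius 1/(10 q_n^β). Define min r_n = min_{x ∈ I_n} min{i > 0 : T^i x ∈ I_n} and max r_n = max_{x ∈ (1/10)I_n} min{i > 0 : T^i x ∈ (1/10)I_n}. Then M^{−20} ≤ (min r_n)/(max r_n) ≤ 1. -/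
open Real

noncomputable section

/-- The denominator `q_n` of the `n`-th continued fraction convergent of `α`. -/
def cfDen (α : ℝ) (n : ℕ) : ℝ := (GenContFract.of α).dens n

/-- `α` is of bounded type with constant `M`: `q_{n+1} ≤ M q_n` for all `n`. -/
def BoundedType (α M : ℝ) : Prop := ∀ n : ℕ, cfDen α (n + 1) ≤ M * cfDen α n

/-- `x`, viewed as a point of the circle `ℝ/2πℤ`, lies in the set `S ⊆ ℝ`. -/
def InCircle (S : Set ℝ) (x : ℝ) : Prop := ∃ k : ℤ, x - 2 * π * k ∈ S

/-- The first return time of `x ∈ S` to `S` under the rotation `T x = x + 2πα`: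
`min {i > 0 : T^i x ∈ S}` (the `sInf` of that set of positive integers). -/
def returnTime (α : ℝ) (S : Set ℝ) (x : ℝ) : ℕ :=
  sInf {i : ℕ | 0 < i ∧ InCircle S (x + 2 * π * i * α)}

/-- The critical set `I_n`: the two intervals of radius `r` around `c₁` and `c₁ + π`. -/
def critSet (c₁ r : ℝ) : Set ℝ :=
  Set.Icc (c₁ - r) (c₁ + r) ∪ Set.Icc (c₁ + π - r) (c₁ + π + r)

/-!
Write `ε_m = q_m α - p_m` (`cfErr α m`); these errors alternate in sign and
`1/(q_m + q_{m+1}) ≤ |ε_m| ≤ 1/q_{m+1}`. Both return times are comparable to `1/r`, where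
`r = q_n^{-β}`.

Upper bound: starting anywhere, a greedy descent through the scales `ε_0, ε_1, …, ε_m` brings the
orbit within `2π|ε_m|` of `c₁` in at most `4 q_{m+1} + 3 q_m + 1 ≤ 8 M q_m` steps. Choosing `m`
with `q_m ≤ K < q_{m+1}`, `K = max 1 (20π/r)`, makes this neighbourhood fit in `(1/10) I_n`, so
the maximal return time is at most `8 M K`.

Lower bound: two visits to `I_n` at times `i` apart put `2iα` within `2r/π` of an integer, whereas
bounded type gives `|jα - z| ≥ 1/(M³ j)`. Hence every return to `I_n` takes at least
`π / (4 M³ r)` steps, and so `K ≤ 80 M³ min r_n`. The two bounds differ by the factor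
`640 M⁴ ≤ M²⁰`, since `M¹⁵ ≥ q₁₅ ≥ 987`.
-/

lemma mul_neg_of_abs_sub_eq_one {a b : ℝ} (h : |a - b| = 1) (ha : |a| ≤ 1) (hb₀ : b ≠ 0)
    (hb : |b| < 1) : a * b < 0 := by
  by_contra! hab
  rw [abs_le] at ha
  rw [abs_lt] at hb
  rcases (abs_eq zero_le_one).1 h with h | h <;> rcases hb₀.lt_or_gt with hb' | hb' <;> nlinarith

lemma abs_sub_eq_abs_add_abs_of_mul_nonpos {a b : ℝ} (h : a * b ≤ 0) : |a - b| = |a| + |b| := by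
  have hab : 0 ≤ a * -b := by rw [mul_neg]; linarith
  rw [sub_eq_add_neg, (abs_add_eq_add_abs_iff a (-b)).2 (mul_nonneg_iff.1 hab), abs_neg]

lemma exists_nat_mul_add_eq_mul {a b θ : ℝ} (hb : b ≠ 0) (hab : a * b ≤ 0)
    (hθ : θ ∈ Set.Icc (0 : ℝ) 1) :
    ∃ t : ℕ, (t : ℝ) ≤ |a| / |b| + 1 ∧ ∃ θ' ∈ Set.Icc (0 : ℝ) 1, θ * a + t * b = θ' * b := by
  have hratio : |a| / |b| * b = -a := by
    rcases hb.lt_or_gt with hb' | hb'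
    · rw [abs_of_nonneg (nonneg_of_mul_nonpos_left hab hb'), abs_of_neg hb']
      field_simp
    · rw [abs_of_nonpos (nonpos_of_mul_nonpos_left hab hb'), abs_of_pos hb']
      field_simp
  -- `⌈θ |a| / |b|⌉` steps of size `b` carry `θ a` across `0`, overshooting by less than one step
  set u := θ * (|a| / |b|)
  have hu : 0 ≤ u := mul_nonneg hθ.1 (by positivity)
  refine ⟨⌈u⌉₊, ?_, ⌈u⌉₊ - u, ⟨by linarith [Nat.le_ceil u], ?_⟩, ?_⟩
  · have : u ≤ |a| / |b| := mul_le_of_le_one_left (by positivity) hθ.2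
    linarith [Nat.ceil_lt_add_one hu]
  · linarith [Nat.ceil_lt_add_one hu]
  · linear_combination θ * hratio

section ContinuedFraction

open GenContFract

variable {α : ℝ}

def cfNum (α : ℝ) (n : ℕ) : ℝ := (GenContFract.of α).nums n

def cfErr (α : ℝ) (n : ℕ) : ℝ := cfDen α n * α - cfNum α n

lemma not_terminatedAt_of_irrational (hα : Irrational α) (n : ℕ) :
    ¬(GenContFract.of α).TerminatedAt n := fun h ↦
  let ⟨q, hq⟩ := (terminates_iff_rat α).1 ⟨n, h⟩
  hα ⟨q, hq.symm⟩

-- `contsAux (n + 1) = (p_n, q_n)`: the index shift starts the recurrence at `(p₋₁, q₋₁) = (1, 0)`.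
lemma exists_contsAux_add_two (hα : Irrational α) (n : ℕ) :
    ∃ b : ℤ, 1 ≤ b ∧ (GenContFract.of α).contsAux (n + 2) =
      ⟨b * ((GenContFract.of α).contsAux (n + 1)).a + ((GenContFract.of α).contsAux n).a,
        b * ((GenContFract.of α).contsAux (n + 1)).b + ((GenContFract.of α).contsAux n).b⟩ := by
  obtain ⟨gp, hgp⟩ := Option.ne_none_iff_exists'.1 (not_terminatedAt_of_irrational hα n)
  obtain ⟨ha, b, hb⟩ := of_partNum_eq_one_and_exists_int_partDen_eq hgp
  have hb₁ : (1 : ℝ) ≤ b := hb ▸ of_one_le_get?_partDen (partDen_eq_s_b hgp)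
  refine ⟨b, by exact_mod_cast hb₁, ?_⟩
  rw [contsAux_recurrence hgp rfl rfl, ha, hb, one_mul, one_mul]

lemma exists_int_contsAux_eq (hα : Irrational α) (n : ℕ) :
    ∃ a b : ℤ, (GenContFract.of α).contsAux n = ⟨a, b⟩ := by
  induction n using Nat.twoStepInduction with
  | zero => exact ⟨1, 0, by simp [zeroth_contAux_eq_one_zero]⟩
  | one => exact ⟨⌊α⌋, 1, by simp [first_contAux_eq_h_one, of_h_eq_floor]⟩
  | more n ih₀ ih₁ =>
    obtain ⟨a₀, b₀, h₀⟩ := ih₀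
    obtain ⟨a₁, b₁, h₁⟩ := ih₁
    obtain ⟨c, -, h⟩ := exists_contsAux_add_two hα n
    exact ⟨c * a₁ + a₀, c * b₁ + b₀, by rw [h, h₀, h₁]; push_cast; rfl⟩

lemma cfDen_zero : cfDen α 0 = 1 := rfl

lemma fib_succ_le_cfDen (hα : Irrational α) (n : ℕ) : (Nat.fib (n + 1) : ℝ) ≤ cfDen α n :=
  succ_nth_fib_le_of_nth_den (Or.inr (not_terminatedAt_of_irrational hα _))

lemma one_le_cfDen (hα : Irrational α) (n : ℕ) : 1 ≤ cfDen α n :=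
  (Nat.one_le_cast.2 (Nat.fib_pos.2 n.succ_pos)).trans (fib_succ_le_cfDen hα n)

lemma cfDen_pos (hα : Irrational α) (n : ℕ) : 0 < cfDen α n :=
  one_pos.trans_le (one_le_cfDen hα n)

lemma cfDen_mono : Monotone (cfDen α) :=
  monotone_nat_of_le_succ fun _ ↦ of_den_mono

lemma cfDen_add_cfDen_le (hα : Irrational α) (n : ℕ) :
    cfDen α (n + 1) + cfDen α n ≤ cfDen α (n + 2) := by
  obtain ⟨b, hb, h⟩ := exists_contsAux_add_two hα (n + 1)
  have hrec : cfDen α (n + 2) = b * cfDen α (n + 1) + cfDen α n := congrArg Pair.b h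
  have hb₁ : (1 : ℝ) ≤ b := by exact_mod_cast hb
  nlinarith [cfDen_pos hα (n + 1)]

lemma exists_int_cfNum_nat_cfDen (hα : Irrational α) (n : ℕ) :
    ∃ (p : ℤ) (q : ℕ), cfNum α n = p ∧ cfDen α n = q := by
  obtain ⟨p, q, h⟩ := exists_int_contsAux_eq hα (n + 1)
  have hp : cfNum α n = p := congrArg Pair.a h
  have hq : cfDen α n = q := congrArg Pair.b h
  lift q to ℕ using by exact_mod_cast hq ▸ (cfDen_pos hα n).le
  exact ⟨p, q, hp, hq⟩

lemma cfNum_mul_cfDen_succ_sub (hα : Irrational α) (n : ℕ) :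
    cfNum α n * cfDen α (n + 1) - cfDen α n * cfNum α (n + 1) = (-1) ^ (n + 1) :=
  (SimpContFract.of α).determinant (not_terminatedAt_of_irrational hα n)

lemma cfErr_mul_cfDen_succ_sub (hα : Irrational α) (n : ℕ) :
    cfErr α n * cfDen α (n + 1) - cfErr α (n + 1) * cfDen α n = (-1) ^ n := by
  have h := cfNum_mul_cfDen_succ_sub hα n
  simp only [cfErr]
  linear_combination -h

lemma abs_cfErr_mul_cfDen_succ_le (hα : Irrational α) (n : ℕ) :
    |cfErr α n| * cfDen α (n + 1) ≤ 1 := by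
  have hq := cfDen_pos hα n
  have hq₁ := cfDen_pos hα (n + 1)
  have h := abs_sub_convs_le (v := α) (not_terminatedAt_of_irrational hα n)
  rw [conv_eq_num_div_den] at h
  change |α - cfNum α n / cfDen α n| ≤ 1 / (cfDen α n * cfDen α (n + 1)) at h
  rw [le_div_iff₀ (mul_pos hq hq₁)] at h
  have : cfErr α n = cfDen α n * (α - cfNum α n / cfDen α n) := by
    rw [cfErr, mul_sub, mul_div_cancel₀ _ hq.ne']
  rw [this, abs_mul, abs_of_pos hq]
  linarith

lemma cfErr_ne_zero (hα : Irrational α) (n : ℕ) : cfErr α n ≠ 0 := by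
  obtain ⟨p, q, hp, hq⟩ := exists_int_cfNum_nat_cfDen hα n
  have hq₀ : (q : ℝ) ≠ 0 := hq ▸ (cfDen_pos hα n).ne'
  intro h
  refine hα ⟨p / q, ?_⟩
  rw [cfErr, hp, hq, sub_eq_zero] at h
  push_cast
  rw [← h, mul_div_cancel_left₀ _ hq₀]

lemma abs_cfErr_mul_cfDen_succ_sub (hα : Irrational α) (n : ℕ) :
    |cfErr α n * cfDen α (n + 1) - cfErr α (n + 1) * cfDen α n| = 1 := by
  rw [cfErr_mul_cfDen_succ_sub hα n, abs_pow, abs_neg, abs_one, one_pow]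

lemma cfErr_mul_cfErr_succ_neg (hα : Irrational α) (n : ℕ) :
    cfErr α n * cfErr α (n + 1) < 0 := by
  have hq₀ := cfDen_pos hα n
  have hq₁ := cfDen_pos hα (n + 1)
  have ha : |cfErr α n * cfDen α (n + 1)| ≤ 1 := by
    rw [abs_mul, abs_of_pos hq₁]
    exact abs_cfErr_mul_cfDen_succ_le hα n
  have hb : |cfErr α (n + 1) * cfDen α n| < 1 := by
    rw [abs_mul, abs_of_pos hq₀]
    calc |cfErr α (n + 1)| * cfDen α n < |cfErr α (n + 1)| * cfDen α (n + 2) := by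
          gcongr
          · exact abs_pos.2 (cfErr_ne_zero hα _)
          · linarith [cfDen_add_cfDen_le hα n]
      _ ≤ 1 := abs_cfErr_mul_cfDen_succ_le hα (n + 1)
  have h := mul_neg_of_abs_sub_eq_one (abs_cfErr_mul_cfDen_succ_sub hα n) ha
    (mul_ne_zero (cfErr_ne_zero hα _) hq₀.ne') hb
  rw [show cfErr α n * cfDen α (n + 1) * (cfErr α (n + 1) * cfDen α n) =
    cfErr α n * cfErr α (n + 1) * (cfDen α (n + 1) * cfDen α n) by ring] at h
  exact neg_of_mul_neg_left h (by positivity)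

lemma abs_cfErr_mul_add_abs_cfErr_succ_mul (hα : Irrational α) (n : ℕ) :
    |cfErr α n| * cfDen α (n + 1) + |cfErr α (n + 1)| * cfDen α n = 1 := by
  have hq₀ := cfDen_pos hα n
  have hq₁ := cfDen_pos hα (n + 1)
  have hsign : cfErr α n * cfDen α (n + 1) * (cfErr α (n + 1) * cfDen α n) ≤ 0 := by
    have := cfErr_mul_cfErr_succ_neg hα n
    nlinarith [mul_pos hq₀ hq₁]
  have h := abs_cfErr_mul_cfDen_succ_sub hα n
  rwa [abs_sub_eq_abs_add_abs_of_mul_nonpos hsign, abs_mul, abs_mul, abs_of_pos hq₀,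
    abs_of_pos hq₁] at h

lemma one_le_abs_cfErr_mul (hα : Irrational α) (n : ℕ) :
    1 ≤ |cfErr α n| * (cfDen α n + cfDen α (n + 1)) := by
  have hsum := abs_cfErr_mul_add_abs_cfErr_succ_mul hα n
  have h₁ : |cfErr α (n + 1)| * cfDen α (n + 2) ≤ 1 := abs_cfErr_mul_cfDen_succ_le hα (n + 1)
  have hq := cfDen_add_cfDen_le hα n
  have hq₀ := cfDen_pos hα n
  have hq₁ := cfDen_pos hα (n + 1)
  have hY := abs_nonneg (cfErr α (n + 1))
  nlinarith [mul_le_mul_of_nonneg_left hq (mul_nonneg hY hq₀.le),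
    mul_le_mul_of_nonneg_left h₁ hq₀.le]

lemma cfErr_zero_nonneg : 0 ≤ cfErr α 0 := by
  have h : cfNum α 0 = ⌊α⌋ := by
    rw [cfNum, GenContFract.zeroth_num_eq_h, GenContFract.of_h_eq_floor]
  rw [cfErr, cfDen_zero, h, one_mul, sub_nonneg]
  exact Int.floor_le α

lemma exists_lt_cfDen (hα : Irrational α) (K : ℝ) : ∃ n, K < cfDen α n := by
  obtain ⟨N, hN⟩ := exists_nat_gt K
  refine ⟨N, hN.trans_le ?_⟩
  calc (N : ℝ) ≤ Nat.fib (N + 1) := by exact_mod_cast by linarith [Nat.le_fib_add_one (N + 1)]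
    _ ≤ cfDen α N := fib_succ_le_cfDen hα N

lemma exists_cfDen_le_lt (hα : Irrational α) {K : ℝ} (hK : 1 ≤ K) :
    ∃ k, cfDen α k ≤ K ∧ K < cfDen α (k + 1) := by
  classical
  have hex : ∃ k, K < cfDen α (k + 1) := by
    obtain ⟨n, hn⟩ := exists_lt_cfDen hα K
    exact ⟨n, hn.trans_le (cfDen_mono n.le_succ)⟩
  refine ⟨Nat.find hex, ?_, Nat.find_spec hex⟩
  rcases Nat.eq_zero_or_eq_succ_pred (Nat.find hex) with h | h
  · rwa [h, cfDen_zero]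
  · rw [h]
    exact not_lt.1 (Nat.find_min hex (h ▸ Nat.pred_lt_self (by omega)))

lemma isCoprime_cfNum_cfDen (hα : Irrational α) {n : ℕ} {p : ℤ} {q : ℕ}
    (hp : cfNum α (n + 1) = p) (hq : cfDen α (n + 1) = q) : IsCoprime p (q : ℤ) := by
  obtain ⟨p₀, q₀, hp₀, hq₀⟩ := exists_int_cfNum_nat_cfDen hα n
  have h := cfNum_mul_cfDen_succ_sub hα n
  rw [hp, hq, hp₀, hq₀] at h
  have hz : p₀ * (q : ℤ) - q₀ * p = (-1) ^ (n + 1) := by exact_mod_cast h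
  have hs : ((-1 : ℤ) ^ (n + 1)) ^ 2 = 1 := by rw [← pow_mul, mul_comm, pow_mul]; simp
  refine ⟨-(-1) ^ (n + 1) * q₀, (-1) ^ (n + 1) * p₀, ?_⟩
  linear_combination (-1) ^ (n + 1) * hz + hs

lemma cfDen_le_abs_mul_sub_mul (hα : Irrational α) {k j : ℕ} (hj : 0 < j)
    (hjk : (j : ℝ) < cfDen α (k + 1)) (z : ℤ) :
    cfDen α k ≤ |j * α - z| * cfDen α (k + 1) * cfDen α (k + 2) := by
  obtain ⟨p, q, hp, hq⟩ := exists_int_cfNum_nat_cfDen hα (k + 1)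
  have hN : (j : ℤ) * p - z * q ≠ 0 := by
    intro h
    have hdvd : (q : ℤ) ∣ j := (isCoprime_cfNum_cfDen hα hp hq).symm.dvd_of_dvd_mul_right
      ⟨z, by linear_combination h⟩
    have : (q : ℝ) ≤ j := by exact_mod_cast Int.le_of_dvd (by exact_mod_cast hj) hdvd
    linarith
  have hN₁ : (1 : ℝ) ≤ |(j : ℝ) * p - z * q| := by exact_mod_cast Int.one_le_abs hN
  have hid : (j : ℝ) * p - z * q = cfDen α (k + 1) * (j * α - z) - j * cfErr α (k + 1) := by
    rw [cfErr, hp, hq]; ring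
  have htri : 1 ≤ cfDen α (k + 1) * |j * α - z| + j * |cfErr α (k + 1)| := by
    calc 1 ≤ |(j : ℝ) * p - z * q| := hN₁
      _ ≤ |cfDen α (k + 1) * (j * α - z)| + |j * cfErr α (k + 1)| := hid ▸ abs_sub _ _
      _ = _ := by rw [abs_mul, abs_mul, abs_of_pos (cfDen_pos hα _), Nat.abs_cast]
  have hε : |cfErr α (k + 1)| * cfDen α (k + 2) ≤ 1 := abs_cfErr_mul_cfDen_succ_le hα (k + 1)
  have hq₂ := cfDen_add_cfDen_le hα k
  have hq₂₀ := cfDen_pos hα (k + 2)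
  -- multiply `htri` by `q_{k+2}` and use `j < q_{k+1} ≤ q_{k+2} - q_k`
  nlinarith [mul_le_mul_of_nonneg_right htri hq₂₀.le,
    mul_le_mul_of_nonneg_left hε (Nat.cast_nonneg (α := ℝ) j)]

variable {M : ℝ}

lemma one_le_of_boundedType (hα : Irrational α) (hbdd : BoundedType α M) : 1 ≤ M := by
  simpa [cfDen_zero] using (one_le_cfDen hα 1).trans (hbdd 0)

lemma cfDen_le_pow (hα : Irrational α) (hbdd : BoundedType α M) (n : ℕ) :
    cfDen α n ≤ M ^ n := by
  induction n with
  | zero => rw [cfDen_zero, pow_zero]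
  | succ n ih =>
    calc cfDen α (n + 1) ≤ M * cfDen α n := hbdd n
      _ ≤ M * M ^ n := by gcongr; linarith [one_le_of_boundedType hα hbdd]
      _ = M ^ (n + 1) := by ring

lemma fib_succ_le_pow (hα : Irrational α) (hbdd : BoundedType α M) (n : ℕ) :
    (Nat.fib (n + 1) : ℝ) ≤ M ^ n :=
  (fib_succ_le_cfDen hα n).trans (cfDen_le_pow hα hbdd n)

lemma one_le_mul_abs_mul_sub (hα : Irrational α) (hbdd : BoundedType α M) {j : ℕ} (hj : 0 < j)
    (z : ℤ) : 1 ≤ M ^ 3 * j * |j * α - z| := by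
  obtain ⟨k, hkj, hjk⟩ := exists_cfDen_le_lt hα (K := j) (by exact_mod_cast hj)
  have hM₀ : 0 ≤ M := zero_le_one.trans (one_le_of_boundedType hα hbdd)
  have hq₀ := cfDen_pos hα k
  have hq₁ : cfDen α (k + 1) ≤ M * cfDen α k := hbdd k
  have hq₂ : cfDen α (k + 2) ≤ M * (M * cfDen α k) :=
    (hbdd (k + 1)).trans (mul_le_mul_of_nonneg_left hq₁ hM₀)
  set E := |(j : ℝ) * α - z|
  have hE : 1 ≤ M ^ 3 * E * cfDen α k := by
    refine le_of_mul_le_mul_left ?_ hq₀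
    calc cfDen α k * 1 ≤ E * cfDen α (k + 1) * cfDen α (k + 2) :=
          (mul_one _).trans_le (cfDen_le_abs_mul_sub_mul hα hj hjk z)
      _ ≤ E * (M * cfDen α k) * (M * (M * cfDen α k)) := by
          gcongr
          exact (cfDen_pos hα _).le
      _ = cfDen α k * (M ^ 3 * E * cfDen α k) := by ring
  calc 1 ≤ M ^ 3 * E * cfDen α k := hE
    _ ≤ M ^ 3 * E * j := by gcongr
    _ = M ^ 3 * j * E := by ring

end ContinuedFraction

section Descent
variable {α : ℝ}

lemma exists_nat_mul_cfDen_le (hα : Irrational α) (m : ℕ) {a θ : ℝ}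
    (ha : |a| * cfDen α m ≤ 1) (haε : a * cfErr α m ≤ 0) (hθ : θ ∈ Set.Icc (0 : ℝ) 1) :
    ∃ t : ℕ, t * cfDen α m ≤ 2 * cfDen α m + cfDen α (m + 1) ∧
      ∃ θ' ∈ Set.Icc (0 : ℝ) 1, θ * a + t * cfErr α m = θ' * cfErr α m := by
  obtain ⟨t, ht, hθ'⟩ := exists_nat_mul_add_eq_mul (cfErr_ne_zero hα m) haε hθ
  refine ⟨t, ?_, hθ'⟩
  have hε := abs_pos.2 (cfErr_ne_zero hα m)
  have hq := cfDen_pos hα m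
  have hinv : 1 / |cfErr α m| ≤ cfDen α m + cfDen α (m + 1) := by
    rw [div_le_iff₀ hε]; linarith [one_le_abs_cfErr_mul hα m]
  calc t * cfDen α m ≤ (|a| / |cfErr α m| + 1) * cfDen α m := by gcongr
    _ = |a| * cfDen α m / |cfErr α m| + cfDen α m := by ring
    _ ≤ 1 / |cfErr α m| + cfDen α m := by gcongr
    _ ≤ 2 * cfDen α m + cfDen α (m + 1) := by linarith

lemma exists_add_mul_sub_eq_mul_cfErr_of_eq_mul (hα : Irrational α) {y a θ : ℝ} {i : ℕ}
    {k : ℤ} (h : y + i * α - k = θ * a) (m : ℕ) (ha : |a| * cfDen α m ≤ 1)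
    (haε : a * cfErr α m ≤ 0) (hθ : θ ∈ Set.Icc (0 : ℝ) 1) :
    ∃ (i' : ℕ) (k' : ℤ), (i' : ℝ) ≤ i + 2 * cfDen α m + cfDen α (m + 1) ∧
      ∃ θ' ∈ Set.Icc (0 : ℝ) 1, y + i' * α - k' = θ' * cfErr α m := by
  obtain ⟨t, ht, θ', hθ', heq⟩ := exists_nat_mul_cfDen_le hα m ha haε hθ
  obtain ⟨p, q, hp, hq⟩ := exists_int_cfNum_nat_cfDen hα m
  refine ⟨i + t * q, k + t * p, ?_, θ', hθ', ?_⟩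
  · push_cast; rw [← hq]; linarith
  · rw [← heq, ← h, cfErr, hp, hq]; push_cast; ring

/-- Greedy descent: once the offset is `θ ε_m`, adding multiples of `q_{m+1}` to the time moves it
in steps of `ε_{m+1}`, of the opposite sign, until it lies between `0` and `ε_{m+1}`. -/
lemma exists_add_mul_sub_eq_mul_cfErr (hα : Irrational α) (y : ℝ) (m : ℕ) :
    ∃ (i : ℕ) (k : ℤ), (i : ℝ) ≤ 4 * cfDen α (m + 1) + 3 * cfDen α m ∧
      ∃ θ ∈ Set.Icc (0 : ℝ) 1, y + i * α - k = θ * cfErr α m := by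
  induction m with
  | zero =>
    -- start as if from a level `-1` with error `-1`: the offset `y - ⌈y⌉` lies in `(-1, 0]`
    have h : y + (0 : ℕ) * α - ⌈y⌉ = (⌈y⌉ - y) * (-1) := by push_cast; ring
    obtain ⟨i, k, hi, hik⟩ := exists_add_mul_sub_eq_mul_cfErr_of_eq_mul hα h 0
      (by simp [cfDen_zero]) (by linarith [cfErr_zero_nonneg (α := α)])
      ⟨by linarith [Int.le_ceil y], by linarith [Int.ceil_lt_add_one y]⟩
    refine ⟨i, k, ?_, hik⟩
    rw [Nat.cast_zero] at hi
    linarith [cfDen_pos hα 0, cfDen_pos hα 1]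
  | succ m ih =>
    obtain ⟨i, k, hi, θ, hθ, h⟩ := ih
    obtain ⟨i', k', hi', hik'⟩ := exists_add_mul_sub_eq_mul_cfErr_of_eq_mul hα h (m + 1)
      (abs_cfErr_mul_cfDen_succ_le hα m) (cfErr_mul_cfErr_succ_neg hα m).le hθ
    refine ⟨i', k', ?_, hik'⟩
    linarith [cfDen_add_cfDen_le hα m]

end Descent

section ReturnTime
variable {α : ℝ} {S S' : Set ℝ} {x : ℝ}

def minReturnTime (α : ℝ) (S : Set ℝ) : ℕ := sInf {m : ℕ | ∃ x ∈ S, m = returnTime α S x}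

def maxReturnTime (α : ℝ) (S : Set ℝ) : ℕ := sSup {m : ℕ | ∃ x ∈ S, m = returnTime α S x}

lemma returnTime_le {i : ℕ} (hi : 0 < i) (h : InCircle S (x + 2 * π * i * α)) :
    returnTime α S x ≤ i :=
  Nat.sInf_le ⟨hi, h⟩

lemma returnTime_pos_and_inCircle (h : ∃ i : ℕ, 0 < i ∧ InCircle S (x + 2 * π * i * α)) :
    0 < returnTime α S x ∧ InCircle S (x + 2 * π * returnTime α S x * α) :=
  Nat.sInf_mem h

lemma returnTime_anti (hSS' : S ⊆ S') (h : ∃ i : ℕ, 0 < i ∧ InCircle S (x + 2 * π * i * α)) :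
    returnTime α S' x ≤ returnTime α S x := by
  obtain ⟨hpos, k, hk⟩ := returnTime_pos_and_inCircle h
  exact returnTime_le hpos ⟨k, hSS' hk⟩

lemma minReturnTime_le (hx : x ∈ S) : minReturnTime α S ≤ returnTime α S x :=
  Nat.sInf_le ⟨x, hx, rfl⟩

lemma exists_returnTime_eq_minReturnTime (hS : S.Nonempty) :
    ∃ x ∈ S, returnTime α S x = minReturnTime α S := by
  obtain ⟨x, hx⟩ := hS
  obtain ⟨y, hy, h⟩ := Nat.sInf_mem (s := {m | ∃ x ∈ S, m = returnTime α S x}) ⟨_, x, hx, rfl⟩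
  exact ⟨y, hy, h.symm⟩

lemma bddAbove_returnTime {F : ℝ} (hF : ∀ x ∈ S, (returnTime α S x : ℝ) ≤ F) :
    BddAbove {m : ℕ | ∃ x ∈ S, m = returnTime α S x} :=
  ⟨⌊F⌋₊, by rintro _ ⟨x, hx, rfl⟩; exact Nat.le_floor (hF x hx)⟩

lemma returnTime_le_maxReturnTime {F : ℝ} (hF : ∀ x ∈ S, (returnTime α S x : ℝ) ≤ F)
    (hx : x ∈ S) : returnTime α S x ≤ maxReturnTime α S :=
  le_csSup (bddAbove_returnTime hF) ⟨x, hx, rfl⟩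

lemma maxReturnTime_le {F : ℝ} (hF : ∀ x ∈ S, (returnTime α S x : ℝ) ≤ F) (hS : S.Nonempty) :
    (maxReturnTime α S : ℝ) ≤ F := by
  obtain ⟨x, hx⟩ := hS
  obtain ⟨y, hy, h⟩ := Nat.sSup_mem (s := {m | ∃ x ∈ S, m = returnTime α S x}) ⟨_, x, hx, rfl⟩
    (bddAbove_returnTime hF)
  rw [maxReturnTime, h]
  exact hF y hy

end ReturnTime

section CritSet
variable {c r x : ℝ}

lemma self_mem_critSet (hr : 0 ≤ r) : c ∈ critSet c r :=
  Or.inl ⟨by linarith, by linarith⟩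

lemma critSet_mono {ρ : ℝ} (h : ρ ≤ r) : critSet c ρ ⊆ critSet c r :=
  Set.union_subset_union (Set.Icc_subset_Icc (by linarith) (by linarith))
    (Set.Icc_subset_Icc (by linarith) (by linarith))

lemma mem_critSet_of_abs_sub_le (h : |x - c| ≤ r) : x ∈ critSet c r :=
  Or.inl ⟨by linarith [neg_abs_le (x - c)], by linarith [le_abs_self (x - c)]⟩

lemma exists_int_abs_sub_mul_pi_le (h : x ∈ critSet c r) : ∃ a : ℤ, |x - c - a * π| ≤ r := by
  rcases h with ⟨h₁, h₂⟩ | ⟨h₁, h₂⟩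
  · exact ⟨0, abs_le.2 ⟨by push_cast; linarith, by push_cast; linarith⟩⟩
  · exact ⟨1, abs_le.2 ⟨by push_cast; linarith, by push_cast; linarith⟩⟩

end CritSet

section ReturnToCritSet
variable {α : ℝ}

lemma exists_inCircle_critSet (hα : Irrational α) (c x : ℝ) {ρ : ℝ} {m : ℕ}
    (hρ : 2 * π * |cfErr α m| ≤ ρ) :
    ∃ i : ℕ, 0 < i ∧ (i : ℝ) ≤ 4 * cfDen α (m + 1) + 3 * cfDen α m + 1 ∧
      InCircle (critSet c ρ) (x + 2 * π * i * α) := by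
  obtain ⟨i, k, hi, θ, hθ, h⟩ := exists_add_mul_sub_eq_mul_cfErr hα ((x - c) / (2 * π) + α) m
  refine ⟨i + 1, i.succ_pos, by push_cast; linarith, k, mem_critSet_of_abs_sub_le ?_⟩
  have heq : x + 2 * π * ((i + 1 : ℕ) : ℝ) * α - 2 * π * k - c = 2 * π * (θ * cfErr α m) := by
    rw [← h]; field_simp; push_cast; ring
  rw [heq, abs_mul, abs_of_pos two_pi_pos, abs_mul, abs_of_nonneg hθ.1]
  calc 2 * π * (θ * |cfErr α m|) ≤ 2 * π * (1 * |cfErr α m|) := by gcongr; exact hθ.2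
    _ ≤ ρ := by rwa [one_mul]

lemma returnTime_critSet_le (hα : Irrational α) (c x : ℝ) {ρ : ℝ} {m : ℕ}
    (hρ : 2 * π * |cfErr α m| ≤ ρ) :
    (returnTime α (critSet c ρ) x : ℝ) ≤ 4 * cfDen α (m + 1) + 3 * cfDen α m + 1 := by
  obtain ⟨i, hi, hiF, hin⟩ := exists_inCircle_critSet hα c x hρ
  exact (Nat.cast_le.2 (returnTime_le hi hin)).trans hiF

lemma exists_cfDen_le_and_two_pi_mul_abs_cfErr_le (hα : Irrational α) {ρ : ℝ} (hρ : 0 < ρ) :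
    ∃ m, cfDen α m ≤ max 1 (2 * π / ρ) ∧ 2 * π * |cfErr α m| ≤ ρ := by
  obtain ⟨m, hmK, hKm⟩ := exists_cfDen_le_lt hα (le_max_left 1 (2 * π / ρ))
  refine ⟨m, hmK, ?_⟩
  have hε := abs_cfErr_mul_cfDen_succ_le hα m
  have hK : 2 * π / ρ < cfDen α (m + 1) := (le_max_right _ _).trans_lt hKm
  rw [div_lt_iff₀ hρ] at hK
  nlinarith [abs_nonneg (cfErr α m), two_pi_pos]

lemma minReturnTime_le_maxReturnTime (hα : Irrational α) (c : ℝ) {ρ r : ℝ} (hρ : 0 < ρ)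
    (hρr : ρ ≤ r) : minReturnTime α (critSet c r) ≤ maxReturnTime α (critSet c ρ) := by
  obtain ⟨m, -, hm⟩ := exists_cfDen_le_and_two_pi_mul_abs_cfErr_le hα hρ
  obtain ⟨i, hi, -, hin⟩ := exists_inCircle_critSet hα c c hm
  calc minReturnTime α (critSet c r) ≤ returnTime α (critSet c r) c :=
        minReturnTime_le (self_mem_critSet (hρ.le.trans hρr))
    _ ≤ returnTime α (critSet c ρ) c := returnTime_anti (critSet_mono hρr) ⟨i, hi, hin⟩
    _ ≤ maxReturnTime α (critSet c ρ) :=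
        returnTime_le_maxReturnTime (fun x _ ↦ returnTime_critSet_le hα c x hm)
          (self_mem_critSet hρ.le)

lemma maxReturnTime_critSet_le (hα : Irrational α) (c : ℝ) {ρ : ℝ} {m : ℕ}
    (hρ : 2 * π * |cfErr α m| ≤ ρ) :
    (maxReturnTime α (critSet c ρ) : ℝ) ≤ 4 * cfDen α (m + 1) + 3 * cfDen α m + 1 :=
  maxReturnTime_le (fun x _ ↦ returnTime_critSet_le hα c x hρ)
    ⟨c, self_mem_critSet ((mul_nonneg two_pi_pos.le (abs_nonneg _)).trans hρ)⟩

lemma minReturnTime_critSet_pos_and_inCircle (hα : Irrational α) (c : ℝ) {r : ℝ} (hr : 0 < r) :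
    0 < minReturnTime α (critSet c r) ∧ ∃ x ∈ critSet c r,
      InCircle (critSet c r) (x + 2 * π * minReturnTime α (critSet c r) * α) := by
  obtain ⟨x, hx, hxA⟩ := exists_returnTime_eq_minReturnTime (α := α) ⟨c, self_mem_critSet hr.le⟩
  obtain ⟨m, -, hm⟩ := exists_cfDen_le_and_two_pi_mul_abs_cfErr_le hα hr
  obtain ⟨i, hi, -, hin⟩ := exists_inCircle_critSet hα c x hm
  obtain ⟨hpos, hret⟩ := returnTime_pos_and_inCircle ⟨i, hi, hin⟩
  rw [← hxA]
  exact ⟨hpos, x, hx, hret⟩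

lemma maxReturnTime_critSet_le_mul (hα : Irrational α) {M : ℝ} (hbdd : BoundedType α M) (c : ℝ)
    {ρ : ℝ} (hρ : 0 < ρ) : (maxReturnTime α (critSet c ρ) : ℝ) ≤ 8 * M * max 1 (2 * π / ρ) := by
  obtain ⟨m, hmK, hm⟩ := exists_cfDen_le_and_two_pi_mul_abs_cfErr_le hα hρ
  have hM := one_le_of_boundedType hα hbdd
  have hq₁ : cfDen α (m + 1) ≤ M * cfDen α m := hbdd m
  calc (maxReturnTime α (critSet c ρ) : ℝ) ≤ 4 * cfDen α (m + 1) + 3 * cfDen α m + 1 :=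
        maxReturnTime_critSet_le hα c hm
    _ ≤ 8 * M * cfDen α m := by nlinarith [one_le_cfDen hα m]
    _ ≤ 8 * M * max 1 (2 * π / ρ) := by gcongr

lemma pi_le_mul_of_inCircle_critSet (hα : Irrational α) {M : ℝ} (hbdd : BoundedType α M)
    {c r x : ℝ} (hx : x ∈ critSet c r) {i : ℕ} (hi : 0 < i)
    (h : InCircle (critSet c r) (x + 2 * π * i * α)) : π ≤ 4 * M ^ 3 * r * i := by
  obtain ⟨a, ha⟩ := exists_int_abs_sub_mul_pi_le hx
  obtain ⟨k, hk⟩ := h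
  obtain ⟨b, hb⟩ := exists_int_abs_sub_mul_pi_le hk
  set j := 2 * i
  set z : ℤ := 2 * k + b - a
  have hz : |(j : ℝ) * α - z| * π ≤ 2 * r := by
    have heq : ((j : ℝ) * α - z) * π =
        (x + 2 * π * i * α - 2 * π * k - c - b * π) - (x - c - a * π) := by
      simp only [j, z]; push_cast; ring
    rw [← abs_of_pos pi_pos, ← abs_mul, heq]
    exact (abs_sub _ _).trans (by linarith)
  have hM := one_le_of_boundedType hα hbdd
  calc π = 1 * π := (one_mul π).symm
    _ ≤ M ^ 3 * j * |(j : ℝ) * α - z| * π := by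
        gcongr
        exact one_le_mul_abs_mul_sub hα hbdd (by omega) z
    _ ≤ M ^ 3 * j * (2 * r) := by
        rw [mul_assoc _ |_|]; gcongr
    _ = 4 * M ^ 3 * r * i := by simp only [j]; push_cast; ring

lemma pi_le_mul_minReturnTime_critSet (hα : Irrational α) {M : ℝ} (hbdd : BoundedType α M)
    (c : ℝ) {r : ℝ} (hr : 0 < r) : π ≤ 4 * M ^ 3 * r * minReturnTime α (critSet c r) := by
  obtain ⟨hpos, x, hx, hin⟩ := minReturnTime_critSet_pos_and_inCircle hα c hr
  exact pi_le_mul_of_inCircle_critSet hα hbdd hx hpos hin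

end ReturnToCritSet

lemma inv_le_div_and_div_le_one {a b c : ℝ} (ha : 0 < a) (hab : a ≤ b) (hbc : b ≤ c * a) :
    c⁻¹ ≤ a / b ∧ a / b ≤ 1 := by
  have hb : 0 < b := ha.trans_le hab
  have hc : 0 < c := pos_of_mul_pos_left (hb.trans_le hbc) ha.le
  refine ⟨?_, (div_le_one hb).2 hab⟩
  rw [inv_eq_one_div, div_le_div_iff₀ hc hb]
  linarith

theorem return_time_comparison_general (α M β c₁ : ℝ) (hα : Irrational α)
    (hbdd : BoundedType α M) (n : ℕ) :
    (M ^ (20 : ℕ))⁻¹ ≤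
        ((sInf {m : ℕ | ∃ x ∈ critSet c₁ (cfDen α n ^ (-β)),
            m = returnTime α (critSet c₁ (cfDen α n ^ (-β))) x} : ℕ) : ℝ) /
          ((sSup {m : ℕ | ∃ x ∈ critSet c₁ (cfDen α n ^ (-β) / 10),
            m = returnTime α (critSet c₁ (cfDen α n ^ (-β) / 10)) x} : ℕ) : ℝ) ∧
      ((sInf {m : ℕ | ∃ x ∈ critSet c₁ (cfDen α n ^ (-β)),
            m = returnTime α (critSet c₁ (cfDen α n ^ (-β))) x} : ℕ) : ℝ) /
          ((sSup {m : ℕ | ∃ x ∈ critSet c₁ (cfDen α n ^ (-β) / 10),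
            m = returnTime α (critSet c₁ (cfDen α n ^ (-β) / 10)) x} : ℕ) : ℝ) ≤ 1 := by
  set r := cfDen α n ^ (-β)
  change (M ^ 20)⁻¹ ≤ (minReturnTime α (critSet c₁ r) : ℝ) / maxReturnTime α (critSet c₁ (r / 10))
    ∧ (minReturnTime α (critSet c₁ r) : ℝ) / maxReturnTime α (critSet c₁ (r / 10)) ≤ 1
  set A := minReturnTime α (critSet c₁ r)
  set B := maxReturnTime α (critSet c₁ (r / 10))
  have hr : 0 < r := rpow_pos_of_pos (cfDen_pos hα n) _
  have hM := one_le_of_boundedType hα hbdd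
  have hA₁ : (1 : ℝ) ≤ A := by exact_mod_cast (minReturnTime_critSet_pos_and_inCircle hα c₁ hr).1
  have hπA := pi_le_mul_minReturnTime_critSet hα hbdd c₁ hr
  have hK : max 1 (2 * π / (r / 10)) ≤ 80 * M ^ 3 * A := by
    refine max_le ?_ ?_
    · nlinarith [one_le_pow₀ (n := 3) hM]
    · rw [div_le_iff₀ (by positivity)]
      linarith
  have hM15 := fib_succ_le_pow hα hbdd 15
  norm_num [Nat.fib] at hM15
  refine inv_le_div_and_div_le_one (by linarith)
    (Nat.cast_le.2 (minReturnTime_le_maxReturnTime hα c₁ (by positivity) (by linarith))) ?_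
  calc (B : ℝ) ≤ 8 * M * (80 * M ^ 3 * A) :=
        (maxReturnTime_critSet_le_mul hα hbdd c₁ (by positivity)).trans (by gcongr)
    _ = 640 * M ^ 4 * A := by ring
    _ ≤ M ^ 15 * M * M ^ 4 * A := by gcongr; nlinarith
    _ = M ^ 20 * A := by ring

/-- **Comparison of return times** (Lemma 3.5; Corollary 4.1 of Wang–You).
Let `α` be of bounded type with constant `M`, `β > 1`, and let `I_n` (resp. `(1/10)I_n`)
be the two intervals of radius `q_n^{−β}` (resp. `1/(10 q_n^β)`) around `c₁, c₁ + π`.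
With `min rₙ = min_{x ∈ Iₙ} min{i > 0 : T^i x ∈ Iₙ}` and
`max rₙ = max_{x ∈ (1/10)Iₙ} min{i > 0 : T^i x ∈ (1/10)Iₙ}`, one has
`M^{−20} ≤ (min rₙ)/(max rₙ) ≤ 1`. -/
theorem return_time_comparison (α M β c₁ : ℝ) (hα : Irrational α) (hM : 1 ≤ M)
    (hbdd : BoundedType α M) (hβ : 1 < β) (hc₁ : c₁ ∈ Set.Ico (0 : ℝ) π) (n : ℕ) :
    (M ^ (20 : ℕ))⁻¹ ≤
        ((sInf {m : ℕ | ∃ x ∈ critSet c₁ (cfDen α n ^ (-β)),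
            m = returnTime α (critSet c₁ (cfDen α n ^ (-β))) x} : ℕ) : ℝ) /
          ((sSup {m : ℕ | ∃ x ∈ critSet c₁ (cfDen α n ^ (-β) / 10),
            m = returnTime α (critSet c₁ (cfDen α n ^ (-β) / 10)) x} : ℕ) : ℝ) ∧
      ((sInf {m : ℕ | ∃ x ∈ critSet c₁ (cfDen α n ^ (-β)),
            m = returnTime α (critSet c₁ (cfDen α n ^ (-β))) x} : ℕ) : ℝ) /
          ((sSup {m : ℕ | ∃ x ∈ critSet c₁ (cfDen α n ^ (-β) / 10),
            m = returnTime α (critSet c₁ (cfDen α n ^ (-β) / 10)) x} : ℕ) : ℝ) ≤ 1 :=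
  return_time_comparison_general α M β c₁ hα hbdd n

end
end
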